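/- arXiv:2604.01408 — 12 statements merged into one kernel-verified Lean document; each statement's English description precedes it below -/
import Mathlib

section
/- Let A be a unital C*-algebra, n ≥ 3 and k ≥ 1 integers, and p a family as in the context (a representation of Mor⁺(K_nᵏ, K_n)). If 𝐱₁, …, 𝐱ₙ : Fin k → Fin n satisfy 𝐱ᵢ(j) ≠ 𝐱ᵢ'(j) for all i ≠ i' and all j ∈ Fin k, then for every a ∈ Fin n one has p(𝐱₁, a) + p(𝐱₂, a) + ⋯ + p(𝐱ₙ, a) = 1. -/
/-!
For each colour `b`, the elements `Q b = ∑ i, p (X i) b` are projections, since the summands are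
pairwise orthogonal projections. Summing the relations `∑ b, p x b = 1` over the `n` points
`X i` gives `∑ b, Q b = n`, i.e. `∑ b, (1 - Q b) = 0`. Each `1 - Q b` is a projection, hence
positive, and a vanishing sum of positive elements has vanishing terms, so every `Q b = 1`.
-/

open Finset

namespace IsStarProjection

theorem sum {R ι : Type*} [NonUnitalNonAssocSemiring R] [StarRing R] {q : ι → R}
    (s : Finset ι) (hq : ∀ i ∈ s, IsStarProjection (q i))
    (horth : ∀ i ∈ s, ∀ j ∈ s, i ≠ j → q i * q j = 0) :
    IsStarProjection (∑ i ∈ s, q i) := by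
  classical
  induction s using Finset.induction_on with
  | empty => rw [sum_empty]; exact .zero R
  | insert i s hi ih =>
    rw [sum_insert hi]
    refine (hq i (mem_insert_self i s)).add
      (ih (fun j hj => hq j (mem_insert_of_mem hj))
        (fun j hj l hl => horth j (mem_insert_of_mem hj) l (mem_insert_of_mem hl))) ?_
    rw [mul_sum]
    exact sum_eq_zero fun j hj =>
      horth i (mem_insert_self i s) j (mem_insert_of_mem hj) (ne_of_mem_of_not_mem hj hi).symm

theorem eq_one_of_sum_eq_card {R ι : Type*} [Fintype ι] [Ring R] [PartialOrder R] [StarRing R]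
    [StarOrderedRing R] {q : ι → R} (hq : ∀ i, IsStarProjection (q i))
    (hsum : ∑ i, q i = Fintype.card ι) (i : ι) : q i = 1 := by
  have hsum_one_sub : ∑ j, (1 - q j) = 0 := by
    rw [sum_sub_distrib, hsum, sum_const, card_univ, nsmul_one, sub_self]
  have := (sum_eq_zero_iff_of_nonneg fun j _ => (hq j).one_sub_nonneg).mp hsum_one_sub i
    (mem_univ i)
  exact (sub_eq_zero.mp this).symm

end IsStarProjection

theorem stmt0_general {A : Type*} [CStarAlgebra A]
    (n k : ℕ)
    (p : (Fin k → Fin n) → Fin n → A)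
    (hidem : ∀ x a, p x a * p x a = p x a)
    (hsa : ∀ x a, star (p x a) = p x a)
    (hsum : ∀ x, ∑ a, p x a = 1)
    (horth : ∀ x y a, (∀ i, x i ≠ y i) → p x a * p y a = 0)
    (X : Fin n → (Fin k → Fin n))
    (hX : ∀ i i', i ≠ i' → ∀ j, X i j ≠ X i' j)
    (a : Fin n) :
    ∑ i, p (X i) a = 1 := by
  let _ := CStarAlgebra.spectralOrder A
  have _ := CStarAlgebra.spectralOrderedRing A
  have hproj : ∀ x b, IsStarProjection (p x b) := fun x b => ⟨hidem x b, hsa x b⟩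
  have hQ : ∀ b, IsStarProjection (∑ i, p (X i) b) := fun b =>
    IsStarProjection.sum _ (fun i _ => hproj (X i) b)
      (fun i _ i' _ hne => horth (X i) (X i') b (hX i i' hne))
  have hQsum : ∑ b, ∑ i, p (X i) b = Fintype.card (Fin n) := by
    simp only [sum_comm (γ := Fin n), hsum, sum_const, card_univ, nsmul_one]
  exact IsStarProjection.eq_one_of_sum_eq_card hQ hQsum a

/-- **Lemma (sn-diagonals).** Let `A` be a unital C*-algebra, `n ≥ 3`, `k ≥ 1`, and
`p` a representation of `Mor⁺(K_nᵏ, K_n)`: each `p x a` is a projection, for each `x` the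
family `(p x a)_a` sums to `1`, and `p x a * p y a = 0` whenever `x i ≠ y i` for all `i`.
If `X 1, …, X n : Fin k → Fin n` pairwise differ in every coordinate, then
`p (X 1) a + ⋯ + p (X n) a = 1` for every `a`. -/
theorem stmt0 {A : Type*} [CStarAlgebra A]
    (n k : ℕ) (hn : 3 ≤ n) (hk : 1 ≤ k)
    (p : (Fin k → Fin n) → Fin n → A)
    (hidem : ∀ x a, p x a * p x a = p x a)
    (hsa : ∀ x a, star (p x a) = p x a)
    (hsum : ∀ x, ∑ a, p x a = 1)
    (horth : ∀ x y a, (∀ i, x i ≠ y i) → p x a * p y a = 0)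
    (X : Fin n → (Fin k → Fin n))
    (hX : ∀ i i', i ≠ i' → ∀ j, X i j ≠ X i' j)
    (a : Fin n) :
    ∑ i, p (X i) a = 1 :=
  stmt0_general n k p hidem hsa hsum horth X hX a
end

section
/- Let A be a unital C*-algebra, n ≥ 3 and k ≥ 1 integers, and p a family as in the context (a representation of Mor⁺(K_nᵏ, K_n)). Let 𝐱, 𝐱' : Fin k → Fin n satisfy 𝐱(i) ≠ 𝐱'(i) for all i. Fix S ⊆ Fin k and define 𝐲, 𝐲' : Fin k → Fin n by 𝐲(i) = 𝐱(i) and 𝐲'(i) = 𝐱'(i) for i ∈ S, and 𝐲(i) = 𝐱'(i) and 𝐲'(i) = 𝐱(i) for i ∉ S. Then for all a ∈ Fin n, p(𝐱, a) + p(𝐱', a) = p(𝐲, a) + p(𝐲', a). -/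
/-!
Extend `x, x'` to an `n`-clique `v` of `K_nᵏ` (a family whose coordinate maps `m ↦ v m i` are
all bijections) and let `w` be `v` with the indices of `x` and `x'` exchanged in the coordinates
outside `S`; `w` is again a clique, containing `y, y'` where `v` contains `x, x'`. For a clique,
`∑ m, p (v m) a` is a sum of pairwise orthogonal projections, hence a projection, hence `≤ 1`;
as these sum to `n • 1` over `a`, each equals `1`. The two sums for `v` and `w` agree term by
term away from the two exchanged indices, which gives the identity.
-/

open Finset

/-- `p` is a representation of `Mor⁺(K_αᶥ, K_α)`; `∀ i, x i ≠ y i` is adjacency in the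
categorical power `K_αᶥ`. -/
structure IsMorPlusRep {ι α A : Type*} [Fintype α] [Ring A] [StarRing A]
    (p : (ι → α) → α → A) : Prop where
  isStarProjection : ∀ x a, IsStarProjection (p x a)
  sum_eq_one : ∀ x, ∑ a, p x a = 1
  mul_eq_zero : ∀ x y a, (∀ i, x i ≠ y i) → p x a * p y a = 0

theorem isStarProjection_sum {R ι : Type*} [NonUnitalSemiring R] [StarRing R]
    {s : Finset ι} {f : ι → R} (hf : ∀ i ∈ s, IsStarProjection (f i))
    (horth : (s : Set ι).Pairwise fun i j => f i * f j = 0) :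
    IsStarProjection (∑ i ∈ s, f i) := by
  classical
  induction s using Finset.induction_on with
  | empty => simp
  | insert j s hj ih =>
    rw [sum_insert hj]
    refine (hf j (mem_insert_self j s)).add
      (ih (fun i hi => hf i (mem_insert_of_mem hi)) (horth.mono (by simp))) ?_
    rw [mul_sum]
    refine sum_eq_zero fun i hi => horth (by simp) (by simp [hi]) ?_
    rintro rfl
    exact hj hi

theorem Equiv.Perm.exists_apply_eq_and_apply_eq {α : Type*} {c c' d d' : α}
    (hc : c ≠ c') (hd : d ≠ d') : ∃ σ : Equiv.Perm α, σ c = d ∧ σ c' = d' := by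
  obtain ⟨σ, hσ⟩ := Equiv.Perm.exists_extending_pair ![c, c'] ![d, d']
    (by simp [Function.Injective, Fin.forall_fin_two, hc, hc.symm])
    (by simp [Function.Injective, Fin.forall_fin_two, hd, hd.symm])
  exact ⟨σ, hσ 0, hσ 1⟩

namespace IsMorPlusRep

variable {ι α A : Type*} [Fintype α] [Ring A] [StarRing A] [PartialOrder A] [StarOrderedRing A]
  {p : (ι → α) → α → A}

theorem sum_clique_eq_one (hp : IsMorPlusRep p) (v : α → ι → α)
    (hv : ∀ i, Function.Injective fun m => v m i) (a : α) : ∑ m, p (v m) a = 1 := by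
  have hproj (b : α) : IsStarProjection (∑ m, p (v m) b) :=
    isStarProjection_sum (fun m _ => hp.isStarProjection _ _)
      fun m _ m' _ hmm' => hp.mul_eq_zero _ _ _ fun i => (hv i).ne hmm'
  have htotal : ∑ b, ∑ m, p (v m) b = ∑ _b : α, (1 : A) := by
    rw [sum_comm]
    exact sum_congr rfl fun m _ => hp.sum_eq_one (v m)
  exact (sum_eq_sum_iff_of_le fun b _ => (hproj b).le_one).mp htotal a (mem_univ a)

theorem add_eq_add_swap [DecidableEq ι] [DecidableEq α] (hp : IsMorPlusRep p)
    {x x' : ι → α} (hxx' : ∀ i, x i ≠ x' i) (S : Finset ι) (a : α) :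
    p x a + p x' a
      = p (fun i => if i ∈ S then x i else x' i) a
        + p (fun i => if i ∈ S then x' i else x i) a := by
  rcases isEmpty_or_nonempty ι with hι | ⟨⟨i₀⟩⟩
  · simp only [Subsingleton.elim x' x, ite_self]
  choose τ hτ using fun i => Equiv.Perm.exists_apply_eq_and_apply_eq (hxx' i₀) (hxx' i)
  set c := x i₀
  set c' := x' i₀
  let v : α → ι → α := fun m i => τ i m
  let w : α → ι → α := fun m i => τ i (if i ∈ S then m else Equiv.swap c c' m)
  have hw : ∀ i, Function.Injective fun m => w m i := fun i => by
    by_cases hi : i ∈ S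
    · simpa [w, hi] using (τ i).injective
    · simp only [w, hi, if_false]
      exact (τ i).injective.comp (Equiv.swap c c').injective
  have hsum : ∑ m, (p (v m) a - p (w m) a) = 0 := by
    rw [sum_sub_distrib, hp.sum_clique_eq_one v (fun i => (τ i).injective),
      hp.sum_clique_eq_one w hw, sub_self]
  rw [Fintype.sum_eq_add c c' (hxx' i₀) fun m hm => by
    simp [v, w, Equiv.swap_apply_of_ne_of_ne hm.1 hm.2]] at hsum
  have hv : v c = x ∧ v c' = x' := ⟨funext fun i => (hτ i).1, funext fun i => (hτ i).2⟩
  have hw : w c = (fun i => if i ∈ S then x i else x' i) ∧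
      w c' = (fun i => if i ∈ S then x' i else x i) := by
    constructor <;> funext i <;> by_cases hi : i ∈ S <;> simp [w, hi, hτ]
  rw [hv.1, hv.2, hw.1, hw.2] at hsum
  rw [← sub_eq_zero, ← hsum]
  abel

end IsMorPlusRep

theorem stmt1_general {A : Type*} [CStarAlgebra A]
    (n k : ℕ)
    (p : (Fin k → Fin n) → Fin n → A)
    (hidem : ∀ x a, p x a * p x a = p x a)
    (hsa : ∀ x a, star (p x a) = p x a)
    (hsum : ∀ x, ∑ a, p x a = 1)
    (horth : ∀ x y a, (∀ i, x i ≠ y i) → p x a * p y a = 0)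
    (x x' : Fin k → Fin n) (hxx' : ∀ i, x i ≠ x' i)
    (S : Finset (Fin k)) (a : Fin n) :
    p x a + p x' a
      = p (fun i => if i ∈ S then x i else x' i) a
        + p (fun i => if i ∈ S then x' i else x i) a := by
  let := CStarAlgebra.spectralOrder A
  have := CStarAlgebra.spectralOrderedRing A
  exact IsMorPlusRep.add_eq_add_swap ⟨fun x a => ⟨hidem x a, hsa x a⟩, hsum, horth⟩ hxx' S a

/-- **Lemma (the-swapperrr).** Let `A` be a unital C*-algebra, `n ≥ 3`, `k ≥ 1`, and
`p` a representation of `Mor⁺(K_nᵏ, K_n)`. Let `x, x'` differ in every coordinate, let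
`S ⊆ Fin k`, and let `y, y'` be obtained from `x, x'` by swapping the coordinates outside
`S`. Then `p x a + p x' a = p y a + p y' a` for every `a`. -/
theorem stmt1 {A : Type*} [CStarAlgebra A]
    (n k : ℕ) (hn : 3 ≤ n) (hk : 1 ≤ k)
    (p : (Fin k → Fin n) → Fin n → A)
    (hidem : ∀ x a, p x a * p x a = p x a)
    (hsa : ∀ x a, star (p x a) = p x a)
    (hsum : ∀ x, ∑ a, p x a = 1)
    (horth : ∀ x y a, (∀ i, x i ≠ y i) → p x a * p y a = 0)
    (x x' : Fin k → Fin n) (hxx' : ∀ i, x i ≠ x' i)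
    (S : Finset (Fin k)) (a : Fin n) :
    p x a + p x' a
      = p (fun i => if i ∈ S then x i else x' i) a
        + p (fun i => if i ∈ S then x' i else x i) a :=
  stmt1_general n k p hidem hsa hsum horth x x' hxx' S a
end

section
/- Let A be a unital C*-algebra, n ≥ 3 and k ≥ 1 integers, and p a family as in the context (a representation of Mor⁺(K_nᵏ, K_n)). Then for all 𝐱, 𝐲 : Fin k → Fin n and all a ∈ Fin n, the elements p(𝐱, a) and p(𝐲, a) commute: p(𝐱, a) · p(𝐲, a) = p(𝐲, a) · p(𝐱, a). -/
private lemma lotsa_idem_sa {A : Type*} [CStarAlgebra A] {e : A} (he : e * e = e)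
    (hnorm : ‖e‖ ≤ 1) : star e = e := by
  letI := CStarAlgebra.spectralOrder A
  letI := CStarAlgebra.spectralOrderedRing A
  set a := star e * e with ha_def
  have ha_nonneg : (0 : A) ≤ a := star_mul_self_nonneg e
  have hae : a * e = a := by rw [ha_def, mul_assoc, he]
  have hstar_a : star a = a := by simp [ha_def, star_mul, mul_assoc]
  have hea : star e * a = a := by
    have h := congrArg star hae
    rwa [star_mul, hstar_a] at h
  have hd : star (e - a) * (e - a) = a * a - a := by
    rw [star_sub, hstar_a, sub_mul, mul_sub, mul_sub, hea, hae, ← ha_def]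
    abel
  have hnorm_a : ‖a‖ ≤ 1 := by
    have h := CStarRing.norm_star_mul_self (x := e)
    rw [← ha_def] at h
    nlinarith [norm_nonneg e]
  have ha_le_one : a ≤ 1 :=
    (CStarAlgebra.norm_le_one_iff_of_nonneg a ha_nonneg).mp hnorm_a
  have hsq : a * a ≤ a := by
    obtain ⟨s, hsnn, hss⟩ : ∃ s : A, 0 ≤ s ∧ s * s = a :=
      ⟨CFC.sqrt a, CFC.sqrt_nonneg a, CFC.sqrt_mul_sqrt_self a ha_nonneg⟩
    have hs : star s = s := (IsSelfAdjoint.of_nonneg hsnn).star_eq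
    have hconj := star_left_conjugate_le_conjugate ha_le_one s
    rw [hs, mul_one, hss] at hconj
    have h2 : s * a * s = a * a := by
      rw [← hss]
      simp only [mul_assoc]
    rwa [h2] at hconj
  have hzero : star (e - a) * (e - a) = 0 := by
    rw [hd]
    have h1 : (0 : A) ≤ a * a - a := hd ▸ star_mul_self_nonneg (e - a)
    have h2 : a * a - a ≤ 0 := by rwa [sub_nonpos]
    exact le_antisymm h2 h1
  have hea2 : e - a = 0 := by
    rwa [CStarRing.star_mul_self_eq_zero_iff] at hzero
  have heq : e = a := by rwa [sub_eq_zero] at hea2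
  rw [heq, hstar_a]

private lemma lotsa_final {A : Type*} [CStarAlgebra A] {a b : A}
    (ha : a * a = a) (hsa' : star a = a) (hb : b * b = b) (hsb : star b = b)
    (hkey : a * b = (a * b) * (a * b)) : a * b = b * a := by
  have hna : ‖a‖ ≤ 1 := by
    have h := CStarRing.norm_star_mul_self (x := a)
    rw [hsa', ha] at h
    nlinarith [norm_nonneg a]
  have hnb : ‖b‖ ≤ 1 := by
    have h := CStarRing.norm_star_mul_self (x := b)
    rw [hsb, hb] at h
    nlinarith [norm_nonneg b]
  have hn : ‖a * b‖ ≤ 1 :=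
    (norm_mul_le a b).trans (by nlinarith [norm_nonneg a, norm_nonneg b])
  have hsab := lotsa_idem_sa hkey.symm hn
  rw [star_mul, hsa', hsb] at hsab
  exact hsab.symm

private lemma lotsa_exists_third {n : ℕ} (hn : 3 ≤ n) (a b : Fin n) :
    ∃ c : Fin n, c ≠ a ∧ c ≠ b := by
  by_contra h
  push_neg at h
  have hsub : (Finset.univ : Finset (Fin n)) ⊆ {a, b} := by
    intro c _
    simp only [Finset.mem_insert, Finset.mem_singleton]
    rcases eq_or_ne c a with h' | h'
    · exact Or.inl h'
    · exact Or.inr (h c h')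
  have h1 := Finset.card_le_card hsub
  have h2 : ({a, b} : Finset (Fin n)).card ≤ 2 :=
    (Finset.card_insert_le a {b}).trans (by simp)
  rw [Finset.card_univ, Fintype.card_fin] at h1
  omega

private lemma lotsa_exists_perm {n : ℕ} (t0 t1 t2 a b c : Fin n)
    (ht01 : t0 ≠ t1) (ht02 : t0 ≠ t2) (ht12 : t1 ≠ t2)
    (hab : a ≠ b) (hac : a ≠ c) (hbc : b ≠ c) :
    ∃ e : Equiv.Perm (Fin n), e t0 = a ∧ e t1 = b ∧ e t2 = c := by
  set e1 := Equiv.swap t0 a with he1def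
  have he1 : e1 t0 = a := Equiv.swap_apply_left t0 a
  set b1 := e1.symm b with hb1def
  have hb1 : e1 b1 = b := Equiv.apply_symm_apply e1 b
  have hb1ne : t0 ≠ b1 := by
    intro h
    have h' := congrArg e1 h
    rw [he1, hb1] at h'
    exact hab h'
  set e2 := (Equiv.swap t1 b1).trans e1 with he2def
  have he2_0 : e2 t0 = a := by
    show e1 (Equiv.swap t1 b1 t0) = a
    rw [Equiv.swap_apply_of_ne_of_ne ht01 hb1ne, he1]
  have he2_1 : e2 t1 = b := by
    show e1 (Equiv.swap t1 b1 t1) = b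
    rw [Equiv.swap_apply_left]
    exact hb1
  set c2 := e2.symm c with hc2def
  have hc2 : e2 c2 = c := Equiv.apply_symm_apply e2 c
  have hc2ne0 : t0 ≠ c2 := by
    intro h
    have h' := congrArg e2 h
    rw [he2_0, hc2] at h'
    exact hac h'
  have hc2ne1 : t1 ≠ c2 := by
    intro h
    have h' := congrArg e2 h
    rw [he2_1, hc2] at h'
    exact hbc h'
  refine ⟨(Equiv.swap t2 c2).trans e2, ?_, ?_, ?_⟩
  · show e2 (Equiv.swap t2 c2 t0) = a
    rw [Equiv.swap_apply_of_ne_of_ne ht02 hc2ne0, he2_0]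
  · show e2 (Equiv.swap t2 c2 t1) = b
    rw [Equiv.swap_apply_of_ne_of_ne ht12 hc2ne1, he2_1]
  · show e2 (Equiv.swap t2 c2 t2) = c
    rw [Equiv.swap_apply_left]
    exact hc2

section Rep

variable {A : Type*} [CStarAlgebra A] {n k : ℕ}
  (p : (Fin k → Fin n) → Fin n → A)
  (hidem : ∀ x a, p x a * p x a = p x a)
  (hsa : ∀ x a, star (p x a) = p x a)
  (hsum : ∀ x, ∑ a, p x a = 1)
  (horth : ∀ x y a, (∀ i, x i ≠ y i) → p x a * p y a = 0)

include hidem hsa hsum horth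

private lemma lotsa_clique_sum
    (z : Fin n → Fin k → Fin n) (hz : ∀ s t : Fin n, s ≠ t → ∀ i, z s i ≠ z t i)
    (a : Fin n) : ∑ t, p (z t) a = 1 := by
  letI := CStarAlgebra.spectralOrder A
  letI := CStarAlgebra.spectralOrderedRing A
  have hidemS : ∀ b : Fin n,
      (∑ t, p (z t) b) * (∑ t, p (z t) b) = ∑ t, p (z t) b := by
    intro b
    rw [Finset.sum_mul_sum]
    refine Finset.sum_congr rfl fun s _ => ?_
    refine (Finset.sum_eq_single s (fun t _ hts => horth _ _ _ (hz s t (Ne.symm hts)))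
      (fun hs => absurd (Finset.mem_univ s) hs)).trans (hidem _ _)
  have hsaS : ∀ b, star (∑ t, p (z t) b) = ∑ t, p (z t) b := by
    intro b
    rw [star_sum]
    exact Finset.sum_congr rfl fun t _ => hsa _ _
  have hpos : ∀ b : Fin n, (0 : A) ≤ 1 - ∑ t, p (z t) b := by
    intro b
    have h1 : star (1 - ∑ t, p (z t) b) * (1 - ∑ t, p (z t) b)
        = 1 - ∑ t, p (z t) b := by
      rw [star_sub, star_one, hsaS, sub_mul, one_mul, mul_sub, mul_one, hidemS]
      abel
    rw [← h1]
    exact star_mul_self_nonneg _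
  have htot : ∑ b : Fin n, (1 - ∑ t, p (z t) b) = (0 : A) := by
    rw [Finset.sum_sub_distrib, Finset.sum_comm]
    simp only [hsum]
    simp
  have hzero := (Finset.sum_eq_zero_iff_of_nonneg (fun b _ => hpos b)).mp htot a
    (Finset.mem_univ a)
  exact (sub_eq_zero.mp hzero).symm

private lemma lotsa_middle
    (x y u : Fin k → Fin n) (t0 : Fin n) (z : Fin n → Fin k → Fin n)
    (hz : ∀ s t : Fin n, s ≠ t → ∀ i, z s i ≠ z t i)
    (hz0 : z t0 = u)
    (hmid : ∀ t, t ≠ t0 → (∀ i, z t i ≠ x i) ∨ (∀ i, z t i ≠ y i))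
    (a : Fin n) :
    p x a * p y a = p x a * (p u a * p y a) := by
  have hs := lotsa_clique_sum p hidem hsa hsum horth z hz a
  have expand : p x a * p y a = ∑ t, p x a * (p (z t) a * p y a) := by
    conv_lhs => rw [← one_mul (p y a), ← hs, Finset.sum_mul, Finset.mul_sum]
  rw [expand]
  refine (Finset.sum_eq_single t0 ?_ ?_).trans (by rw [hz0])
  · intro t _ htt
    rcases hmid t htt with h | h
    · rw [← mul_assoc, horth x (z t) a (fun i => Ne.symm (h i)), zero_mul]
    · rw [horth (z t) y a h, mul_zero]
  · intro h
    exact absurd (Finset.mem_univ t0) h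

private lemma lotsa_triple (hn : 3 ≤ n)
    (α β γ : Fin k → Fin n)
    (htri : ∀ i, (γ i = α i ∧ γ i = β i) ∨ (γ i ≠ α i ∧ γ i ≠ β i ∧ α i ≠ β i))
    (a : Fin n) :
    p α a * p β a = p α a * (p γ a * p β a) := by
  obtain ⟨F0, F1, F2, h01, h02, h12⟩ : ∃ a b c : Fin n, a ≠ b ∧ a ≠ c ∧ b ≠ c := by
    refine ⟨⟨0, by omega⟩, ⟨1, by omega⟩, ⟨2, by omega⟩, ?_, ?_, ?_⟩ <;>
      simp [Fin.ext_iff]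
  have hex : ∀ i, ∃ e : Equiv.Perm (Fin n),
      e F0 = γ i ∧ (α i = e F0 ∨ α i = e F1) ∧ (β i = e F0 ∨ β i = e F2) := by
    intro i
    rcases htri i with ⟨h1, h2⟩ | ⟨h1, h2, h3⟩
    · refine ⟨Equiv.swap F0 (γ i), Equiv.swap_apply_left _ _, Or.inl ?_, Or.inl ?_⟩
      · rw [Equiv.swap_apply_left]; exact h1.symm
      · rw [Equiv.swap_apply_left]; exact h2.symm
    · obtain ⟨e, h0, hA, hB⟩ :=
        lotsa_exists_perm F0 F1 F2 (γ i) (α i) (β i) h01 h02 h12 h1 h2 h3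
      exact ⟨e, h0, Or.inr hA.symm, Or.inr hB.symm⟩
  choose e he0 heα heβ using hex
  refine lotsa_middle p hidem hsa hsum horth α β γ F0 (fun t i => e i t) ?_ ?_ ?_ a
  · intro s t hst i h
    exact hst ((e i).injective h)
  · funext i
    exact he0 i
  · intro t ht
    by_cases ht1 : t = F1
    · subst ht1
      right
      intro i h
      rcases heβ i with hb | hb
      · exact h01 (((e i).injective (h.trans hb)).symm)
      · exact h12 ((e i).injective (h.trans hb))
    · left
      intro i h
      rcases heα i with ha' | ha'
      · exact ht ((e i).injective (h.trans ha'))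
      · exact ht1 ((e i).injective (h.trans ha'))

end Rep

/-- **Lemma (lotsa-commutation).** Let `A` be a unital C*-algebra, `n ≥ 3`, `k ≥ 1`, and
`p` a representation of `Mor⁺(K_nᵏ, K_n)`. Then `p x a` and `p y a` commute for all
`x, y : Fin k → Fin n` and all `a : Fin n`. -/
theorem stmt2 {A : Type*} [CStarAlgebra A]
    (n k : ℕ) (hn : 3 ≤ n) (hk : 1 ≤ k)
    (p : (Fin k → Fin n) → Fin n → A)
    (hidem : ∀ x a, p x a * p x a = p x a)
    (hsa : ∀ x a, star (p x a) = p x a)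
    (hsum : ∀ x, ∑ a, p x a = 1)
    (horth : ∀ x y a, (∀ i, x i ≠ y i) → p x a * p y a = 0)
    (x y : Fin k → Fin n) (a : Fin n) :
    p x a * p y a = p y a * p x a := by
  have hthird : ∀ i, ∃ c : Fin n,
      (x i = y i → c = x i) ∧ (x i ≠ y i → c ≠ x i ∧ c ≠ y i) := by
    intro i
    by_cases h : x i = y i
    · exact ⟨x i, fun _ => rfl, fun h' => absurd h h'⟩
    · obtain ⟨c, hc1, hc2⟩ := lotsa_exists_third hn (x i) (y i)
      exact ⟨c, fun h' => absurd h' h, fun _ => ⟨hc1, hc2⟩⟩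
  choose u hu1 hu2 using hthird
  have htri1 : ∀ i, (u i = x i ∧ u i = y i) ∨ (u i ≠ x i ∧ u i ≠ y i ∧ x i ≠ y i) := by
    intro i
    by_cases h : x i = y i
    · exact Or.inl ⟨hu1 i h, (hu1 i h).trans h⟩
    · exact Or.inr ⟨(hu2 i h).1, (hu2 i h).2, h⟩
  have htri3 : ∀ i, (x i = u i ∧ x i = y i) ∨ (x i ≠ u i ∧ x i ≠ y i ∧ u i ≠ y i) := by
    intro i
    by_cases h : x i = y i
    · exact Or.inl ⟨(hu1 i h).symm, h⟩
    · exact Or.inr ⟨Ne.symm (hu2 i h).1, h, (hu2 i h).2⟩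
  have htri4 : ∀ i, (y i = u i ∧ y i = x i) ∨ (y i ≠ u i ∧ y i ≠ x i ∧ u i ≠ x i) := by
    intro i
    by_cases h : x i = y i
    · exact Or.inl ⟨((hu1 i h).trans h).symm, h.symm⟩
    · exact Or.inr ⟨Ne.symm (hu2 i h).2, Ne.symm h, (hu2 i h).1⟩
  have h1 := lotsa_triple p hidem hsa hsum horth hn x y u htri1 a
  have h3 := lotsa_triple p hidem hsa hsum horth hn u y x htri3 a
  have h4 := lotsa_triple p hidem hsa hsum horth hn u x y htri4 a
  have hkey : p x a * p y a = (p x a * p y a) * (p x a * p y a) := by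
    calc p x a * p y a = p x a * (p u a * p y a) := h1
      _ = p x a * (p u a * (p x a * p y a)) := by rw [h3]
      _ = p x a * ((p u a * p x a) * p y a) := by simp only [mul_assoc]
      _ = p x a * ((p u a * (p y a * p x a)) * p y a) := by rw [h4]
      _ = (p x a * (p u a * p y a)) * (p x a * p y a) := by simp only [mul_assoc]
      _ = (p x a * p y a) * (p x a * p y a) := by rw [← h1]
  exact lotsa_final (hidem x a) (hsa x a) (hidem y a) (hsa y a) hkey
end

section
/- Let A be a unital C*-algebra, n ≥ 3 and k ≥ 1 integers, and p a family as in the context (a representation of Mor⁺(K_nᵏ, K_n)). Let S ⊆ Fin k and let 𝐱, 𝐲 : Fin k → Fin n satisfy 𝐱(i) = 𝐲(i) if and only if i ∈ S, and set Π := Σ_{a ∈ Fin n} p(𝐱, a) · p(𝐲, a). Then Π is a projection (Π² = Π = Π*), and Π commutes with p(𝐳, b) for every 𝐳 : Fin k → Fin n and every b ∈ Fin n. -/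
/-! Auxiliary lemmas for `stmt4`. -/

lemma stmt4aux_sum_star_mul_self_eq_zero {A : Type*} [CStarAlgebra A] {ι : Type*}
    (s : Finset ι) (f : ι → A) (h0 : ∑ i ∈ s, star (f i) * f i = 0) :
    ∀ i ∈ s, f i = 0 := by
  letI := CStarAlgebra.spectralOrder A
  haveI := CStarAlgebra.spectralOrderedRing A
  intro i hi
  have h1 : ∀ j ∈ s, 0 ≤ star (f j) * f j := fun j _ => star_mul_self_nonneg (f j)
  have h2 := (Finset.sum_eq_zero_iff_of_nonneg h1).mp h0 i hi
  exact CStarRing.star_mul_self_eq_zero_iff (f i) |>.mp h2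

lemma stmt4aux_proj_sum_eq_one {A : Type*} [CStarAlgebra A] {n : ℕ} (q : Fin n → A)
    (hqi : ∀ b, q b * q b = q b) (hqs : ∀ b, star (q b) = q b)
    (hsum : ∑ b, q b = ∑ _b : Fin n, (1 : A)) : ∀ b, q b = 1 := by
  have key : ∑ b : Fin n, ((1 : A) - q b) = 0 := by
    rw [Finset.sum_sub_distrib, hsum, sub_self]
  have hterm : ∀ b, star ((1 : A) - q b) * ((1 : A) - q b) = (1 : A) - q b := by
    intro b
    have h1 : star ((1 : A) - q b) = (1 : A) - q b := by rw [star_sub, star_one, hqs]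
    rw [h1, sub_mul, one_mul, mul_sub, mul_one, hqi]
    abel
  have hz := stmt4aux_sum_star_mul_self_eq_zero Finset.univ (fun b => (1 : A) - q b)
    (by rw [Finset.sum_congr rfl (fun b _ => hterm b)]; exact key)
  intro b
  exact (sub_eq_zero.mp (hz b (Finset.mem_univ b))).symm

lemma stmt4aux_exists_third {n : ℕ} (hn : 3 ≤ n) (s t : Fin n) :
    ∃ c : Fin n, c ≠ s ∧ c ≠ t := by
  have hm : (0 ≠ s.val ∧ 0 ≠ t.val) ∨ (1 ≠ s.val ∧ 1 ≠ t.val) ∨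
      (2 ≠ s.val ∧ 2 ≠ t.val) := by omega
  rcases hm with ⟨h1, h2⟩ | ⟨h1, h2⟩ | ⟨h1, h2⟩
  · exact ⟨⟨0, by omega⟩, fun h => h1 (congrArg Fin.val h), fun h => h2 (congrArg Fin.val h)⟩
  · exact ⟨⟨1, by omega⟩, fun h => h1 (congrArg Fin.val h), fun h => h2 (congrArg Fin.val h)⟩
  · exact ⟨⟨2, by omega⟩, fun h => h1 (congrArg Fin.val h), fun h => h2 (congrArg Fin.val h)⟩

lemma stmt4aux_exists_perm_two {n : ℕ} (hn : 3 ≤ n) {j j' l l' : Fin n}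
    (hj : j ≠ j') (hl : l ≠ l') :
    ∃ τ : Equiv.Perm (Fin n), τ j = l ∧ τ j' = l' := by
  haveI : NeZero n := ⟨by omega⟩
  have h01 : (0 : Fin n) ≠ 1 := by
    rw [Fin.ne_iff_vne, Fin.val_zero, Fin.val_one', Nat.mod_eq_of_lt (by omega)]
    omega
  have he : ∀ α β : Fin n, α ≠ β → ∃ e : Equiv.Perm (Fin n), e 0 = α ∧ e 1 = β := by
    intro α β hαβ
    refine ⟨(Equiv.swap 1 (Equiv.swap 0 α β)).trans (Equiv.swap 0 α), ?_, ?_⟩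
    · have hb0 : Equiv.swap 0 α β ≠ 0 := by
        intro h
        exact hαβ ((Equiv.swap 0 α).injective (h.trans (Equiv.swap_apply_right 0 α).symm)).symm
      rw [Equiv.trans_apply, Equiv.swap_apply_of_ne_of_ne h01 (Ne.symm hb0),
        Equiv.swap_apply_left]
    · rw [Equiv.trans_apply, Equiv.swap_apply_left, Equiv.swap_apply_self]
  obtain ⟨e₁, he₁0, he₁1⟩ := he j j' hj
  obtain ⟨e₂, he₂0, he₂1⟩ := he l l' hl
  refine ⟨e₁.symm.trans e₂, ?_, ?_⟩
  · rw [Equiv.trans_apply, ← he₁0, Equiv.symm_apply_apply, he₂0]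
  · rw [Equiv.trans_apply, ← he₁1, Equiv.symm_apply_apply, he₂1]

lemma stmt4aux_commKey {A : Type*} [Ring A] {a₁ a₂ b₁ b₂ : A}
    (hρ : a₁ + b₂ = a₂ + b₁) (ha₁ : a₁ * a₁ = a₁) (hb₁ : b₁ * b₁ = b₁)
    (h12 : a₁ * b₂ = 0) (h21 : b₂ * a₁ = 0) (h34 : b₁ * a₂ = 0) (h43 : a₂ * b₁ = 0) :
    a₁ * a₂ - a₂ * a₁ = -(b₁ * b₂ - b₂ * b₁) := by
  have ha2 : a₂ = a₁ + b₂ - b₁ := by rw [hρ]; abel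
  have hb2 : b₂ = a₂ + b₁ - a₁ := by rw [← hρ]; abel
  have e1 : a₁ * a₂ = a₁ - a₁ * b₁ := by
    rw [ha2, mul_sub, mul_add, ha₁, h12, add_zero]
  have e2 : a₂ * a₁ = a₁ - b₁ * a₁ := by
    rw [ha2, sub_mul, add_mul, ha₁, h21, add_zero]
  have e3 : b₁ * b₂ = b₁ - b₁ * a₁ := by
    rw [hb2, mul_sub, mul_add, hb₁, h34, zero_add]
  have e4 : b₂ * b₁ = b₁ - a₁ * b₁ := by
    rw [hb2, sub_mul, add_mul, hb₁, h43, zero_add]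
  rw [e1, e2, e3, e4]; abel

section stmt4aux
variable {A : Type*} [CStarAlgebra A] {n k : ℕ}
  (p : (Fin k → Fin n) → Fin n → A)
  (hidem : ∀ x a, p x a * p x a = p x a)
  (hsa : ∀ x a, star (p x a) = p x a)
  (hsum : ∀ x, ∑ a, p x a = 1)
  (horth : ∀ x y a, (∀ i, x i ≠ y i) → p x a * p y a = 0)

include hidem hsa hsum horth

/-- Column fact: cliques have color-columns summing to 1. -/
lemma stmt4aux_colsum (c : Fin n → Fin k → Fin n)
    (hc : ∀ m m', m ≠ m' → ∀ i, c m i ≠ c m' i) (a : Fin n) :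
    ∑ m, p (c m) a = 1 := by
  refine stmt4aux_proj_sum_eq_one (fun b => ∑ m, p (c m) b) ?_ ?_ ?_ a
  · intro b
    rw [Finset.sum_mul]
    refine Finset.sum_congr rfl fun m _ => ?_
    rw [Finset.mul_sum, Finset.sum_eq_single m]
    · exact hidem _ _
    · intro m' _ hne
      exact horth _ _ _ (hc m m' (Ne.symm hne))
    · intro h; exact absurd (Finset.mem_univ m) h
  · intro b
    rw [star_sum]
    exact Finset.sum_congr rfl fun m _ => hsa _ _
  · rw [Finset.sum_comm]
    exact Finset.sum_congr rfl fun m _ => hsum _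

/-- Row orthogonality. -/
lemma stmt4aux_rowOrth : ∀ x (a b : Fin n), a ≠ b → p x a * p x b = 0 := by
  intro x a b hab
  have h1 : ∑ c, p x b * p x c * p x b = p x b := by
    have h : ∑ c, p x b * p x c * p x b = p x b * (∑ c, p x c) * p x b := by
      rw [Finset.mul_sum, Finset.sum_mul]
    rw [h, hsum, mul_one, hidem]
  have h3 := Finset.add_sum_erase Finset.univ (fun c => p x b * p x c * p x b)
    (Finset.mem_univ b)
  rw [h1] at h3
  have h4 : p x b * p x b * p x b = p x b := by rw [hidem, hidem]
  rw [h4] at h3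
  have h2 : ∑ c ∈ Finset.univ.erase b, p x b * p x c * p x b = 0 :=
    add_eq_left.mp h3
  have h5 : ∀ c ∈ Finset.univ.erase b, p x c * p x b = 0 := by
    apply stmt4aux_sum_star_mul_self_eq_zero
    have hterm : ∀ c, star (p x c * p x b) * (p x c * p x b) = p x b * p x c * p x b := by
      intro c
      rw [star_mul, hsa, hsa, ← mul_assoc, mul_assoc (p x b) (p x c) (p x c), hidem]
    rw [Finset.sum_congr rfl (fun c _ => hterm c)]
    exact h2
  exact h5 a (Finset.mem_erase.mpr ⟨hab, Finset.mem_univ a⟩)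

/-- Same-color projections always commute (for `n ≥ 3`). -/
lemma stmt4aux_pcomm (hn : 3 ≤ n) : ∀ u v (a : Fin n), p u a * p v a = p v a * p u a := by
  haveI : NeZero n := ⟨by omega⟩
  have h01 : (0 : Fin n) ≠ 1 := by
    rw [Fin.ne_iff_vne, Fin.val_zero, Fin.val_one', Nat.mod_eq_of_lt (by omega)]
    omega
  intro u v a
  choose t1 ht1 using fun i => stmt4aux_exists_third hn (v i) (v i)
  set w : Fin k → Fin n := fun i => if u i = v i then t1 i else u i with hw
  have hwv : ∀ i, w i ≠ v i := by
    intro i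
    rw [hw]
    dsimp only
    split
    · exact (ht1 i).1
    · assumption
  have hf' : ∀ i, ∃ g : Equiv.Perm (Fin n), g 0 = v i ∧ g 1 = w i :=
    fun i => stmt4aux_exists_perm_two hn h01 (Ne.symm (hwv i))
  choose f hf0 hf1 using hf'
  set U : Fin n → Fin n → Fin k → Fin n := fun j l i => if u i = v i then f i j else f i l
    with hU
  have hUortho : ∀ {j j' l l' : Fin n}, j ≠ j' → l ≠ l' → ∀ i, U j l i ≠ U j' l' i := by
    intro j j' l l' hj hl i
    rw [hU]
    dsimp only
    split
    · exact fun h => hj ((f i).injective h)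
    · exact fun h => hl ((f i).injective h)
  have hU00 : U 0 0 = v := funext fun i => by
    rw [hU]; dsimp only; split <;> exact hf0 i
  have hU01 : U 0 1 = u := funext fun i => by
    rw [hU]; dsimp only; split
    · rename_i h; exact (hf0 i).trans h.symm
    · exact (hf1 i).trans (by rw [hw]; dsimp only; rw [if_neg ‹¬ u i = v i›])
  set M : Fin n → Fin n → A := fun j l => p (U j l) a with hM
  have hP : ∀ {j j' : Fin n}, j ≠ j' → M j 1 + M j' 0 = M j 0 + M j' 1 := by
    intro j j' hj
    obtain ⟨τ, hτj, hτj'⟩ := stmt4aux_exists_perm_two hn hj (Ne.symm h01)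
    have hCF1 : ∑ m, p (U m (τ m)) a = 1 :=
      stmt4aux_colsum p hidem hsa hsum horth _
        (fun m m' hne i => hUortho hne (fun h => hne (τ.injective h)) i) a
    have hCF2 : ∑ m, p (U m (τ (Equiv.swap j j' m))) a = 1 :=
      stmt4aux_colsum p hidem hsa hsum horth _
        (fun m m' hne i => hUortho hne
          (fun h => hne ((Equiv.swap j j').injective (τ.injective h))) i) a
    set F : Fin n → A := fun m => p (U m (τ m)) a with hF
    set G : Fin n → A := fun m => p (U m (τ (Equiv.swap j j' m))) a with hG
    have hFG : ∀ m, m ≠ j → m ≠ j' → F m = G m := by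
      intro m hmj hmj'
      rw [hF, hG]
      dsimp only
      rw [Equiv.swap_apply_of_ne_of_ne hmj hmj']
    have hj'mem : j' ∈ Finset.univ.erase j :=
      Finset.mem_erase.mpr ⟨Ne.symm hj, Finset.mem_univ _⟩
    have splitF : ∑ m, F m = F j + (F j' + ∑ m ∈ (Finset.univ.erase j).erase j', F m) := by
      rw [Finset.add_sum_erase _ F hj'mem, Finset.add_sum_erase _ F (Finset.mem_univ j)]
    have splitG : ∑ m, G m = G j + (G j' + ∑ m ∈ (Finset.univ.erase j).erase j', G m) := by
      rw [Finset.add_sum_erase _ G hj'mem, Finset.add_sum_erase _ G (Finset.mem_univ j)]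
    have tails : ∑ m ∈ (Finset.univ.erase j).erase j', F m
        = ∑ m ∈ (Finset.univ.erase j).erase j', G m := by
      refine Finset.sum_congr rfl fun m hm => ?_
      have hm' := Finset.mem_erase.mp hm
      have hm'' := Finset.mem_erase.mp hm'.2
      exact hFG m hm''.1 hm'.1
    have htot : F j + (F j' + ∑ m ∈ (Finset.univ.erase j).erase j', F m)
        = G j + (G j' + ∑ m ∈ (Finset.univ.erase j).erase j', F m) := by
      rw [← splitF, hCF1, tails, ← splitG, hCF2]
    have hFG2 : F j + F j' = G j + G j' := by
      have h := htot
      rw [← add_assoc, ← add_assoc] at h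
      exact add_right_cancel h
    have eF1 : F j = M j 1 := by rw [hF]; dsimp only; rw [hτj]
    have eF2 : F j' = M j' 0 := by rw [hF]; dsimp only; rw [hτj']
    have eG1 : G j = M j 0 := by
      rw [hG]; dsimp only; rw [Equiv.swap_apply_left, hτj']
    have eG2 : G j' = M j' 1 := by
      rw [hG]; dsimp only; rw [Equiv.swap_apply_right, hτj]
    rw [eF1, eF2, eG1, eG2] at hFG2
    exact hFG2
  have hD : ∀ {j j' : Fin n}, j ≠ j' →
      M j 1 * M j 0 - M j 0 * M j 1 = -(M j' 1 * M j' 0 - M j' 0 * M j' 1) := by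
    intro j j' hj
    refine stmt4aux_commKey (hP hj) (hidem _ _) (hidem _ _) ?_ ?_ ?_ ?_
    · exact horth _ _ _ (hUortho hj (Ne.symm h01))
    · exact horth _ _ _ (hUortho (Ne.symm hj) h01)
    · exact horth _ _ _ (hUortho (Ne.symm hj) (Ne.symm h01))
    · exact horth _ _ _ (hUortho hj h01)
  obtain ⟨r2, hr20, hr21⟩ := stmt4aux_exists_third hn 0 1
  have d01 := hD h01
  have d12 := hD hr21.symm
  have d02 := hD hr20.symm
  have e : M 0 1 * M 0 0 - M 0 0 * M 0 1
      = -(-(M r2 1 * M r2 0 - M r2 0 * M r2 1)) := by rw [d01, d12]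
  rw [neg_neg] at e
  have hh : M r2 1 * M r2 0 - M r2 0 * M r2 1
      = -(M r2 1 * M r2 0 - M r2 0 * M r2 1) := e.symm.trans d02
  have h2 : (M r2 1 * M r2 0 - M r2 0 * M r2 1) + (M r2 1 * M r2 0 - M r2 0 * M r2 1) = 0 :=
    eq_neg_iff_add_eq_zero.mp hh
  have h2' : (2 : ℂ) • (M r2 1 * M r2 0 - M r2 0 * M r2 1) = 0 := by
    rw [two_smul]; exact h2
  have hz2 : M r2 1 * M r2 0 - M r2 0 * M r2 1 = 0 := by
    have h3 := congrArg (fun x : A => (2 : ℂ)⁻¹ • x) h2'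
    simpa [smul_smul] using h3
  have hfin : p (U 0 1) a * p (U 0 0) a = p (U 0 0) a * p (U 0 1) a :=
    sub_eq_zero.mp (e.trans hz2)
  rw [hU00, hU01] at hfin
  exact hfin

/-- Resolution identity (Claim F): if `β ⊥ β'` and `α` pointwise agrees with one of
them, then the two transition sums add to `1`. -/
lemma stmt4aux_NF (hn : 3 ≤ n) (α β β' : Fin k → Fin n)
    (hne : ∀ i, β i ≠ β' i) (hcov : ∀ i, α i = β i ∨ α i = β' i) :
    (∑ a, p α a * p β a) + (∑ a, p α a * p β' a) = 1 := by
  haveI : NeZero n := ⟨by omega⟩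
  have h01 : (0 : Fin n) ≠ 1 := by
    rw [Fin.ne_iff_vne, Fin.val_zero, Fin.val_one', Nat.mod_eq_of_lt (by omega)]
    omega
  have hf' : ∀ i, ∃ g : Equiv.Perm (Fin n), g 0 = β i ∧ g 1 = β' i :=
    fun i => stmt4aux_exists_perm_two hn h01 (hne i)
  choose f hf0 hf1 using hf'
  have hCF := stmt4aux_colsum p hidem hsa hsum horth (fun m i => f i m)
    (fun m m' h i hh => h ((f i).injective hh))
  have hc0 : (fun i => f i 0) = β := funext hf0
  have hc1 : (fun i => f i 1) = β' := funext hf1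
  have hterm : ∀ a, p α a = p α a * p β a + p α a * p β' a := by
    intro a
    have h1 : p α a = ∑ m, p α a * p (fun i => f i m) a := by
      rw [← Finset.mul_sum, hCF a, mul_one]
    have h2 : ∑ m, p α a * p (fun i => f i m) a
        = ∑ m ∈ ({0, 1} : Finset (Fin n)), p α a * p (fun i => f i m) a := by
      symm
      apply Finset.sum_subset (Finset.subset_univ _)
      intro m _ hm
      simp only [Finset.mem_insert, Finset.mem_singleton] at hm
      push_neg at hm
      apply horth
      intro i
      rcases hcov i with h | h
      · rw [h, ← hf0 i]
        exact fun hh => hm.1 ((f i).injective hh).symm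
      · rw [h, ← hf1 i]
        exact fun hh => hm.2 ((f i).injective hh).symm
    have h3 : ∑ m ∈ ({0, 1} : Finset (Fin n)), p α a * p (fun i => f i m) a
        = p α a * p β a + p α a * p β' a := by
      rw [Finset.sum_pair h01, hc0, hc1]
    exact h1.trans (h2.trans h3)
  calc (∑ a, p α a * p β a) + (∑ a, p α a * p β' a)
      = ∑ a, (p α a * p β a + p α a * p β' a) := Finset.sum_add_distrib.symm
    _ = ∑ a, p α a := Finset.sum_congr rfl fun a _ => (hterm a).symm
    _ = 1 := hsum α

end stmt4aux

/-- **Lemma (cool-projections (ii),(iii)).** Let `A` be a unital C*-algebra, `n ≥ 3`,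
`k ≥ 1`, and `p` a representation of `Mor⁺(K_nᵏ, K_n)`. Let `S ⊆ Fin k` and let `x, y`
agree exactly on `S`; set `Π := Σ_a p x a * p y a`. Then `Π` is a projection and `Π` is
central (commutes with every `p z b`). -/
theorem stmt4 {A : Type*} [CStarAlgebra A]
    (n k : ℕ) (hn : 3 ≤ n) (hk : 1 ≤ k)
    (p : (Fin k → Fin n) → Fin n → A)
    (hidem : ∀ x a, p x a * p x a = p x a)
    (hsa : ∀ x a, star (p x a) = p x a)
    (hsum : ∀ x, ∑ a, p x a = 1)
    (horth : ∀ x y a, (∀ i, x i ≠ y i) → p x a * p y a = 0)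
    (S : Finset (Fin k)) (x y : Fin k → Fin n)
    (hxy : ∀ i, x i = y i ↔ i ∈ S) :
    (∑ a, p x a * p y a) * (∑ a, p x a * p y a) = ∑ a, p x a * p y a ∧
    star (∑ a, p x a * p y a) = ∑ a, p x a * p y a ∧
    ∀ (z : Fin k → Fin n) (b : Fin n),
      (∑ a, p x a * p y a) * p z b = p z b * (∑ a, p x a * p y a) := by
  have pcomm := stmt4aux_pcomm p hidem hsa hsum horth hn
  have rowOrth := stmt4aux_rowOrth p hidem hsa hsum horth
  refine ⟨?_, ?_, ?_⟩
  · -- idempotent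
    rw [Finset.sum_mul]
    refine Finset.sum_congr rfl fun a _ => ?_
    rw [Finset.mul_sum, Finset.sum_eq_single a]
    · have h1 : p y a * (p x a * p y a) = p x a * p y a := by
        rw [← mul_assoc, pcomm y x a, mul_assoc, hidem]
      rw [mul_assoc, h1, ← mul_assoc, hidem]
    · intro b _ hba
      rw [pcomm x y a, mul_assoc, ← mul_assoc (p x a), rowOrth x a b (Ne.symm hba),
        zero_mul, mul_zero]
    · intro h; exact absurd (Finset.mem_univ a) h
  · -- self-adjoint
    rw [star_sum]
    refine Finset.sum_congr rfl fun a _ => ?_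
    rw [star_mul, hsa, hsa, pcomm y x a]
  · -- central
    intro z b
    choose t1 ht1x ht1z using fun i => stmt4aux_exists_third hn (x i) (z i)
    choose t2 ht2x _h2 using fun i => stmt4aux_exists_third hn (x i) (x i)
    choose t3 ht3z _h3 using fun i => stmt4aux_exists_third hn (z i) (z i)
    set w : Fin k → Fin n := fun i => if x i = y i then t1 i else x i with hw
    set xh : Fin k → Fin n := fun i => if x i = y i then z i else x i with hxh
    set v : Fin k → Fin n := fun i => if x i = y i then z i else t1 i with hv
    set g1 : Fin k → Fin n := fun i => if x i = y i then t1 i else t2 i with hg1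
    set g2 : Fin k → Fin n := fun i => if x i = y i then t3 i else t1 i with hg2
    have NF1 : (∑ a, p x a * p y a) + (∑ a, p x a * p w a) = 1 := by
      refine stmt4aux_NF p hidem hsa hsum horth hn x y w ?_ ?_
      · intro i
        simp only [hw]
        by_cases h : x i = y i
        · simp only [if_pos h]
          exact fun hh => ht1x i (hh.symm.trans h.symm)
        · simp only [if_neg h]
          exact fun hh => h hh.symm
      · intro i
        simp only [hw]
        by_cases h : x i = y i
        · exact Or.inl h
        · simp only [if_neg h]
          exact Or.inr trivial
    have NF2 : (∑ a, p w a * p x a) + (∑ a, p w a * p g1 a) = 1 := by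
      refine stmt4aux_NF p hidem hsa hsum horth hn w x g1 ?_ ?_
      · intro i
        simp only [hg1]
        by_cases h : x i = y i
        · simp only [if_pos h]
          exact fun hh => ht1x i hh.symm
        · simp only [if_neg h]
          exact fun hh => ht2x i hh.symm
      · intro i
        simp only [hw, hg1]
        by_cases h : x i = y i
        · simp only [if_pos h]
          exact Or.inr trivial
        · simp only [if_neg h]
          exact Or.inl trivial
    have NF3 : (∑ a, p w a * p xh a) + (∑ a, p w a * p g1 a) = 1 := by
      refine stmt4aux_NF p hidem hsa hsum horth hn w xh g1 ?_ ?_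
      · intro i
        simp only [hxh, hg1]
        by_cases h : x i = y i
        · simp only [if_pos h]
          exact fun hh => ht1z i (hh.symm)
        · simp only [if_neg h]
          exact fun hh => ht2x i hh.symm
      · intro i
        simp only [hw, hxh, hg1]
        by_cases h : x i = y i
        · simp only [if_pos h]
          exact Or.inr trivial
        · simp only [if_neg h]
          exact Or.inl trivial
    have NF4 : (∑ a, p xh a * p w a) + (∑ a, p xh a * p v a) = 1 := by
      refine stmt4aux_NF p hidem hsa hsum horth hn xh w v ?_ ?_
      · intro i
        simp only [hw, hv]
        by_cases h : x i = y i
        · simp only [if_pos h]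
          exact ht1z i
        · simp only [if_neg h]
          exact fun hh => ht1x i hh.symm
      · intro i
        simp only [hw, hxh, hv]
        by_cases h : x i = y i
        · simp only [if_pos h]
          exact Or.inr trivial
        · simp only [if_neg h]
          exact Or.inl trivial
    have NF5 : (∑ a, p v a * p xh a) + (∑ a, p v a * p g2 a) = 1 := by
      refine stmt4aux_NF p hidem hsa hsum horth hn v xh g2 ?_ ?_
      · intro i
        simp only [hxh, hg2]
        by_cases h : x i = y i
        · simp only [if_pos h]
          exact fun hh => ht3z i hh.symm
        · simp only [if_neg h]
          exact fun hh => ht1x i hh.symm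
      · intro i
        simp only [hv, hxh, hg2]
        by_cases h : x i = y i
        · simp only [if_pos h]
          exact Or.inl trivial
        · simp only [if_neg h]
          exact Or.inr trivial
    have NF6 : (∑ a, p v a * p z a) + (∑ a, p v a * p g2 a) = 1 := by
      refine stmt4aux_NF p hidem hsa hsum horth hn v z g2 ?_ ?_
      · intro i
        simp only [hg2]
        by_cases h : x i = y i
        · simp only [if_pos h]
          exact fun hh => ht3z i hh.symm
        · simp only [if_neg h]
          exact fun hh => ht1z i hh.symm
      · intro i
        simp only [hv, hg2]
        by_cases h : x i = y i
        · simp only [if_pos h]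
          exact Or.inl trivial
        · simp only [if_neg h]
          exact Or.inr trivial
    have sym : ∀ α β : Fin k → Fin n, (∑ a, p α a * p β a) = ∑ a, p β a * p α a :=
      fun α β => Finset.sum_congr rfl fun a _ => pcomm α β a
    have key : (∑ a, p x a * p y a) = ∑ a, p z a * p v a := by
      have e2 : (∑ a, p w a * p x a) = ∑ a, p w a * p xh a :=
        (eq_sub_of_add_eq NF2).trans (eq_sub_of_add_eq NF3).symm
      have e3 : (∑ a, p v a * p xh a) = ∑ a, p v a * p z a :=
        (eq_sub_of_add_eq NF5).trans (eq_sub_of_add_eq NF6).symm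
      calc ∑ a, p x a * p y a = 1 - ∑ a, p x a * p w a := eq_sub_of_add_eq NF1
        _ = 1 - ∑ a, p w a * p x a := by rw [sym x w]
        _ = 1 - ∑ a, p w a * p xh a := by rw [e2]
        _ = 1 - ∑ a, p xh a * p w a := by rw [sym w xh]
        _ = ∑ a, p xh a * p v a := by rw [eq_sub_of_add_eq NF4, sub_sub_cancel]
        _ = ∑ a, p v a * p xh a := sym xh v
        _ = ∑ a, p v a * p z a := e3
        _ = ∑ a, p z a * p v a := sym v z
    rw [key, Finset.sum_mul, Finset.mul_sum]
    have L : ∑ a, p z a * p v a * p z b = p v b * p z b := by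
      rw [Finset.sum_eq_single b]
      · rw [pcomm z v b, mul_assoc, hidem]
      · intro a _ hab
        rw [pcomm z v a, mul_assoc, rowOrth z a b hab, mul_zero]
      · intro h; exact absurd (Finset.mem_univ b) h
    have R : ∑ a, p z b * (p z a * p v a) = p v b * p z b := by
      rw [Finset.sum_eq_single b]
      · rw [← mul_assoc, hidem, pcomm z v b]
      · intro a _ hab
        rw [← mul_assoc, rowOrth z b a (Ne.symm hab), zero_mul]
      · intro h; exact absurd (Finset.mem_univ b) h
    rw [L, R]
end

section
/- Let A be a unital C*-algebra, n ≥ 3 and k ≥ 1 integers, and p a family as in the context (a representation of Mor⁺(K_nᵏ, K_n)). Let S ⊆ Fin k, let 𝐱, 𝐲 : Fin k → Fin n satisfy 𝐱(i) = 𝐲(i) if and only if i ∈ S, and set Π_S := Σ_{a ∈ Fin n} p(𝐱, a) · p(𝐲, a). If 𝐳, 𝐳' : Fin k → Fin n satisfy 𝐳(i) = 𝐳'(i) for all i ∈ S, then Π_S · p(𝐳, b) = Π_S · p(𝐳', b) for every b ∈ Fin n; i.e., Π_S · p(𝐳, b) does not depend on the values of 𝐳 at coordinates outside S. -/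
/-!
Write `Π(x, y) = ∑ a, p x a * p y a`. Completing two adjacent vertices `y, w` of `K_nᵏ` to an
`n`-clique, over which every column `p · a` sums to `1`, gives
`p x a * p y a + p x a * p w a = p x a` whenever each `x i` equals `y i` or `w i`. Hence
`p x a * p y a` only depends on where `y` agrees with `x`, and `Π(x, y)` only depends on
`S = {i | x i = y i}`. Choosing `u` that agrees with `z` (equivalently with `z'`) exactly on `S`,
orthogonality of the row `p z ·` gives
`Π_S * p z b = p u b * p z b = p u b * p z' b = Π_S * p z' b`.
-/

open Finset Function

theorem IsStarProjection.mul_eq_zero_of_sum_eq_one {A ι : Type*} [CStarAlgebra A]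
    [Fintype ι] {e : ι → A} (he : ∀ i, IsStarProjection (e i)) (h : ∑ i, e i = 1) {i j : ι}
    (hij : i ≠ j) : e i * e j = 0 := by
  classical
  let _ := CStarAlgebra.spectralOrder A
  have _ := CStarAlgebra.spectralOrderedRing A
  have hle : e i ≤ 1 - e j := by
    rw [← h, ← sum_erase_eq_sub (mem_univ j)]
    exact single_le_sum (fun k _ => (he k).nonneg) (mem_erase.mpr ⟨hij, mem_univ i⟩)
  have := ((he i).le_iff_mul_eq_left (he j).one_sub).mp hle
  rwa [mul_sub, mul_one, sub_eq_self] at this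

/-- A representation of `Mor⁺(K_nᵏ, K_n)` in `A`; two vertices of `K_nᵏ` are adjacent iff they
differ in every coordinate. -/
structure QuantumHomRep (A : Type*) [CStarAlgebra A] (n k : ℕ) where
  p : (Fin k → Fin n) → Fin n → A
  isStarProjection : ∀ x a, IsStarProjection (p x a)
  sum_eq_one : ∀ x, ∑ a, p x a = 1
  mul_eq_zero_of_adj :
    ∀ {x y : Fin k → Fin n} (a : Fin n), (∀ i, x i ≠ y i) → p x a * p y a = 0

namespace QuantumHomRep

variable {A : Type*} [CStarAlgebra A] {n k : ℕ} (R : QuantumHomRep A n k)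

/-- The paper's `Π_S` for `S = {i | x i = y i}`. -/
def overlap (x y : Fin k → Fin n) : A := ∑ a, R.p x a * R.p y a

lemma p_mul_p_of_ne (x : Fin k → Fin n) {a b : Fin n} (hab : a ≠ b) : R.p x a * R.p x b = 0 :=
  IsStarProjection.mul_eq_zero_of_sum_eq_one (R.isStarProjection x) (R.sum_eq_one x) hab

lemma overlap_mul_p (x y : Fin k → Fin n) (b : Fin n) :
    R.overlap x y * R.p y b = R.p x b * R.p y b := by
  rw [overlap, sum_mul, sum_eq_single b]
  · rw [mul_assoc, (R.isStarProjection y b).isIdempotentElem.eq]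
  · intro a _ hab
    rw [mul_assoc, R.p_mul_p_of_ne y hab, mul_zero]
  · exact fun h => (h (mem_univ b)).elim

/-- The vertices `fun i => σ i t` form an `n`-clique of `K_nᵏ`. Over it the column sums of `p`
are projections adding up to `n • 1`, so each of them is `1`. -/
lemma sum_p_clique (σ : Fin k → Equiv.Perm (Fin n)) (a : Fin n) :
    ∑ t, R.p (fun i => σ i t) a = 1 := by
  let _ := CStarAlgebra.spectralOrder A
  have _ := CStarAlgebra.spectralOrderedRing A
  set q : Fin n → A := fun a => ∑ t, R.p (fun i => σ i t) a with hq_def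
  have hq : ∀ a, IsStarProjection (q a) := fun a =>
    { isIdempotentElem := OrthogonalIdempotents.isIdempotentElem_sum
        ⟨fun t => (R.isStarProjection _ _).isIdempotentElem,
         fun t t' h => R.mul_eq_zero_of_adj a fun i => (σ i).injective.ne h⟩
      isSelfAdjoint := isSelfAdjoint_sum _ fun t _ => (R.isStarProjection _ _).isSelfAdjoint }
  have hsum : ∑ a, (1 - q a) = 0 := by
    rw [sum_sub_distrib, hq_def, sum_comm]
    simp [R.sum_eq_one]
  have := (sum_eq_zero_iff_of_nonneg fun a _ => (hq a).one_sub.nonneg).mp hsum a (mem_univ a)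
  exact (sub_eq_zero.mp this).symm

/-- Complete the adjacent pair `y, w` to an `n`-clique: `x` is adjacent to all its other
members. -/
lemma p_mul_p_add_p_mul_p [Nontrivial (Fin n)] {x y w : Fin k → Fin n} (hyw : ∀ i, y i ≠ w i)
    (hx : ∀ i, x i = y i ∨ x i = w i) (a : Fin n) :
    R.p x a * R.p y a + R.p x a * R.p w a = R.p x a := by
  obtain ⟨t₀, t₁, ht⟩ := exists_pair_ne (Fin n)
  choose σ hσ using fun i => Equiv.Perm.exists_extending_pair ![t₀, t₁] ![y i, w i]
    (injective_pair_iff_ne.mpr ht) (injective_pair_iff_ne.mpr (hyw i))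
  have hσ₀ (i : Fin k) : σ i t₀ = y i := hσ i 0
  have hσ₁ (i : Fin k) : σ i t₁ = w i := hσ i 1
  have hadj : ∀ t, t ≠ t₀ ∧ t ≠ t₁ → R.p x a * R.p (fun i => σ i t) a = 0 := by
    refine fun t ht' => R.mul_eq_zero_of_adj a fun i hxi => ?_
    rcases hx i with h | h
    · exact ht'.1 ((σ i).injective (hxi.symm.trans (h.trans (hσ₀ i).symm)))
    · exact ht'.2 ((σ i).injective (hxi.symm.trans (h.trans (hσ₁ i).symm)))
  have hy : (fun i => σ i t₀) = y := funext hσ₀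
  have hw : (fun i => σ i t₁) = w := funext hσ₁
  rw [← hy, ← hw, ← Fintype.sum_eq_add t₀ t₁ ht hadj, ← mul_sum, R.sum_p_clique,
    mul_one]

lemma p_mul_p_congr_right [Nontrivial (Fin n)] {x y y' : Fin k → Fin n}
    (h : ∀ i, x i = y i ↔ x i = y' i) (a : Fin n) :
    R.p x a * R.p y a = R.p x a * R.p y' a := by
  choose m hm using fun i => exists_ne (x i)
  let w : Fin k → Fin n := fun i => if x i = y i then m i else x i
  have key : ∀ v, (∀ i, x i = y i ↔ x i = v i) →
      R.p x a * R.p v a = R.p x a - R.p x a * R.p w a := by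
    refine fun v hv => eq_sub_of_add_eq (R.p_mul_p_add_p_mul_p (fun i => ?_) (fun i => ?_) a)
    all_goals (simp only [w]; split_ifs with hi)
    exacts [fun h => hm i (((hv i).mp hi).trans h).symm, fun h => hi ((hv i).mpr h.symm),
      Or.inl ((hv i).mp hi), Or.inr rfl]
  rw [key y fun _ => Iff.rfl, key y' h]

lemma p_mul_p_congr_left [Nontrivial (Fin n)] {x x' y : Fin k → Fin n}
    (h : ∀ i, x i = y i ↔ x' i = y i) (a : Fin n) :
    R.p x a * R.p y a = R.p x' a * R.p y a := by
  have hsa := fun v => (R.isStarProjection v a).isSelfAdjoint.star_eq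
  have := congrArg star (R.p_mul_p_congr_right (y := x) (y' := x')
    (fun i => by rw [eq_comm, h i, eq_comm]) a)
  simpa only [star_mul, hsa] using this

lemma p_mul_p_congr (hn : 3 ≤ n) {x y x' y' : Fin k → Fin n}
    (hpat : ∀ i, x i = y i ↔ x' i = y' i) (hval : ∀ i, x i = y i → x i = x' i) (a : Fin n) :
    R.p x a * R.p y a = R.p x' a * R.p y' a := by
  have : Nontrivial (Fin n) := Fin.nontrivial_iff_two_le.mpr (by omega)
  choose m hm using fun i => Fin.exists_ne_and_ne_of_two_lt (x i) (x' i) (by omega)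
  let w : Fin k → Fin n := fun i => if x i = y i then x i else m i
  calc R.p x a * R.p y a = R.p x a * R.p w a := by
        refine R.p_mul_p_congr_right (fun i => ?_) a
        simp only [w]; split_ifs with hi
        exacts [iff_of_true hi rfl, iff_of_false hi (hm i).1.symm]
    _ = R.p x' a * R.p w a := by
        refine R.p_mul_p_congr_left (fun i => ?_) a
        simp only [w]; split_ifs with hi
        exacts [iff_of_true rfl (hval i hi).symm, iff_of_false (hm i).1.symm (hm i).2.symm]
    _ = R.p x' a * R.p y' a := by
        refine R.p_mul_p_congr_right (fun i => ?_) a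
        simp only [w]; split_ifs with hi
        exacts [iff_of_true (hval i hi).symm ((hpat i).mp hi),
          iff_of_false (hm i).2.symm ((hpat i).not.mp hi)]

lemma overlap_add_overlap [Nontrivial (Fin n)] {x y w : Fin k → Fin n} (hyw : ∀ i, y i ≠ w i)
    (hx : ∀ i, x i = y i ∨ x i = w i) : R.overlap x y + R.overlap x w = 1 := by
  rw [overlap, overlap, ← sum_add_distrib, ← R.sum_eq_one x]
  exact sum_congr rfl fun a _ => R.p_mul_p_add_p_mul_p hyw hx a

/-- `overlap x y = 1 - overlap x w` for a `w` agreeing with `x` exactly off the pattern of `x, y`;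
in `overlap x w` the values of `x` on that pattern can be changed freely. -/
lemma overlap_congr (hn : 3 ≤ n) {x y x' y' : Fin k → Fin n}
    (hpat : ∀ i, x i = y i ↔ x' i = y' i) : R.overlap x y = R.overlap x' y' := by
  have : Nontrivial (Fin n) := Fin.nontrivial_iff_two_le.mpr (by omega)
  choose m hm using fun i => Fin.exists_ne_and_ne_of_two_lt (x i) (x' i) (by omega)
  let w : Fin k → Fin n := fun i => if x i = y i then m i else x i
  let x₁ : Fin k → Fin n := fun i => if x i = y i then x' i else x i
  let y₁ : Fin k → Fin n := fun i => if x i = y i then x' i else y i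
  calc R.overlap x y = 1 - R.overlap x w := by
        refine eq_sub_of_add_eq (R.overlap_add_overlap (fun i => ?_) (fun i => ?_))
        all_goals (simp only [w]; split_ifs with hi)
        exacts [fun h => (hm i).1 (hi.trans h).symm, Ne.symm hi, Or.inl hi, Or.inr rfl]
    _ = 1 - R.overlap x₁ w := by
        congr 1
        refine sum_congr rfl fun a _ => R.p_mul_p_congr_left (fun i => ?_) a
        simp only [w, x₁]; split_ifs with hi
        exacts [iff_of_false (hm i).1.symm (hm i).2.symm, Iff.rfl]
    _ = R.overlap x₁ y₁ := by
        refine (eq_sub_of_add_eq (R.overlap_add_overlap (fun i => ?_) (fun i => ?_))).symm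
        all_goals (simp only [w, x₁, y₁]; split_ifs with hi)
        exacts [(hm i).2.symm, Ne.symm hi, Or.inl rfl, Or.inr rfl]
    _ = R.overlap x' y' := by
        refine sum_congr rfl fun a _ => R.p_mul_p_congr hn (fun i => ?_) (fun i => ?_) a
        all_goals (simp only [x₁, y₁]; split_ifs with hi)
        exacts [iff_of_true rfl ((hpat i).mp hi), iff_of_false hi ((hpat i).not.mp hi),
          fun _ => rfl, fun h => absurd h hi]

end QuantumHomRep

theorem stmt5_general {A : Type*} [CStarAlgebra A]
    (n k : ℕ) (hn : 3 ≤ n)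
    (p : (Fin k → Fin n) → Fin n → A)
    (hidem : ∀ x a, p x a * p x a = p x a)
    (hsa : ∀ x a, star (p x a) = p x a)
    (hsum : ∀ x, ∑ a, p x a = 1)
    (horth : ∀ x y a, (∀ i, x i ≠ y i) → p x a * p y a = 0)
    (S : Finset (Fin k)) (x y : Fin k → Fin n)
    (hxy : ∀ i, x i = y i ↔ i ∈ S)
    (z z' : Fin k → Fin n) (hzz' : ∀ i ∈ S, z i = z' i) (b : Fin n) :
    (∑ a, p x a * p y a) * p z b = (∑ a, p x a * p y a) * p z' b := by
  let R : QuantumHomRep A n k := ⟨p, fun x a => ⟨hidem x a, hsa x a⟩, hsum, horth _ _⟩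
  choose m hm using fun i => Fin.exists_ne_and_ne_of_two_lt (z i) (z' i) (by omega)
  let u : Fin k → Fin n := fun i => if i ∈ S then z i else m i
  have hz : ∀ i, x i = y i ↔ u i = z i := fun i => by
    by_cases hi : i ∈ S <;> simp [u, hi, hxy, (hm i).1]
  have hz' : ∀ i, x i = y i ↔ u i = z' i := fun i => by
    by_cases hi : i ∈ S <;> simp [u, hi, hxy, hzz', (hm i).2]
  have : Nontrivial (Fin n) := Fin.nontrivial_iff_two_le.mpr (by omega)
  calc R.overlap x y * R.p z b = R.p u b * R.p z b := by
        rw [R.overlap_congr hn hz, R.overlap_mul_p]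
    _ = R.p u b * R.p z' b := R.p_mul_p_congr_right (fun i => (hz i).symm.trans (hz' i)) b
    _ = R.overlap x y * R.p z' b := by rw [R.overlap_congr hn hz', R.overlap_mul_p]

/-- **Lemma (cool-projections (iv)).** Let `A` be a unital C*-algebra, `n ≥ 3`, `k ≥ 1`,
and `p` a representation of `Mor⁺(K_nᵏ, K_n)`. Let `S ⊆ Fin k`, let `x, y` agree exactly
on `S`, and set `Π_S := Σ_a p x a * p y a`. If `z, z'` agree on all coordinates in `S`,
then `Π_S * p z b = Π_S * p z' b` for every `b`. -/
theorem stmt5 {A : Type*} [CStarAlgebra A]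
    (n k : ℕ) (hn : 3 ≤ n) (hk : 1 ≤ k)
    (p : (Fin k → Fin n) → Fin n → A)
    (hidem : ∀ x a, p x a * p x a = p x a)
    (hsa : ∀ x a, star (p x a) = p x a)
    (hsum : ∀ x, ∑ a, p x a = 1)
    (horth : ∀ x y a, (∀ i, x i ≠ y i) → p x a * p y a = 0)
    (S : Finset (Fin k)) (x y : Fin k → Fin n)
    (hxy : ∀ i, x i = y i ↔ i ∈ S)
    (z z' : Fin k → Fin n) (hzz' : ∀ i ∈ S, z i = z' i) (b : Fin n) :
    (∑ a, p x a * p y a) * p z b = (∑ a, p x a * p y a) * p z' b :=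
  stmt5_general n k hn p hidem hsa hsum horth S x y hxy z z' hzz' b
end

section
/- Let A be a unital C*-algebra, n ≥ 3 and k ≥ 1 integers, and p a family as in the context (a representation of Mor⁺(K_nᵏ, K_n)). For each i ∈ Fin k choose a pair 𝐱⁽ⁱ⁾, 𝐲⁽ⁱ⁾ : Fin k → Fin n with 𝐱⁽ⁱ⁾(j) = 𝐲⁽ⁱ⁾(j) if and only if j = i, and set Πᵢ := Σ_{a ∈ Fin n} p(𝐱⁽ⁱ⁾, a) · p(𝐲⁽ⁱ⁾, a). Then: (a) each Πᵢ is a projection commuting with every p(𝐳, b); (b) Πᵢ · Πⱼ = 0 for i ≠ j; (c) Π₁ + ⋯ + Π_k = 1; (d) if 𝐱(i) = 𝐲(i) then Πᵢ · p(𝐱, a) = Πᵢ · p(𝐲, a) for every a ∈ Fin n; (e) for every i, every a ∈ Fin n, and every 𝐱, Σ_{a ∈ Fin n} Πᵢ p(𝐱, a) = Πᵢ, and (Πᵢ p(𝐱, a)) · (Πᵢ p(𝐲, a)) = 0 whenever 𝐱(i) ≠ 𝐲(i). (This is the representation-level content of the decomposition Mor⁺(K_nᵏ, K_n) ≅ (S_n⁺)^{⊔k}: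 the elements qᵢ(x, a) := Πᵢ p(𝐱, a) for any 𝐱 with 𝐱(i) = x satisfy the defining relations of Mor⁺(K_n, K_n) = S_n⁺ in the corner ΠᵢA Πᵢ.) -/
set_option linter.unusedSectionVars false

namespace Stmt7Aux

/-! ### Generic helpers -/

lemma sum_starmul_eq_zero {A : Type*} [CStarAlgebra A] {ι : Type*} {s : Finset ι} (f : ι → A)
    (h : ∑ i ∈ s, star (f i) * f i = 0) : ∀ i ∈ s, f i = 0 := by
  letI := CStarAlgebra.spectralOrder A
  haveI := CStarAlgebra.spectralOrderedRing A
  intro i hi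
  have h0 : ∀ j ∈ s, (0 : A) ≤ star (f j) * f j := fun j _ => star_mul_self_nonneg (f j)
  have := (Finset.sum_eq_zero_iff_of_nonneg h0).mp h i hi
  exact CStarRing.star_mul_self_eq_zero_iff (f i) |>.mp this

lemma exists_ne_ne {n : ℕ} (hn : 3 ≤ n) (a b : Fin n) : ∃ c : Fin n, c ≠ a ∧ c ≠ b := by
  by_contra h
  push_neg at h
  have hsub : (Finset.univ : Finset (Fin n)) ⊆ {a, b} := by
    intro c _
    by_cases hca : c = a
    · simp [hca]
    · simp [h c hca]
  have h1 := Finset.card_le_card hsub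
  rw [Finset.card_univ, Fintype.card_fin] at h1
  have h2 : ({a, b} : Finset (Fin n)).card ≤ 2 :=
    le_trans (Finset.card_insert_le _ _) (by simp)
  omega

section FinLemmas

variable {n : ℕ} [NeZero n]

lemma fin_one_ne (hn : 3 ≤ n) : (1 : Fin n) ≠ 0 := by
  intro h
  rw [Fin.ext_iff, Fin.val_one'] at h
  rw [Nat.mod_eq_of_lt (show 1 < n by omega)] at h
  simp at h

lemma fin_two_ne (hn : 3 ≤ n) : (1 : Fin n) + 1 ≠ 0 := by
  intro h
  rw [Fin.ext_iff, Fin.val_add, Fin.val_one'] at h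
  rw [Nat.mod_eq_of_lt (show 1 < n by omega)] at h
  rw [Nat.mod_eq_of_lt (show 1 + 1 < n by omega)] at h
  simp at h

lemma shift_ne (a : Fin n) {s : Fin n} (hs : s ≠ 0) : a + s ≠ a := by
  intro h
  apply hs
  have h2 : a + s = a + 0 := by simpa using h
  exact add_left_cancel h2

lemma sum_split01 {β : Type*} [AddCommMonoid β] (hn : 3 ≤ n) (f : Fin n → β) :
    ∑ t, f t = f 0 + (f 1 + ∑ t ∈ (Finset.univ.erase 0).erase 1, f t) := by
  rw [← Finset.add_sum_erase _ f (Finset.mem_univ 0)]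
  congr 1
  rw [← Finset.add_sum_erase _ f
    (Finset.mem_erase.mpr ⟨fin_one_ne hn, Finset.mem_univ 1⟩)]

lemma sum_two {β : Type*} [AddCommMonoid β] (f : Fin n → β) (i j : Fin n) (hij : i ≠ j)
    (h0 : ∀ t, t ≠ i → t ≠ j → f t = 0) : ∑ t, f t = f i + f j := by
  rw [← Finset.sum_pair hij]
  exact (Finset.sum_subset (Finset.subset_univ _) (fun x _ hx => by
    simp only [Finset.mem_insert, Finset.mem_singleton] at hx
    push_neg at hx
    exact h0 x hx.1 hx.2)).symm

end FinLemmas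

/-! ### exact agreement -/

def Ex {n k : ℕ} (j : Fin k) (u v : Fin k → Fin n) : Prop :=
  u j = v j ∧ ∀ l, l ≠ j → u l ≠ v l

lemma Ex.swap {n k : ℕ} {j : Fin k} {u v : Fin k → Fin n} (h : Ex j u v) : Ex j v u :=
  ⟨h.1.symm, fun l hl => (h.2 l hl).symm⟩

section Main

variable {n k : ℕ} [NeZero n] {A : Type*} [CStarAlgebra A]
variable (p : (Fin k → Fin n) → Fin n → A)
variable (hidem : ∀ x a, p x a * p x a = p x a)
variable (hsa : ∀ x a, star (p x a) = p x a)
variable (hsum : ∀ x, ∑ a, p x a = 1)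
variable (horth : ∀ x y a, (∀ i, x i ≠ y i) → p x a * p y a = 0)

include p hidem hsa hsum in
lemma orth (x : Fin k → Fin n) {a b : Fin n} (hab : a ≠ b) : p x a * p x b = 0 := by
  have h1 : ∑ c, p x b * p x c * p x b = p x b := by
    have h0 : ∑ c, p x b * p x c * p x b = p x b * (∑ c, p x c) * p x b := by
      rw [Finset.mul_sum, Finset.sum_mul]
    rw [h0, hsum, mul_one, hidem]
  have h3 := Finset.add_sum_erase Finset.univ (fun c => p x b * p x c * p x b)
      (Finset.mem_univ b)
  rw [h1] at h3
  rw [hidem, hidem] at h3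
  have h4 : ∑ c ∈ Finset.univ.erase b, p x b * p x c * p x b = 0 :=
    (add_eq_left).mp h3
  have h5 : ∑ c ∈ Finset.univ.erase b, star (p x c * p x b) * (p x c * p x b) = 0 := by
    rw [← h4]
    refine Finset.sum_congr rfl fun c _ => ?_
    rw [star_mul, hsa, hsa]
    have hmid : p x c * (p x c * p x b) = p x c * p x b := by rw [← mul_assoc, hidem]
    rw [mul_assoc, hmid, ← mul_assoc]
  exact sum_starmul_eq_zero _ h5 a (Finset.mem_erase.mpr ⟨hab, Finset.mem_univ a⟩)

/-! ### cliques and column sums -/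

lemma clique_exists (hn : 3 ≤ n) {u v : Fin k → Fin n} (huv : ∀ m, u m ≠ v m) :
    ∃ c : Fin n → Fin k → Fin n,
      c 0 = u ∧ c 1 = v ∧ ∀ t t', t ≠ t' → ∀ m, c t m ≠ c t' m := by
  have h01 : (0 : Fin n) ≠ 1 := (fin_one_ne hn).symm
  refine ⟨fun t m => (Equiv.swap (0 : Fin n) (u m))
      ((Equiv.swap (1 : Fin n) ((Equiv.swap (0 : Fin n) (u m)) (v m))) t), ?_, ?_, ?_⟩
  · funext m
    have hc0 : (Equiv.swap (0 : Fin n) (u m)) (v m) ≠ 0 := by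
      intro h
      have h2 := congrArg (Equiv.swap (0 : Fin n) (u m)) h
      rw [Equiv.swap_apply_self, Equiv.swap_apply_left] at h2
      exact huv m h2.symm
    simp only
    rw [Equiv.swap_apply_of_ne_of_ne h01 (Ne.symm hc0), Equiv.swap_apply_left]
  · funext m
    simp only
    rw [Equiv.swap_apply_left, Equiv.swap_apply_self]
  · intro t t' htt' m h
    exact htt' ((Equiv.injective _) ((Equiv.injective _) h))

include p hidem hsa hsum horth in
lemma col_one (c : Fin n → Fin k → Fin n)
    (hc : ∀ t t', t ≠ t' → ∀ m, c t m ≠ c t' m) (a : Fin n) :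
    ∑ t, p (c t) a = 1 := by
  set Q : Fin n → A := fun b => ∑ t, p (c t) b with hQ
  have hidemQ : ∀ b, Q b * Q b = Q b := by
    intro b
    rw [hQ]
    simp only
    rw [Finset.sum_mul_sum]
    refine Finset.sum_congr rfl fun t _ => ?_
    rw [Finset.sum_eq_single t (fun t' _ ht' => horth _ _ _ (hc t t' (Ne.symm ht')))
      (by simp)]
    exact hidem _ _
  have hsaQ : ∀ b, star (Q b) = Q b := by
    intro b
    rw [hQ]
    simp only
    rw [star_sum]
    exact Finset.sum_congr rfl fun t _ => hsa _ _
  have hsum2 : ∑ b, ((1 : A) - Q b) = 0 := by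
    rw [Finset.sum_sub_distrib]
    have h2 : ∑ b : Fin n, Q b = ∑ b : Fin n, (1 : A) := by
      rw [hQ]
      simp only
      rw [Finset.sum_comm]
      exact Finset.sum_congr rfl fun t _ => hsum (c t)
    rw [h2]
    simp
  have hkey : ∀ b, star ((1 : A) - Q b) * ((1 : A) - Q b) = (1 : A) - Q b := by
    intro b
    rw [star_sub, star_one, hsaQ]
    rw [sub_mul, one_mul, mul_sub, mul_one, hidemQ]
    abel
  have hzero : ∀ b ∈ (Finset.univ : Finset (Fin n)), (1 : A) - Q b = 0 := by
    apply sum_starmul_eq_zero (f := fun b => (1 : A) - Q b)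
    rw [Finset.sum_congr rfl fun b _ => hkey b]
    exact hsum2
  exact (sub_eq_zero.mp (hzero a (Finset.mem_univ a))).symm

/-! ### Lemma D -/

include p hidem hsa hsum horth in
lemma diffD_aux (hn : 3 ≤ n) (m : Fin k) {y y' w w' : Fin k → Fin n}
    (hy : ∀ l, l ≠ m → y l = y' l) (hw : ∀ l, l ≠ m → w l = w' l)
    (hym : y m ≠ y' m) (hvm : y m = w m) (hvm' : y' m = w' m)
    (hoff : ∀ l, l ≠ m → y l ≠ w l) (a : Fin n) :
    p y a - p y' a = p w a - p w' a := by
  have h10 : (1 : Fin n) ≠ 0 := fin_one_ne hn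
  have hadj : ∀ l, y l ≠ w' l := by
    intro l
    by_cases hl : l = m
    · subst hl; rw [← hvm']; exact hym
    · rw [← hw l hl]; exact hoff l hl
  obtain ⟨c, hc0, hc1, hc⟩ := clique_exists hn hadj
  set c' : Fin n → Fin k → Fin n :=
    fun t => if t = 0 then w else if t = 1 then y' else c t with hc'def
  -- pair facts
  have hw_y' : ∀ l, w l ≠ y' l := by
    intro l
    by_cases hl : l = m
    · subst hl
      intro h
      exact hym (hvm.trans h)
    · intro h
      exact hoff l hl ((hy l hl).trans h.symm)
  have hw_c : ∀ t', t' ≠ 0 → t' ≠ 1 → ∀ l, w l ≠ c t' l := by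
    intro t' ht0 ht1 l
    by_cases hl : l = m
    · subst hl
      intro h
      exact hc 0 t' (Ne.symm ht0) l (((congrFun hc0 l).trans hvm).trans h)
    · intro h
      exact hc 1 t' (Ne.symm ht1) l (((congrFun hc1 l).trans (hw l hl).symm).trans h)
  have hy'_c : ∀ t', t' ≠ 0 → t' ≠ 1 → ∀ l, y' l ≠ c t' l := by
    intro t' ht0 ht1 l
    by_cases hl : l = m
    · subst hl
      intro h
      exact hc 1 t' (Ne.symm ht1) l (((congrFun hc1 l).trans hvm'.symm).trans h)
    · intro h
      exact hc 0 t' (Ne.symm ht0) l (((congrFun hc0 l).trans (hy l hl)).trans h)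
  have hc' : ∀ t t', t ≠ t' → ∀ l, c' t l ≠ c' t' l := by
    intro t t' htt' l
    rw [hc'def]
    simp only
    by_cases ht0 : t = 0
    · subst ht0
      rw [if_pos rfl, if_neg (Ne.symm htt')]
      by_cases ht'1 : t' = 1
      · subst ht'1; rw [if_pos rfl]; exact hw_y' l
      · rw [if_neg ht'1]; exact hw_c t' (Ne.symm htt') ht'1 l
    · by_cases ht1 : t = 1
      · subst ht1
        rw [if_neg ht0]
        rw [if_pos rfl]
        by_cases ht'0 : t' = 0
        · subst ht'0
          rw [if_pos rfl]
          exact fun h => hw_y' l h.symm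
        · rw [if_neg ht'0, if_neg (Ne.symm htt')]
          exact hy'_c t' ht'0 (Ne.symm htt') l
      · rw [if_neg ht0, if_neg ht1]
        by_cases ht'0 : t' = 0
        · subst ht'0
          rw [if_pos rfl]
          exact fun h => hw_c t ht0 ht1 l h.symm
        · by_cases ht'1 : t' = 1
          · subst ht'1
            rw [if_neg ht'0, if_pos rfl]
            exact fun h => hy'_c t ht0 ht1 l h.symm
          · rw [if_neg ht'0, if_neg ht'1]
            exact hc t t' htt' l
  have s1 := col_one p hidem hsa hsum horth c hc a
  have s2 := col_one p hidem hsa hsum horth c' hc' a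
  rw [sum_split01 hn] at s1 s2
  rw [hc0, hc1] at s1
  have e0 : c' 0 = w := by simp [hc'def]
  have e1 : c' 1 = y' := by simp [hc'def, h10]
  rw [e0, e1] at s2
  have etail : ∑ t ∈ (Finset.univ.erase 0).erase 1, p (c' t) a
      = ∑ t ∈ (Finset.univ.erase 0).erase 1, p (c t) a := by
    refine Finset.sum_congr rfl fun t ht => ?_
    simp only [Finset.mem_erase] at ht
    rw [hc'def]
    simp only
    rw [if_neg ht.2.1, if_neg ht.1]
  rw [etail] at s2
  rw [sub_eq_sub_iff_add_eq_add]
  have hfin := s1.trans s2.symm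
  rw [← add_assoc, ← add_assoc] at hfin
  exact add_right_cancel hfin

include p hidem hsa hsum horth in
lemma diffD (hn : 3 ≤ n) (m : Fin k) {y y' w w' : Fin k → Fin n}
    (hy : ∀ l, l ≠ m → y l = y' l) (hw : ∀ l, l ≠ m → w l = w' l)
    (hym : y m ≠ y' m) (hvm : y m = w m) (hvm' : y' m = w' m) (a : Fin n) :
    p y a - p y' a = p w a - p w' a := by
  choose g hg1 hg2 using fun l => exists_ne_ne hn (y l) (w l)
  set v : Fin k → Fin n := fun l => if l = m then y m else g l with hv
  set v' : Fin k → Fin n := Function.update v m (y' m) with hv'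
  have hvv' : ∀ l, l ≠ m → v l = v' l := by
    intro l hl
    rw [hv', Function.update_apply, if_neg hl]
  have hv_m : v m = y m := by rw [hv]; simp
  have hv'_m : v' m = y' m := by rw [hv', Function.update_apply, if_pos rfl]
  have step1 : p y a - p y' a = p v a - p v' a := by
    refine diffD_aux p hidem hsa hsum horth hn m hy hvv' hym hv_m.symm hv'_m.symm ?_ a
    intro l hl
    rw [hv]
    simp only [if_neg hl]
    exact fun h => (hg1 l) h.symm
  have step2 : p v a - p v' a = p w a - p w' a := by
    refine diffD_aux p hidem hsa hsum horth hn m hvv' hw ?_ ?_ ?_ ?_ a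
    · rw [hv_m, hv'_m]; exact hym
    · rw [hv_m]; exact hvm
    · rw [hv'_m]; exact hvm'
    · intro l hl
      rw [hv]
      simp only [if_neg hl]
      exact hg2 l
  exact step1.trans step2

/-! ### absorption lemmas -/

include p hidem hsa hsum horth in
lemma abs_step (hn : 3 ≤ n) (i : Fin k) (m : Fin k) {u v v' : Fin k → Fin n}
    (huv : Ex i u v) (huv' : Ex i u v') (hd : ∀ l, l ≠ m → v l = v' l) (a : Fin n) :
    p u a * p v a = p u a * p v' a := by
  have h10 : (1 : Fin n) ≠ 0 := fin_one_ne hn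
  by_cases hvm : v m = v' m
  · have hvv' : v = v' := funext fun l => by
      by_cases hl : l = m
      · subst hl; exact hvm
      · exact hd l hl
    rw [hvv']
  · have hmi : m ≠ i := by
      rintro rfl
      exact hvm (huv.1.symm.trans huv'.1)
    set g : Fin k → Fin n := fun l => if l = m then v m else u l + 1 with hg
    set g' : Fin k → Fin n := Function.update g m (v' m) with hg'
    have hgm : g m = v m := by rw [hg]; simp
    have hg'm : g' m = v' m := by rw [hg', Function.update_apply, if_pos rfl]
    have hdiff : p v a - p v' a = p g a - p g' a := by
      refine diffD p hidem hsa hsum horth hn m hd ?_ hvm hgm.symm hg'm.symm a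
      intro l hl
      rw [hg', Function.update_apply, if_neg hl]
    have h1 : p u a * p g a = 0 := by
      refine horth u g a fun l => ?_
      by_cases hl : l = m
      · subst hl; rw [hgm]; exact huv.2 l hmi
      · rw [hg]; simp only [if_neg hl]
        exact fun h => shift_ne (u l) h10 h.symm
    have h2 : p u a * p g' a = 0 := by
      refine horth u g' a fun l => ?_
      by_cases hl : l = m
      · subst hl; rw [hg'm]; exact huv'.2 l hmi
      · rw [hg', Function.update_apply, if_neg hl, hg]
        simp only [if_neg hl]
        exact fun h => shift_ne (u l) h10 h.symm
    have h3 : p u a * p v a - p u a * p v' a = 0 := by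
      rw [← mul_sub, hdiff, mul_sub, h1, h2, sub_zero]
    exact sub_eq_zero.mp h3

include p hidem hsa hsum horth in
lemma abs_step' (hn : 3 ≤ n) (i : Fin k) (m : Fin k) {u v v' : Fin k → Fin n}
    (huv : Ex i u v) (huv' : Ex i u v') (hd : ∀ l, l ≠ m → v l = v' l) (a : Fin n) :
    p v a * p u a = p v' a * p u a := by
  have h10 : (1 : Fin n) ≠ 0 := fin_one_ne hn
  by_cases hvm : v m = v' m
  · have hvv' : v = v' := funext fun l => by
      by_cases hl : l = m
      · subst hl; exact hvm
      · exact hd l hl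
    rw [hvv']
  · have hmi : m ≠ i := by
      rintro rfl
      exact hvm (huv.1.symm.trans huv'.1)
    set g : Fin k → Fin n := fun l => if l = m then v m else u l + 1 with hg
    set g' : Fin k → Fin n := Function.update g m (v' m) with hg'
    have hgm : g m = v m := by rw [hg]; simp
    have hg'm : g' m = v' m := by rw [hg', Function.update_apply, if_pos rfl]
    have hdiff : p v a - p v' a = p g a - p g' a := by
      refine diffD p hidem hsa hsum horth hn m hd ?_ hvm hgm.symm hg'm.symm a
      intro l hl
      rw [hg', Function.update_apply, if_neg hl]
    have h1 : p g a * p u a = 0 := by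
      refine horth g u a fun l => ?_
      by_cases hl : l = m
      · subst hl; rw [hgm]; exact (huv.2 l hmi).symm
      · rw [hg]; simp only [if_neg hl]
        exact fun h => shift_ne (u l) h10 h
    have h2 : p g' a * p u a = 0 := by
      refine horth g' u a fun l => ?_
      by_cases hl : l = m
      · subst hl; rw [hg'm]; exact (huv'.2 l hmi).symm
      · rw [hg', Function.update_apply, if_neg hl, hg]
        simp only [if_neg hl]
        exact fun h => shift_ne (u l) h10 h
    have h3 : p v a * p u a - p v' a * p u a = 0 := by
      rw [← sub_mul, hdiff, sub_mul, h1, h2, sub_zero]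
    exact sub_eq_zero.mp h3

include p hidem hsa hsum horth in
lemma abs_snd (hn : 3 ≤ n) (i : Fin k) {u x y : Fin k → Fin n}
    (hux : Ex i u x) (huy : Ex i u y) (a : Fin n) :
    p u a * p x a = p u a * p y a := by
  set vm : ℕ → Fin k → Fin n := fun t l => if l.val < t then y l else x l with hvmdef
  have hEx : ∀ t, Ex i u (vm t) := by
    intro t
    constructor
    · rw [hvmdef]
      simp only
      split_ifs
      · exact huy.1
      · exact hux.1
    · intro l hl
      rw [hvmdef]
      simp only
      split_ifs
      · exact huy.2 l hl
      · exact hux.2 l hl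
  have hstep : ∀ t, p u a * p (vm t) a = p u a * p (vm (t + 1)) a := by
    intro t
    by_cases ht : t < k
    · refine abs_step p hidem hsa hsum horth hn i ⟨t, ht⟩ (hEx t) (hEx (t + 1))
        (fun l hl => ?_) a
      have hlv : l.val ≠ t := fun hh => hl (Fin.ext hh)
      rw [hvmdef]
      simp only
      by_cases hlt : l.val < t
      · rw [if_pos hlt, if_pos (by omega)]
      · rw [if_neg hlt, if_neg (by omega)]
    · have heq : vm t = vm (t + 1) := funext fun l => by
        have := l.isLt
        rw [hvmdef]
        simp only
        by_cases hlt : l.val < t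
        · rw [if_pos hlt, if_pos (by omega)]
        · rw [if_neg hlt, if_neg (by omega)]
      rw [heq]
  have hiter : ∀ t, p u a * p (vm 0) a = p u a * p (vm t) a := by
    intro t
    induction t with
    | zero => rfl
    | succ s ih => exact ih.trans (hstep s)
  have h0 : vm 0 = x := funext fun l => by rw [hvmdef]; simp
  have hk' : vm k = y := funext fun l => by rw [hvmdef]; simp [l.isLt]
  have := hiter k
  rw [h0, hk'] at this
  exact this

include p hidem hsa hsum horth in
lemma abs_fst (hn : 3 ≤ n) (i : Fin k) {u x y : Fin k → Fin n}
    (hux : Ex i u x) (huy : Ex i u y) (a : Fin n) :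
    p x a * p u a = p y a * p u a := by
  set vm : ℕ → Fin k → Fin n := fun t l => if l.val < t then y l else x l with hvmdef
  have hEx : ∀ t, Ex i u (vm t) := by
    intro t
    constructor
    · rw [hvmdef]
      simp only
      split_ifs
      · exact huy.1
      · exact hux.1
    · intro l hl
      rw [hvmdef]
      simp only
      split_ifs
      · exact huy.2 l hl
      · exact hux.2 l hl
  have hstep : ∀ t, p (vm t) a * p u a = p (vm (t + 1)) a * p u a := by
    intro t
    by_cases ht : t < k
    · refine abs_step' p hidem hsa hsum horth hn i ⟨t, ht⟩ (hEx t) (hEx (t + 1))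
        (fun l hl => ?_) a
      have hlv : l.val ≠ t := fun hh => hl (Fin.ext hh)
      rw [hvmdef]
      simp only
      by_cases hlt : l.val < t
      · rw [if_pos hlt, if_pos (by omega)]
      · rw [if_neg hlt, if_neg (by omega)]
    · have heq : vm t = vm (t + 1) := funext fun l => by
        have := l.isLt
        rw [hvmdef]
        simp only
        by_cases hlt : l.val < t
        · rw [if_pos hlt, if_pos (by omega)]
        · rw [if_neg hlt, if_neg (by omega)]
      rw [heq]
  have hiter : ∀ t, p (vm 0) a * p u a = p (vm t) a * p u a := by
    intro t
    induction t with
    | zero => rfl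
    | succ s ih => exact ih.trans (hstep s)
  have h0 : vm 0 = x := funext fun l => by rw [hvmdef]; simp
  have hk' : vm k = y := funext fun l => by rw [hvmdef]; simp [l.isLt]
  have := hiter k
  rw [h0, hk'] at this
  exact this

/-! ### the T elements -/

include p hidem hsa hsum in
lemma T_mul_right (u v : Fin k → Fin n) (b : Fin n) :
    (∑ a, p u a * p v a) * p v b = p u b * p v b := by
  rw [Finset.sum_mul]
  rw [Finset.sum_eq_single b (fun a _ hab => by
    rw [mul_assoc, orth p hidem hsa hsum v hab, mul_zero]) (by simp)]
  rw [mul_assoc, hidem]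

include p hidem hsa hsum in
lemma T_mul_left (z u : Fin k → Fin n) (b : Fin n) :
    p z b * (∑ a, p z a * p u a) = p z b * p u b := by
  rw [Finset.mul_sum]
  rw [Finset.sum_eq_single b (fun a _ hab => by
    rw [← mul_assoc, orth p hidem hsa hsum z (Ne.symm hab), zero_mul]) (by simp)]
  rw [← mul_assoc, hidem]

include p horth in
lemma T_adj {u v : Fin k → Fin n} (huv : ∀ m, u m ≠ v m) :
    (∑ a, p u a * p v a) = 0 :=
  Finset.sum_eq_zero fun a _ => horth u v a huv

include p hidem hsum in
lemma T_diag (u : Fin k → Fin n) : (∑ a, p u a * p u a) = 1 := by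
  rw [Finset.sum_congr rfl fun a _ => hidem u a]
  exact hsum u

include p hsa in
lemma T_star (u v : Fin k → Fin n) :
    star (∑ a, p u a * p v a) = ∑ a, p v a * p u a := by
  rw [star_sum]
  exact Finset.sum_congr rfl fun a _ => by rw [star_mul, hsa, hsa]

include p hidem hsa hsum horth in
lemma T_congr_snd (hn : 3 ≤ n) (i : Fin k) {u x y : Fin k → Fin n}
    (hux : Ex i u x) (huy : Ex i u y) :
    (∑ a, p u a * p x a) = ∑ a, p u a * p y a :=
  Finset.sum_congr rfl fun a _ => abs_snd p hidem hsa hsum horth hn i hux huy a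

include p hidem hsa hsum horth in
lemma T_congr_fst (hn : 3 ≤ n) (i : Fin k) {u x y : Fin k → Fin n}
    (hux : Ex i u x) (huy : Ex i u y) :
    (∑ a, p x a * p u a) = ∑ a, p y a * p u a :=
  Finset.sum_congr rfl fun a _ => abs_fst p hidem hsa hsum horth hn i hux huy a

include p hidem hsa hsum horth in
lemma T_indep (hn : 3 ≤ n) (j : Fin k) {u v u' v' : Fin k → Fin n}
    (h1 : Ex j u v) (h2 : Ex j u' v') (hval : u j = u' j) :
    (∑ a, p u a * p v a) = ∑ a, p u' a * p v' a := by
  choose g hg1 hg2 using fun l => exists_ne_ne hn (u l) (u' l)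
  set z : Fin k → Fin n := fun l => if l = j then u j else g l with hz
  have hEx1 : Ex j u z := by
    constructor
    · rw [hz]; simp
    · intro l hl
      rw [hz]; simp only [if_neg hl]
      exact fun h => (hg1 l) h.symm
  have hEx2 : Ex j u' z := by
    constructor
    · rw [hz]; simp; exact hval.symm
    · intro l hl
      rw [hz]; simp only [if_neg hl]
      exact fun h => (hg2 l) h.symm
  calc (∑ a, p u a * p v a) = ∑ a, p u a * p z a :=
        T_congr_snd p hidem hsa hsum horth hn j h1 hEx1
    _ = ∑ a, p u' a * p z a :=
        T_congr_fst p hidem hsa hsum horth hn j hEx1.swap hEx2.swap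
    _ = ∑ a, p u' a * p v' a :=
        T_congr_snd p hidem hsa hsum horth hn j hEx2 h2

include p hidem hsa hsum horth in
lemma T_symm (hn : 3 ≤ n) (j : Fin k) {u v : Fin k → Fin n} (h : Ex j u v) :
    (∑ a, p u a * p v a) = ∑ a, p v a * p u a :=
  T_indep p hidem hsa hsum horth hn j h h.swap h.1

include p hidem hsa hsum horth in
lemma L2 (hn : 3 ≤ n) (u : Fin k → Fin n) (j : Fin k) (s : Fin n) (hs : s ≠ 0) :
    (∑ a, p u a * p (fun l => if l = j then u j else u l + s) a)
      + (∑ a, p u a * p (Function.update u j (u j - s)) a) = 1 := by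
  set w : Fin k → Fin n := fun l => if l = j then u j else u l + s with hw
  set cf : Fin n → Fin k → Fin n := fun t l => w l + t with hcf
  have hclique : ∀ t t', t ≠ t' → ∀ m, cf t m ≠ cf t' m := by
    intro t t' htt' m h
    exact htt' (add_left_cancel h)
  have hcol := col_one p hidem hsa hsum horth cf hclique
  have h1 : (1 : A) = ∑ t, ∑ a, p u a * p (cf t) a := by
    calc (1 : A) = ∑ a, p u a := (hsum u).symm
      _ = ∑ a, p u a * (∑ t, p (cf t) a) := by
          refine Finset.sum_congr rfl fun a _ => ?_
          rw [hcol a, mul_one]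
      _ = ∑ a, ∑ t, p u a * p (cf t) a := by
          refine Finset.sum_congr rfl fun a _ => ?_
          rw [Finset.mul_sum]
      _ = ∑ t, ∑ a, p u a * p (cf t) a := Finset.sum_comm
  have hzero : ∀ t, t ≠ 0 → t ≠ -s → (∑ a, p u a * p (cf t) a) = 0 := by
    intro t ht0 hts
    refine T_adj p horth fun m => ?_
    rw [hcf]
    simp only
    by_cases hm : m = j
    · subst hm
      rw [hw]
      simp
      exact fun h => ht0 (by
        have : u m + t = u m + 0 := by simpa using h
        exact add_left_cancel this)
    · rw [hw]
      simp only [if_neg hm]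
      intro h
      rw [add_assoc] at h
      have h2 : s + t = 0 := by
        have : u m + (s + t) = u m + 0 := by simpa using h
        exact add_left_cancel this
      exact hts (by
        have := eq_neg_of_add_eq_zero_right h2
        exact this)
  have h0s : (0 : Fin n) ≠ -s := by
    intro h
    exact hs (by simpa using h.symm)
  rw [sum_two (fun t => ∑ a, p u a * p (cf t) a) 0 (-s) h0s hzero] at h1
  have e0 : cf 0 = w := funext fun l => by rw [hcf]; simp
  have e1 : cf (-s) = Function.update u j (u j - s) := funext fun l => by
    rw [hcf, Function.update_apply]
    simp only
    by_cases hl : l = j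
    · subst hl
      rw [hw]
      simp
      rw [sub_eq_add_neg]
    · rw [hw]
      simp only [if_neg hl]
      rw [add_assoc, add_neg_cancel, add_zero]
  rw [e0, e1] at h1
  exact h1.symm

include p hidem hsa hsum horth in
lemma T_value (hn : 3 ≤ n) (j : Fin k) {u v u' v' : Fin k → Fin n}
    (h1 : Ex j u v) (h2 : Ex j u' v') :
    (∑ a, p u a * p v a) = ∑ a, p u' a * p v' a := by
  by_cases hc : u j = u' j
  · exact T_indep p hidem hsa hsum horth hn j h1 h2 hc
  · set s : Fin n := u j - u' j with hsdef
    have hs : s ≠ 0 := sub_ne_zero.mpr hc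
    set w : Fin k → Fin n := fun l => if l = j then u j else u l + s with hw
    set um : Fin k → Fin n := Function.update u j (u j - s) with hum
    have humj : um j = u' j := by
      rw [hum, Function.update_apply, if_pos rfl, hsdef]
      exact sub_sub_cancel _ _
    have hEx_uw : Ex j u w := by
      constructor
      · rw [hw]; simp
      · intro l hl
        rw [hw]; simp only [if_neg hl]
        exact fun h => shift_ne (u l) hs h.symm
    have e1 := L2 p hidem hsa hsum horth hn u j s hs
    have e1s : (∑ a, p w a * p u a) + (∑ a, p (Function.update u j (u j - s)) a * p u a)
        = 1 := by
      have := congrArg star e1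
      rw [star_add, T_star p hsa, T_star p hsa, star_one] at this
      exact this
    have hsymm : (∑ a, p w a * p u a) = ∑ a, p u a * p w a :=
      (T_symm p hidem hsa hsum horth hn j hEx_uw).symm
    have hs' : (-s) ≠ 0 := neg_ne_zero.mpr hs
    set w2 : Fin k → Fin n := fun l => if l = j then um j else um l + (-s) with hw2
    have e2 := L2 p hidem hsa hsum horth hn um j (-s) hs'
    have hupd : Function.update um j (um j - -s) = u := by
      funext l
      rw [Function.update_apply]
      by_cases hl : l = j
      · subst hl
        rw [if_pos rfl, hum, Function.update_apply, if_pos rfl]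
        rw [sub_neg_eq_add, sub_add_cancel]
      · rw [if_neg hl, hum, Function.update_apply, if_neg hl]
    rw [hupd] at e2
    have key : (∑ a, p u a * p w a) = ∑ a, p um a * p w2 a := by
      have k1 : (∑ a, p u a * p w a) = 1 - (∑ a, p um a * p u a) := by
        rw [← hsymm]
        have : (∑ a, p (Function.update u j (u j - s)) a * p u a) = ∑ a, p um a * p u a := by
          rw [hum]
        rw [this] at e1s
        exact eq_sub_of_add_eq e1s
      have k2 : (∑ a, p um a * p w2 a) = 1 - (∑ a, p um a * p u a) :=
        eq_sub_of_add_eq e2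
      rw [k1, k2]
    have hExw2 : Ex j um w2 := by
      constructor
      · rw [hw2]; simp
      · intro l hl
        rw [hw2]; simp only [if_neg hl]
        exact fun h => shift_ne (um l) hs' h.symm
    calc (∑ a, p u a * p v a) = ∑ a, p u a * p w a :=
          T_indep p hidem hsa hsum horth hn j h1 hEx_uw rfl
      _ = ∑ a, p um a * p w2 a := key
      _ = ∑ a, p u' a * p v' a :=
          T_indep p hidem hsa hsum horth hn j hExw2 h2 humj

end Main
end Stmt7Aux


/-- **Theorem (sn-decomposition, representation-level).** Let `A` be a unital C*-algebra,
`n ≥ 3`, `k ≥ 1`, and `p` a representation of `Mor⁺(K_nᵏ, K_n)`. For each `i` choose a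
pair `X i, Y i` agreeing exactly at the coordinate `i`, and set
`Pr i := Σ_a p (X i) a * p (Y i) a`. Then the `Pr i` form a central PVM, `Pr i * p x a`
depends only on `x i`, and in each corner the elements `Pr i * p x a` satisfy the
defining relations of `S_n⁺ = Mor⁺(K_n, K_n)`. -/
theorem stmt7 {A : Type*} [CStarAlgebra A]
    (n k : ℕ) (hn : 3 ≤ n) (hk : 1 ≤ k)
    (p : (Fin k → Fin n) → Fin n → A)
    (hidem : ∀ x a, p x a * p x a = p x a)
    (hsa : ∀ x a, star (p x a) = p x a)
    (hsum : ∀ x, ∑ a, p x a = 1)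
    (horth : ∀ x y a, (∀ i, x i ≠ y i) → p x a * p y a = 0)
    (X Y : Fin k → (Fin k → Fin n))
    (hXY : ∀ i j, X i j = Y i j ↔ j = i) :
    let Pr : Fin k → A := fun i => ∑ a, p (X i) a * p (Y i) a
    (∀ i, Pr i * Pr i = Pr i ∧ star (Pr i) = Pr i ∧
        ∀ (z : Fin k → Fin n) (b : Fin n), Pr i * p z b = p z b * Pr i) ∧
    (∀ i j, i ≠ j → Pr i * Pr j = 0) ∧
    (∑ i, Pr i = 1) ∧
    (∀ (i : Fin k) (x y : Fin k → Fin n) (a : Fin n),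
        x i = y i → Pr i * p x a = Pr i * p y a) ∧
    (∀ (i : Fin k) (x : Fin k → Fin n), ∑ a, Pr i * p x a = Pr i) ∧
    (∀ (i : Fin k) (x y : Fin k → Fin n) (a : Fin n),
        x i ≠ y i → (Pr i * p x a) * (Pr i * p y a) = 0) := by
  intro Pr
  haveI : NeZero n := ⟨by omega⟩
  have h10 : (1 : Fin n) ≠ 0 := Stmt7Aux.fin_one_ne hn
  have h20 : (1 : Fin n) + 1 ≠ 0 := Stmt7Aux.fin_two_ne hn
  have hEx : ∀ i, Stmt7Aux.Ex i (X i) (Y i) := fun i =>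
    ⟨(hXY i i).mpr rfl, fun l hl h => hl ((hXY i l).mp h)⟩
  have hInst : ∀ (i : Fin k) (u v : Fin k → Fin n), Stmt7Aux.Ex i u v →
      (∑ a, p u a * p v a) = Pr i := by
    intro i u v h
    exact Stmt7Aux.T_value p hidem hsa hsum horth hn i h (hEx i)
  have habsL : ∀ (i : Fin k) (z : Fin k → Fin n) (b : Fin n) (u : Fin k → Fin n),
      Stmt7Aux.Ex i u z → Pr i * p z b = p u b * p z b := by
    intro i z b u h
    rw [← hInst i u z h]
    exact Stmt7Aux.T_mul_right p hidem hsa hsum u z b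
  have habsR : ∀ (i : Fin k) (z : Fin k → Fin n) (b : Fin n) (u : Fin k → Fin n),
      Stmt7Aux.Ex i z u → p z b * Pr i = p z b * p u b := by
    intro i z b u h
    rw [← hInst i z u h]
    exact Stmt7Aux.T_mul_left p hidem hsa hsum z u b
  -- off-diagonal vanishing
  have hoffd : ∀ (i m : Fin k) (z : Fin k → Fin n) (b : Fin n), i ≠ m →
      Pr i * p z b * Pr m = 0 := by
    intro i m z b him
    set u : Fin k → Fin n := fun l => if l = i then z i else z l + 1 with hu
    have hExu : Stmt7Aux.Ex i u z := by
      constructor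
      · rw [hu]; simp
      · intro l hl
        rw [hu]; simp only [if_neg hl]
        exact Stmt7Aux.shift_ne (z l) h10
    set v : Fin k → Fin n := fun l => if l = m then z m else z l + 1 with hv
    have hExzv : Stmt7Aux.Ex m z v := by
      constructor
      · rw [hv]; simp
      · intro l hl
        rw [hv]; simp only [if_neg hl]
        exact fun h => Stmt7Aux.shift_ne (z l) h10 h.symm
    choose g hg1 hg2 using fun l => Stmt7Aux.exists_ne_ne hn (v l) (u l)
    set z' : Fin k → Fin n := fun l => if l = m then z m else g l with hz'
    have hExz'v : Stmt7Aux.Ex m z' v := by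
      constructor
      · rw [hz', hv]; simp
      · intro l hl
        rw [hz']; simp only [if_neg hl]
        exact hg1 l
    have hadj : ∀ l, u l ≠ z' l := by
      intro l
      by_cases hl : l = m
      · have e1 : u m = z m + 1 := by rw [hu]; simp only [if_neg (Ne.symm him)]
        have e2 : z' m = z m := by rw [hz']; simp
        rw [hl, e1, e2]
        exact Stmt7Aux.shift_ne (z m) h10
      · have e2 : z' l = g l := by rw [hz']; simp only [if_neg hl]
        rw [e2]
        exact fun h => hg2 l h.symm
    calc Pr i * p z b * Pr m = (p u b * p z b) * Pr m := by rw [habsL i z b u hExu]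
      _ = p u b * (p z b * Pr m) := by rw [mul_assoc]
      _ = p u b * (p z b * p v b) := by rw [habsR m z b v hExzv]
      _ = p u b * (p z' b * p v b) := by
          rw [Stmt7Aux.abs_fst p hidem hsa hsum horth hn m hExzv.swap hExz'v.swap b]
      _ = (p u b * p z' b) * p v b := by rw [mul_assoc]
      _ = 0 := by rw [horth u z' b hadj, zero_mul]
  -- sum of the Pr equals one
  have hPrsum : ∑ i, Pr i = 1 := by
    set x : Fin k → Fin n := fun _ => 0 with hx
    set am : ℕ → Fin k → Fin n := fun t l => if l.val < t then x l else x l + 1 with ham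
    have key : ∀ t, (∑ a, p x a * p (am t) a)
        = ∑ j ∈ Finset.univ.filter (fun j : Fin k => j.val < t), Pr j := by
      intro t
      induction t with
      | zero =>
        have h1 : (∑ a, p x a * p (am 0) a) = 0 := by
          refine Stmt7Aux.T_adj p horth fun m0 => ?_
          rw [ham]
          simp only [Nat.not_lt_zero, if_neg (by omega : ¬ (m0.val < 0))]
          exact fun h => Stmt7Aux.shift_ne (x m0) h10 h.symm
        have h2 : Finset.univ.filter (fun j : Fin k => j.val < 0) = ∅ := by
          apply Finset.filter_eq_empty_iff.mpr
          intro j _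
          omega
        rw [h1, h2, Finset.sum_empty]
      | succ t ih =>
        by_cases ht : t < k
        · set mt : Fin k := ⟨t, ht⟩ with hmt
          set g : Fin k → Fin n := fun l => if l = mt then x l else x l + (1 + 1) with hgd
          set g' : Fin k → Fin n := Function.update g mt (x mt + 1) with hg'd
          have hgm : g mt = x mt := by rw [hgd]; simp
          have hg'm : g' mt = x mt + 1 := by rw [hg'd, Function.update_apply]; simp
          have hmtv : mt.val = t := rfl
          have hdiff : ∀ a, p (am (t + 1)) a - p (am t) a = p g a - p g' a := by
            intro a
            refine Stmt7Aux.diffD p hidem hsa hsum horth hn mt ?_ ?_ ?_ ?_ ?_ a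
            · intro l hl
              have hlv : l.val ≠ t := fun hh => hl (Fin.ext (by rw [hh, hmtv]))
              rw [ham]
              simp only
              by_cases hlt : l.val < t
              · rw [if_pos (by omega), if_pos hlt]
              · rw [if_neg (by omega), if_neg hlt]
            · intro l hl
              rw [hg'd, Function.update_apply, if_neg hl]
            · rw [ham]
              simp only
              rw [if_pos (by omega), if_neg (by omega)]
              exact fun h => Stmt7Aux.shift_ne (x mt) h10 h.symm
            · rw [ham]
              simp only
              rw [if_pos (by omega), hgm]
            · rw [ham]
              simp only
              rw [if_neg (by omega), hg'm]
          have hTg : (∑ a, p x a * p g a) = Pr mt := by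
            refine hInst mt x g ⟨?_, ?_⟩
            · rw [hgd]; simp
            · intro l hl
              rw [hgd]; simp only [if_neg hl]
              exact fun h => Stmt7Aux.shift_ne (x l) h20 h.symm
          have hTg' : (∑ a, p x a * p g' a) = 0 := by
            refine Stmt7Aux.T_adj p horth fun l => ?_
            by_cases hl : l = mt
            · rw [hl, hg'm]
              exact fun h => Stmt7Aux.shift_ne (x mt) h10 h.symm
            · rw [hg'd, Function.update_apply, if_neg hl, hgd]
              simp only [if_neg hl]
              exact fun h => Stmt7Aux.shift_ne (x l) h20 h.symm
          have hstep : (∑ a, p x a * p (am (t + 1)) a)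
              = (∑ a, p x a * p (am t) a) + Pr mt := by
            have hsub : (∑ a, p x a * p (am (t + 1)) a) - (∑ a, p x a * p (am t) a)
                = (∑ a, p x a * p g a) - (∑ a, p x a * p g' a) := by
              rw [← Finset.sum_sub_distrib, ← Finset.sum_sub_distrib]
              refine Finset.sum_congr rfl fun a _ => ?_
              rw [← mul_sub, ← mul_sub, hdiff a]
            rw [hTg, hTg', sub_zero] at hsub
            have h3 := sub_eq_iff_eq_add.mp hsub
            rw [h3, add_comm]
          have hfil : Finset.univ.filter (fun j : Fin k => j.val < t + 1)
              = insert mt (Finset.univ.filter (fun j : Fin k => j.val < t)) := by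
            ext j
            simp only [Finset.mem_filter, Finset.mem_insert, Finset.mem_univ, true_and]
            constructor
            · intro hj
              by_cases hjt : j.val = t
              · left; exact Fin.ext (by rw [hjt, hmtv])
              · right; omega
            · intro hj
              rcases hj with hj | hj
              · rw [hj, hmtv]; omega
              · omega
          have hnotmem : mt ∉ Finset.univ.filter (fun j : Fin k => j.val < t) := by
            simp only [Finset.mem_filter, Finset.mem_univ, true_and, hmtv]
            omega
          rw [hstep, ih, hfil, Finset.sum_insert hnotmem, add_comm]
        · have h1 : am (t + 1) = am t := funext fun l => by
            have := l.isLt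
            rw [ham]
            simp only
            by_cases hlt : l.val < t
            · rw [if_pos (by omega), if_pos hlt]
            · rw [if_neg (by omega), if_neg hlt]
          have h2 : Finset.univ.filter (fun j : Fin k => j.val < t + 1)
              = Finset.univ.filter (fun j : Fin k => j.val < t) := by
            ext j
            have := j.isLt
            simp only [Finset.mem_filter, Finset.mem_univ, true_and]
            omega
          rw [h1, h2]
          exact ih
    have hfin := key k
    have hall : Finset.univ.filter (fun j : Fin k => j.val < k) = Finset.univ := by
      ext j
      simp [j.isLt]
    have hamk : am k = x := funext fun l => by
      rw [ham]; simp only [if_pos l.isLt]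
    rw [hall, hamk] at hfin
    rw [← hfin]
    exact Stmt7Aux.T_diag p hidem hsum x
  have hPo : ∀ i j, i ≠ j → Pr i * Pr j = 0 := by
    intro i j hij
    have gen : ∀ (q r : A) (f : Fin n → A), q * (∑ b, f b) * r = ∑ b, q * f b * r := by
      intro q r f
      rw [Finset.mul_sum, Finset.sum_mul]
    have h1 : (∑ b, Pr i * p (fun _ => (0 : Fin n)) b * Pr j) = Pr i * Pr j := by
      rw [← gen, hsum, mul_one]
    rw [← h1]
    exact Finset.sum_eq_zero fun b _ => hoffd i j _ b hij
  have hidemPr : ∀ i, Pr i * Pr i = Pr i := by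
    intro i
    have h1 : Pr i * (∑ j, Pr j) = Pr i := by rw [hPrsum, mul_one]
    rw [Finset.mul_sum,
      Finset.sum_eq_single i (fun j _ hj => hPo i j (Ne.symm hj)) (by simp)] at h1
    exact h1
  have hsaPr : ∀ i, star (Pr i) = Pr i := by
    intro i
    have h1 : star (∑ a, p (X i) a * p (Y i) a) = ∑ a, p (Y i) a * p (X i) a :=
      Stmt7Aux.T_star p hsa (X i) (Y i)
    have h2 : (∑ a, p (Y i) a * p (X i) a) = Pr i :=
      hInst i (Y i) (X i) (hEx i).swap
    exact h1.trans h2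
  have hcomm : ∀ (i : Fin k) (z : Fin k → Fin n) (b : Fin n),
      Pr i * p z b = p z b * Pr i := by
    intro i z b
    have h1 : Pr i * p z b = Pr i * p z b * Pr i := by
      conv_lhs => rw [← mul_one (Pr i * p z b)]
      rw [← hPrsum, Finset.mul_sum,
        Finset.sum_eq_single i (fun j _ hj => hoffd i j z b (Ne.symm hj)) (by simp)]
    have h2 : p z b * Pr i = Pr i * p z b * Pr i := by
      conv_lhs => rw [← one_mul (p z b * Pr i)]
      rw [← hPrsum, Finset.sum_mul,
        Finset.sum_eq_single i (fun j _ hj => by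
          rw [← mul_assoc]; exact hoffd j i z b hj) (by simp)]
      rw [← mul_assoc]
    rw [h1, h2]
  have hD : ∀ (i : Fin k) (x y : Fin k → Fin n) (a : Fin n), x i = y i →
      Pr i * p x a = Pr i * p y a := by
    intro i x y a hxy
    choose g hg1 hg2 using fun l => Stmt7Aux.exists_ne_ne hn (x l) (y l)
    set u : Fin k → Fin n := fun l => if l = i then x i else g l with hu
    have hux : Stmt7Aux.Ex i u x := by
      constructor
      · rw [hu]; simp
      · intro l hl
        rw [hu]; simp only [if_neg hl]
        exact fun h => hg1 l h
    have huy : Stmt7Aux.Ex i u y := by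
      constructor
      · rw [hu]; simp [hxy]
      · intro l hl
        rw [hu]; simp only [if_neg hl]
        exact fun h => hg2 l h
    rw [habsL i x a u hux, habsL i y a u huy]
    exact Stmt7Aux.abs_snd p hidem hsa hsum horth hn i hux huy a
  have hE1 : ∀ (i : Fin k) (x : Fin k → Fin n), ∑ a, Pr i * p x a = Pr i := by
    intro i x
    rw [← Finset.mul_sum, hsum, mul_one]
  have hE2 : ∀ (i : Fin k) (x y : Fin k → Fin n) (a : Fin n), x i ≠ y i →
      (Pr i * p x a) * (Pr i * p y a) = 0 := by
    intro i x y a hxy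
    choose g hg1 hg2 using fun l => Stmt7Aux.exists_ne_ne hn (y l) (x l)
    set u' : Fin k → Fin n := fun l => if l = i then y i else g l with hu'
    have hu'y : Stmt7Aux.Ex i u' y := by
      constructor
      · rw [hu']; simp
      · intro l hl
        rw [hu']; simp only [if_neg hl]
        exact fun h => hg1 l h
    have hadj : ∀ l, x l ≠ u' l := by
      intro l
      by_cases hl : l = i
      · have e1 : u' i = y i := by rw [hu']; simp
        rw [hl, e1]
        exact hxy
      · have e1 : u' l = g l := by rw [hu']; simp only [if_neg hl]
        rw [e1]
        exact fun h => hg2 l h.symm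
    rw [habsL i y a u' hu'y]
    calc (Pr i * p x a) * (p u' a * p y a)
        = Pr i * (p x a * p u' a * p y a) := by
          rw [mul_assoc (Pr i) (p x a), ← mul_assoc (p x a)]
      _ = 0 := by rw [horth x u' a hadj, zero_mul, mul_zero]
  exact ⟨fun i => ⟨hidemPr i, hsaPr i, fun z b => hcomm i z b⟩, hPo, hPrsum, hD, hE1, hE2⟩
end

section
/- For every n ≥ 1 and every matrix X ∈ M_n(ℂ), there exists a unitary matrix U ∈ M_n(ℂ) such that ‖X − U‖_F ≤ ‖XᴴX − 1‖_F, where ‖·‖_F is the Frobenius norm and Xᴴ is the conjugate transpose. -/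
open scoped ComplexOrder
open Matrix

noncomputable def frobNorm {n : ℕ} (M : Matrix (Fin n) (Fin n) ℂ) : ℝ :=
  Real.sqrt (∑ i, ∑ j, ‖M i j‖ ^ 2)

lemma frob_eq_trace {n : ℕ} (M : Matrix (Fin n) (Fin n) ℂ) :
    ∑ i, ∑ j, ‖M i j‖ ^ 2 = (Matrix.trace (M * Mᴴ)).re := by
  simp only [Matrix.trace, Matrix.diag, Matrix.mul_apply, Matrix.conjTranspose_apply,
    Complex.re_sum]
  refine Finset.sum_congr rfl fun i _ => Finset.sum_congr rfl fun j _ => ?_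
  rw [show star (M i j) = (starRingEnd ℂ) (M i j) from rfl, Complex.mul_conj,
    Complex.ofReal_re, Complex.sq_norm]

lemma frob_mul_right {n : ℕ} (M Q : Matrix (Fin n) (Fin n) ℂ) (hQ : Q * Qᴴ = 1) :
    frobNorm (M * Q) = frobNorm M := by
  unfold frobNorm
  rw [frob_eq_trace, frob_eq_trace (M := M)]
  congr 2
  rw [Matrix.conjTranspose_mul, show M * Q * (Qᴴ * Mᴴ) = M * (Q * Qᴴ) * Mᴴ by simp [mul_assoc],
    hQ, mul_one]

lemma frob_mul_left {n : ℕ} (M Q : Matrix (Fin n) (Fin n) ℂ) (hQ : Qᴴ * Q = 1) :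
    frobNorm (Q * M) = frobNorm M := by
  unfold frobNorm
  rw [frob_eq_trace, frob_eq_trace (M := M)]
  congr 2
  rw [Matrix.conjTranspose_mul, show Q * M * (Mᴴ * Qᴴ) = Q * (M * Mᴴ) * Qᴴ by simp [mul_assoc],
    Matrix.trace_mul_comm, ← mul_assoc, hQ, one_mul]

/-- **Lemma (fd-rounding (i), Frobenius form).** For every `n ≥ 1` and every
`X ∈ Mₙ(ℂ)` there is a unitary `U` with `‖X − U‖_F ≤ ‖XᴴX − 1‖_F`. -/
theorem stmt8 (n : ℕ) (hn : 1 ≤ n) (X : Matrix (Fin n) (Fin n) ℂ) :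
    ∃ U : Matrix (Fin n) (Fin n) ℂ,
      U ∈ unitary (Matrix (Fin n) (Fin n) ℂ) ∧
      frobNorm (X - U) ≤ frobNorm (X.conjTranspose * X - 1) := by
  have hA : (Xᴴ * X).IsHermitian := Matrix.isHermitian_conjTranspose_mul_self X
  have hpsd : (Xᴴ * X).PosSemidef := Matrix.posSemidef_conjTranspose_mul_self X
  set d : Fin n → ℝ := hA.eigenvalues with hd_def
  have hd : ∀ j, 0 ≤ d j := fun j => hpsd.eigenvalues_nonneg j
  set V : Matrix (Fin n) (Fin n) ℂ := (hA.eigenvectorUnitary : Matrix (Fin n) (Fin n) ℂ)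
    with hV_def
  have hV1 : Vᴴ * V = 1 := by
    rw [← Matrix.star_eq_conjTranspose]
    exact Matrix.mem_unitaryGroup_iff'.mp (hA.eigenvectorUnitary).2
  have hV2 : V * Vᴴ = 1 := by
    rw [← Matrix.star_eq_conjTranspose]
    exact Matrix.mem_unitaryGroup_iff.mp (hA.eigenvectorUnitary).2
  set D : Matrix (Fin n) (Fin n) ℂ := Matrix.diagonal (fun j => (d j : ℂ)) with hD_def
  have hspec : Xᴴ * X = V * D * Vᴴ := by
    have h := hA.spectral_theorem
    rw [h]
    rfl
  set Y : Matrix (Fin n) (Fin n) ℂ := X * V with hY_def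
  have hYY : Yᴴ * Y = D := by
    rw [hY_def, Matrix.conjTranspose_mul, mul_assoc, ← mul_assoc Xᴴ, hspec]
    rw [show Vᴴ * (V * D * Vᴴ * V) = (Vᴴ * V) * D * (Vᴴ * V) by simp [mul_assoc], hV1]
    simp
  -- columns of Y
  set c : Fin n → EuclideanSpace ℂ (Fin n) := fun j => (WithLp.equiv 2 _).symm (fun i => Y i j)
    with hc_def
  have hinner : ∀ j k, (inner ℂ (c j) (c k) : ℂ) = D j k := by
    intro j k
    rw [← hYY]
    simp [hc_def, PiLp.inner_apply, Matrix.mul_apply, Matrix.conjTranspose_apply, mul_comm]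
  set v : Fin n → EuclideanSpace ℂ (Fin n) :=
    fun j => ((Real.sqrt (d j) : ℂ)⁻¹) • c j with hv_def
  have hortho : Orthonormal ℂ (Set.restrict {j | d j ≠ 0} v) := by
    rw [orthonormal_iff_ite]
    rintro ⟨j, hj⟩ ⟨k, hk⟩
    simp only [Set.restrict, Set.restrict_apply, hv_def, inner_smul_left, inner_smul_right, hinner,
      map_inv₀, Complex.conj_ofReal]
    rw [hD_def]
    by_cases hjk : j = k
    · subst hjk
      have h1 : Real.sqrt (d j) ≠ 0 := by
        refine Real.sqrt_ne_zero'.mpr ?_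
        exact lt_of_le_of_ne (hd j) (Ne.symm hj)
      have h2 : (Real.sqrt (d j) : ℝ) * Real.sqrt (d j) = d j := Real.mul_self_sqrt (hd j)
      simp only [Matrix.diagonal_apply_eq, if_pos rfl]
      have h1' : (Real.sqrt (d j) : ℂ) ≠ 0 := by exact_mod_cast h1
      field_simp
      rw [if_pos trivial, mul_one, ← Complex.ofReal_pow, Real.sq_sqrt (hd j)]
    · rw [Matrix.diagonal_apply_ne _ hjk]
      simp [hjk, Subtype.mk.injEq]
  have hcard : Module.finrank ℂ (EuclideanSpace ℂ (Fin n)) = Fintype.card (Fin n) := by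
    simp
  obtain ⟨b, hb⟩ := hortho.exists_orthonormalBasis_extension_of_card_eq hcard
  set W : Matrix (Fin n) (Fin n) ℂ := Matrix.of (fun i j => (b j : EuclideanSpace ℂ (Fin n)) i)
    with hW_def
  have hW1 : Wᴴ * W = 1 := by
    ext j k
    have := (orthonormal_iff_ite.mp b.orthonormal) j k
    simp only [PiLp.inner_apply] at this
    simp only [Matrix.mul_apply, Matrix.conjTranspose_apply, hW_def, Matrix.of_apply,
      Matrix.one_apply]
    rw [← this]
    exact Finset.sum_congr rfl fun i _ => by simp [mul_comm]
  have hW2 : W * Wᴴ = 1 := mul_eq_one_comm.mp hW1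
  refine ⟨W * Vᴴ, ?_, ?_⟩
  · rw [Unitary.mem_iff]
    constructor
    · rw [Matrix.star_eq_conjTranspose, Matrix.conjTranspose_mul, Matrix.conjTranspose_conjTranspose,
        show V * Wᴴ * (W * Vᴴ) = V * (Wᴴ * W) * Vᴴ by simp [mul_assoc], hW1]
      simpa using hV2
    · rw [Matrix.star_eq_conjTranspose, Matrix.conjTranspose_mul, Matrix.conjTranspose_conjTranspose,
        show W * Vᴴ * (V * Wᴴ) = W * (Vᴴ * V) * Wᴴ by simp [mul_assoc], hV1]
      simpa using hW2
  · -- norm inequality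
    have hXU : X - W * Vᴴ = (Y - W) * Vᴴ := by
      rw [Matrix.sub_mul, hY_def, mul_assoc, hV2, mul_one]
    have hRHS : Xᴴ * X - 1 = V * (D - 1) * Vᴴ := by
      rw [Matrix.mul_sub, Matrix.sub_mul, mul_one, hspec, hV2]
    rw [hXU, hRHS, frob_mul_right _ _ (by simpa using hV1),
      frob_mul_right _ _ (by simpa using hV1), frob_mul_left _ _ hV1]
    -- now: frobNorm (Y - W) ≤ frobNorm (D - 1)
    unfold frobNorm
    apply Real.sqrt_le_sqrt
    rw [Finset.sum_comm]
    have key : ∀ (M : Matrix (Fin n) (Fin n) ℂ) j, ((Mᴴ * M) j j).re = ∑ i, ‖M i j‖ ^ 2 := by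
      intro M j
      simp only [Matrix.mul_apply, Matrix.conjTranspose_apply, Complex.re_sum]
      refine Finset.sum_congr rfl fun i _ => ?_
      rw [show star (M i j) = (starRingEnd ℂ) (M i j) from rfl, mul_comm, Complex.mul_conj,
        Complex.ofReal_re, Complex.sq_norm]
    have hsum : ∀ j, ∑ i, ‖Y i j‖ ^ 2 = d j := by
      intro j
      rw [← key, hYY, hD_def]
      simp
    have hcol : ∀ j, ∑ i, ‖(Y - W) i j‖ ^ 2 = (Real.sqrt (d j) - 1) ^ 2 := by
      intro j
      by_cases hj : d j = 0
      · -- Y's j-th column is zero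
        have hzero : ∀ i, Y i j = 0 := by
          intro i
          have h0 : ∑ i, ‖Y i j‖ ^ 2 = 0 := by rw [hsum j, hj]
          have := (Finset.sum_eq_zero_iff_of_nonneg (fun i _ => sq_nonneg ‖Y i j‖)).mp h0
            i (Finset.mem_univ i)
          simpa using this
        have hWnorm : ∑ i, ‖W i j‖ ^ 2 = 1 := by
          have hb1 : (inner ℂ (b j) (b j) : ℂ) = 1 := by
            have := (orthonormal_iff_ite.mp b.orthonormal) j j
            simpa using this
          rw [PiLp.inner_apply] at hb1
          have hre := congrArg Complex.re hb1
          rw [Complex.re_sum, Complex.one_re] at hre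
          rw [← hre]
          refine Finset.sum_congr rfl fun i _ => ?_
          rw [hW_def]
          simp only [Matrix.of_apply, RCLike.inner_apply]
          rw [Complex.mul_conj, Complex.ofReal_re,
            Complex.sq_norm]
        rw [hj, Real.sqrt_zero]
        calc ∑ i, ‖(Y - W) i j‖ ^ 2 = ∑ i, ‖W i j‖ ^ 2 := by
              refine Finset.sum_congr rfl fun i _ => ?_
              rw [Matrix.sub_apply, hzero i, zero_sub, norm_neg]
          _ = (0 - 1 : ℝ) ^ 2 := by rw [hWnorm]; norm_num
      · -- d j ≠ 0
        have hbj : b j = v j := hb j hj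
        have hW_eq : ∀ i, W i j = ((Real.sqrt (d j) : ℂ))⁻¹ * Y i j := by
          intro i
          rw [hW_def]
          simp only [Matrix.of_apply]
          rw [hbj, hv_def]
          rfl
        have h1 : Real.sqrt (d j) ≠ 0 :=
          Real.sqrt_ne_zero'.mpr (lt_of_le_of_ne (hd j) (Ne.symm hj))
        have h2 : Real.sqrt (d j) * Real.sqrt (d j) = d j := Real.mul_self_sqrt (hd j)
        have hentry : ∀ i, ‖(Y - W) i j‖ ^ 2 = (1 - (Real.sqrt (d j))⁻¹) ^ 2 * ‖Y i j‖ ^ 2 := by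
          intro i
          rw [Matrix.sub_apply, hW_eq i, show Y i j - ((Real.sqrt (d j) : ℂ))⁻¹ * Y i j
            = ((1 - (Real.sqrt (d j))⁻¹ : ℝ) : ℂ) * Y i j by push_cast; ring]
          rw [norm_mul, mul_pow, Complex.norm_real, Real.norm_eq_abs, sq_abs]
        calc ∑ i, ‖(Y - W) i j‖ ^ 2
            = (1 - (Real.sqrt (d j))⁻¹) ^ 2 * ∑ i, ‖Y i j‖ ^ 2 := by
              rw [Finset.mul_sum]; exact Finset.sum_congr rfl fun i _ => hentry i
          _ = (1 - (Real.sqrt (d j))⁻¹) ^ 2 * d j := by rw [hsum j]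
          _ = (Real.sqrt (d j) - 1) ^ 2 := by
              have h3 : (1 - (Real.sqrt (d j))⁻¹) * Real.sqrt (d j)
                  = Real.sqrt (d j) - 1 := by
                rw [sub_mul, one_mul, inv_mul_cancel₀ h1]
              have h4 := congrArg (fun x : ℝ => x ^ 2) h3
              nlinarith [h2, h4, sq_nonneg (1 - (Real.sqrt (d j))⁻¹)]
    have hdiag : ∀ i, ∑ j, ‖(D - 1) i j‖ ^ 2 = (d i - 1) ^ 2 := by
      intro i
      rw [Finset.sum_eq_single i]
      · rw [hD_def, Matrix.sub_apply, Matrix.diagonal_apply_eq, Matrix.one_apply_eq,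
          show ((d i : ℂ) - 1) = ((d i - 1 : ℝ) : ℂ) by push_cast; ring,
          Complex.norm_real, Real.norm_eq_abs, sq_abs]
      · intro j _ hj
        rw [hD_def, Matrix.sub_apply, Matrix.diagonal_apply_ne _ (Ne.symm hj),
          Matrix.one_apply_ne (Ne.symm hj)]
        simp
      · intro h; exact absurd (Finset.mem_univ i) h
    calc ∑ j, ∑ i, ‖(Y - W) i j‖ ^ 2 = ∑ j, (Real.sqrt (d j) - 1) ^ 2 := by
          exact Finset.sum_congr rfl fun j _ => hcol j
      _ ≤ ∑ j, (d j - 1) ^ 2 := by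
          refine Finset.sum_le_sum fun j _ => ?_
          have h2 : Real.sqrt (d j) ^ 2 = d j := Real.sq_sqrt (hd j)
          have h3 : 0 ≤ Real.sqrt (d j) := Real.sqrt_nonneg _
          nlinarith [sq_nonneg (Real.sqrt (d j) - 1), sq_nonneg (Real.sqrt (d j) + 1)]
      _ = ∑ i, ∑ j, ‖(D - 1) i j‖ ^ 2 := by
          exact (Finset.sum_congr rfl fun i _ => hdiag i).symm
end

section
/- For every n ≥ 1, every unitary matrix U ∈ M_n(ℂ), and every integer d ≥ 1, there exists a unitary matrix W ∈ M_n(ℂ) with W^d = 1 such that ‖U − W‖_F ≤ ‖U^d − 1‖_F, where ‖·‖_F is the Frobenius norm. -/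
open Real Complex

lemma abs_exp_mul_I_sub_one (x : ℝ) :
    ‖Complex.exp (x * Complex.I) - 1‖ = 2 * |Real.sin (x / 2)| := by
  have hsq : ‖Complex.exp (x * Complex.I) - 1‖ ^ 2 = (2 * |Real.sin (x / 2)|) ^ 2 := by
    rw [Complex.sq_norm, Complex.normSq_apply]
    simp only [Complex.exp_mul_I, Complex.sub_re, Complex.add_re, Complex.mul_re,
      Complex.I_re, Complex.I_im, Complex.sub_im, Complex.add_im, Complex.mul_im,
      Complex.one_re, Complex.one_im, Complex.cos_ofReal_re, Complex.cos_ofReal_im,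
      Complex.sin_ofReal_re, Complex.sin_ofReal_im]
    have h := Real.sin_sq_eq_half_sub (x / 2)
    have h2 : 2 * (x / 2) = x := by ring
    rw [h2] at h
    have := Real.sin_sq_add_cos_sq x
    have habs : |Real.sin (x/2)| ^ 2 = Real.sin (x/2) ^ 2 := sq_abs _
    nlinarith
  have h1 : (0:ℝ) ≤ ‖Complex.exp (x * Complex.I) - 1‖ := norm_nonneg _
  have h2 : (0:ℝ) ≤ 2 * |Real.sin (x / 2)| := by positivity
  nlinarith


lemma sin_half_le (d : ℕ) (hd : 1 ≤ d) (φ : ℝ) (hφ : |φ| ≤ π / d) :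
    |Real.sin (φ / 2)| ≤ |Real.sin (d * φ / 2)| := by
  have hd0 : (0:ℝ) < d := by exact_mod_cast hd
  have hπ := Real.pi_pos
  rw [Real.abs_sin_half, Real.abs_sin_half]
  apply Real.sqrt_le_sqrt
  have hcos : Real.cos (d * φ) ≤ Real.cos φ := by
    have h1 : Real.cos φ = Real.cos |φ| := (Real.cos_abs φ).symm
    have h2 : Real.cos (d * φ) = Real.cos (d * |φ|) := by
      rcases abs_choice φ with h | h
      · rw [h]
      · rw [h]; rw [mul_neg, Real.cos_neg]
    rw [h1, h2]
    apply Real.cos_le_cos_of_nonneg_of_le_pi (abs_nonneg _)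
    · calc (d:ℝ) * |φ| ≤ d * (π / d) := by
            exact mul_le_mul_of_nonneg_left hφ hd0.le
        _ = π := by field_simp
    · have hd1 : (1:ℝ) ≤ d := by exact_mod_cast hd
      nlinarith [abs_nonneg φ]
  linarith

lemma round_root (d : ℕ) (hd : 1 ≤ d) (z : ℂ) (hz : ‖z‖ = 1) :
    ∃ ω : ℂ, ω ^ d = 1 ∧ ‖z - ω‖ ≤ ‖z ^ d - 1‖ := by
  have hπ := Real.pi_pos
  have hd0 : (0:ℝ) < d := by exact_mod_cast hd
  set θ := Complex.arg z with hθ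
  have hzexp : z = Complex.exp (θ * Complex.I) := by
    conv_lhs => rw [← Complex.norm_mul_exp_arg_mul_I z]
    rw [hz]
    simp
    rfl
  set k : ℤ := round (d * θ / (2 * π)) with hk
  set α : ℝ := 2 * π * k / d with hα
  set φ : ℝ := θ - α with hφdef
  have hφ : |φ| ≤ π / d := by
    have h1 : |d * θ / (2 * π) - k| ≤ 1 / 2 := abs_sub_round _
    have h2 : φ = (2 * π / d) * (d * θ / (2 * π) - k) := by
      field_simp [hφdef, hα]
      rw [hφdef, hα, sub_mul, div_mul_cancel₀ _ hd0.ne']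
      ring
    rw [h2, abs_mul, abs_of_pos (by positivity : (0:ℝ) < 2 * π / d)]
    calc 2 * π / d * |d * θ / (2 * π) - k| ≤ 2 * π / d * (1/2) :=
          mul_le_mul_of_nonneg_left h1 (by positivity)
      _ = π / d := by ring
  have hdC : (d:ℂ) ≠ 0 := by exact_mod_cast hd0.ne'
  refine ⟨Complex.exp (α * Complex.I), ?_, ?_⟩
  · rw [← Complex.exp_nat_mul]
    have : (d : ℂ) * (α * Complex.I) = (k : ℂ) * (2 * π * Complex.I) := by
      push_cast [hα]
      field_simp
    rw [this, Complex.exp_int_mul_two_pi_mul_I]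
  · have hz1 : z - Complex.exp (α * Complex.I)
        = Complex.exp (α * Complex.I) * (Complex.exp (φ * Complex.I) - 1) := by
      rw [hzexp, mul_sub, mul_one, ← Complex.exp_add]
      congr 1
      push_cast [hφdef]
      ring
    have hz2 : z ^ d - 1 = Complex.exp ((d * φ : ℝ) * Complex.I) - 1 := by
      rw [hzexp, ← Complex.exp_nat_mul]
      congr 1
      have : (d:ℂ) * (θ * Complex.I) = ((d * φ : ℝ) : ℂ) * Complex.I
          + (k : ℂ) * (2 * π * Complex.I) := by
        push_cast [hφdef, hα]
        field_simp
        ring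
      rw [this, Complex.exp_add, Complex.exp_int_mul_two_pi_mul_I, mul_one]
    rw [hz1, hz2, norm_mul, Complex.norm_exp_ofReal_mul_I, one_mul,
      abs_exp_mul_I_sub_one, abs_exp_mul_I_sub_one]
    have := sin_half_le d hd φ hφ
    linarith

open scoped Matrix.Norms.L2Operator

noncomputable instance matCStar (n : ℕ) : CStarAlgebra (Matrix (Fin n) (Fin n) ℂ) :=
  { Matrix.instL2OpNormedRing, Matrix.instL2OpNormedAlgebra (𝕜 := ℂ),
    Matrix.instCStarRing, (inferInstance : StarRing (Matrix (Fin n) (Fin n) ℂ)),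
    (inferInstance : StarModule ℂ (Matrix (Fin n) (Fin n) ℂ)),
    (FiniteDimensional.complete ℂ (Matrix (Fin n) (Fin n) ℂ) :
      CompleteSpace (Matrix (Fin n) (Fin n) ℂ)) with }

lemma trace_star_mul_self {n : ℕ} (M : Matrix (Fin n) (Fin n) ℂ) :
    ((star M * M).trace).re = ∑ i, ∑ j, ‖M i j‖ ^ 2 := by
  have h : (star M * M).trace = ∑ j, ∑ i, ((‖M i j‖ : ℂ) ^ 2) := by
    rw [Matrix.trace, Matrix.star_eq_conjTranspose]
    apply Finset.sum_congr rfl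
    intro j _
    rw [Matrix.diag_apply, Matrix.mul_apply]
    apply Finset.sum_congr rfl
    intro i _
    rw [Matrix.conjTranspose_apply, Complex.star_def, mul_comm, Complex.mul_conj, Complex.normSq_eq_norm_sq]
    push_cast
    ring
  rw [h]
  simp only [Complex.re_sum, ← Complex.ofReal_pow, Complex.ofReal_re]
  exact Finset.sum_comm

/-- **Lemma (fd-rounding (ii), Frobenius form).** For every `n ≥ 1`, every unitary
`U ∈ Mₙ(ℂ)`, and every integer `d ≥ 1`, there is an order-`d` unitary `W` (i.e.
`W^d = 1`) with `‖U − W‖_F ≤ ‖U^d − 1‖_F`. -/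
theorem stmt9 (n : ℕ) (hn : 1 ≤ n) (U : Matrix (Fin n) (Fin n) ℂ)
    (hU : U ∈ unitary (Matrix (Fin n) (Fin n) ℂ)) (d : ℕ) (hd : 1 ≤ d) :
    ∃ W : Matrix (Fin n) (Fin n) ℂ,
      W ∈ unitary (Matrix (Fin n) (Fin n) ℂ) ∧ W ^ d = 1 ∧
      frobNorm (U - W) ≤ frobNorm (U ^ d - 1) := by
  classical
  haveI : IsStarNormal U := ⟨by rw [Commute, SemiconjBy, hU.1, hU.2]⟩
  have hfin := Matrix.finite_spectrum U
  have hc : ∀ g : ℂ → ℂ, ContinuousOn g (spectrum ℂ U) := fun g => hfin.continuousOn g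
  have hsub : spectrum ℂ U ⊆ Metric.sphere 0 1 := spectrum.subset_circle_of_unitary hU
  set f : ℂ → ℂ := fun z => if h : ‖z‖ = 1 then (round_root d hd z h).choose else 1 with hf
  have hfspec : ∀ z ∈ spectrum ℂ U, f z ^ d = 1 ∧ ‖z - f z‖ ≤ ‖z ^ d - 1‖ := by
    intro z hz
    have h1 : ‖z‖ = 1 := by
      have := hsub hz
      rwa [mem_sphere_iff_norm, sub_zero] at this
    have : f z = (round_root d hd z h1).choose := by rw [hf]; simp [h1]
    rw [this]
    exact (round_root d hd z h1).choose_spec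
  have hfone : ∀ z ∈ spectrum ℂ U, star (f z) * f z = 1 := by
    intro z hz
    have h2 := (hfspec z hz).1
    have hn1 : ‖f z‖₊ = 1 := by
      have : ‖f z‖₊ ^ d = 1 := by rw [← nnnorm_pow, h2, nnnorm_one]
      exact (pow_eq_one_iff_of_nonneg zero_le (Nat.one_le_iff_ne_zero.mp hd)).mp this
    have hn2 : ‖f z‖ = 1 := by
      have := congrArg (fun x : NNReal => (x : ℝ)) hn1
      simpa [coe_nnnorm] using this
    rw [Complex.star_def, mul_comm, Complex.mul_conj, Complex.normSq_eq_norm_sq, hn2]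
    norm_num
  set W : Matrix (Fin n) (Fin n) ℂ := cfc f U with hW
  have hWstar : star W * W = 1 :=
    calc star W * W = cfc (fun z => star (f z) * f z) U := by
          rw [hW, cfc_mul _ _ U (hc _) (hc _), cfc_star]
      _ = cfc (fun _ : ℂ => (1 : ℂ)) U := cfc_congr (fun z hz => hfone z hz)
      _ = 1 := cfc_const_one ℂ U
  have hWstar' : W * star W = 1 :=
    calc W * star W = cfc (fun z => f z * star (f z)) U := by
          rw [hW, cfc_mul _ _ U (hc _) (hc _), cfc_star]
      _ = cfc (fun _ : ℂ => (1 : ℂ)) U :=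
          cfc_congr (fun z hz => by rw [mul_comm]; exact hfone z hz)
      _ = 1 := cfc_const_one ℂ U
  have hWd : W ^ d = 1 :=
    calc W ^ d = cfc (fun z => f z ^ d) U := (cfc_pow f d U (hc _)).symm
      _ = cfc (fun _ : ℂ => (1 : ℂ)) U := cfc_congr (fun z hz => (hfspec z hz).1)
      _ = 1 := cfc_const_one ℂ U
  refine ⟨W, ⟨hWstar, hWstar'⟩, hWd, ?_⟩
  have hA : cfc (fun z : ℂ => z - f z) U = U - W := by
    rw [cfc_sub _ _ U (hc _) (hc _), cfc_id' ℂ U]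
  have hB : cfc (fun z : ℂ => z ^ d - 1) U = U ^ d - 1 := by
    rw [cfc_sub _ _ U (hc _) (hc _), cfc_pow_id U d, cfc_const_one ℂ U]
  set p : ℂ → ℝ := fun z => ‖z ^ d - 1‖ ^ 2 - ‖z - f z‖ ^ 2 with hp
  set c : Matrix (Fin n) (Fin n) ℂ := cfc (fun z => ((Real.sqrt (p z) : ℝ) : ℂ)) U with hcdef
  have hstarmul : ∀ w : ℂ, star w * w = ((‖w‖ ^ 2 : ℝ) : ℂ) := by
    intro w
    rw [Complex.star_def, mul_comm, Complex.mul_conj, Complex.normSq_eq_norm_sq]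
  have e1 : star (U ^ d - 1) * (U ^ d - 1)
      = cfc (fun z : ℂ => star (z ^ d - 1) * (z ^ d - 1)) U := by
    rw [cfc_mul _ _ U (hc _) (hc _), cfc_star, hB]
  have e2 : star (U - W) * (U - W)
      = cfc (fun z : ℂ => star (z - f z) * (z - f z)) U := by
    rw [cfc_mul _ _ U (hc _) (hc _), cfc_star, hA]
  have e3 : star c * c
      = cfc (fun z : ℂ => star ((Real.sqrt (p z) : ℝ) : ℂ) * ((Real.sqrt (p z) : ℝ) : ℂ)) U := by
    rw [hcdef, cfc_mul _ _ U (hc _) (hc _), cfc_star]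
  have key : star (U ^ d - 1) * (U ^ d - 1) - star (U - W) * (U - W) = star c * c := by
    rw [e1, e2, e3, ← cfc_sub _ _ U (hc _) (hc _)]
    apply cfc_congr
    intro z hz
    have hple : 0 ≤ p z := by
      have h2 := (hfspec z hz).2
      have h3 := norm_nonneg (z - f z)
      show (0:ℝ) ≤ ‖z ^ d - 1‖ ^ 2 - ‖z - f z‖ ^ 2
      nlinarith
    show star (z ^ d - 1) * (z ^ d - 1) - star (z - f z) * (z - f z)
        = star ((Real.sqrt (p z) : ℝ) : ℂ) * ((Real.sqrt (p z) : ℝ) : ℂ)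
    rw [hstarmul, hstarmul, hstarmul]
    rw [Complex.norm_real, Real.norm_eq_abs, _root_.abs_of_nonneg (Real.sqrt_nonneg _),
      Real.sq_sqrt hple, ← Complex.ofReal_sub]
  have htr := congrArg (fun X : Matrix (Fin n) (Fin n) ℂ => (Matrix.trace X).re) key
  simp only [Matrix.trace_sub, Complex.sub_re] at htr
  have hcpos : 0 ≤ (Matrix.trace (star c * c)).re := by
    rw [trace_star_mul_self]
    positivity
  rw [show frobNorm (U - W) = Real.sqrt ((Matrix.trace (star (U - W) * (U - W))).re) from
      by rw [frobNorm, trace_star_mul_self],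
    show frobNorm (U ^ d - 1) = Real.sqrt ((Matrix.trace (star (U ^ d - 1) * (U ^ d - 1))).re) from
      by rw [frobNorm, trace_star_mul_self]]
  apply Real.sqrt_le_sqrt
  linarith
end

section
/- Let A be a unital C*-algebra and τ a tracial state on A. Then for all N ≥ 1, all a₁, …, a_N ∈ A, and all b ∈ A: ‖[a₁a₂⋯a_N, b]‖_τ² ≤ 2N · Σ_{i=1}^{N} (Π_{j ≠ i} ‖a_j‖²) · ‖[a_i, b]‖_τ², where ‖·‖ is the C*-norm, [x, y] := xy − yx, and ‖x‖_τ² := τ(x*x). -/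
section aux
variable {A : Type*} [CStarAlgebra A] (τ : A →ₗ[ℂ] ℂ)
variable {A : Type*} [CStarAlgebra A] (τ : A →ₗ[ℂ] ℂ)

private lemma tau_conj_le
    (hpos : ∀ x : A, 0 ≤ (τ (star x * x)).re ∧ (τ (star x * x)).im = 0)
    (c y : A) :
    (τ (star y * (star c * c) * y)).re ≤ ‖c‖ ^ 2 * (τ (star y * y)).re := by
  letI := CStarAlgebra.spectralOrder A
  haveI := CStarAlgebra.spectralOrderedRing A
  have tau_re_nonneg : ∀ z : A, 0 ≤ z → 0 ≤ (τ z).re := by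
    intro z hz
    have h1 : CFC.sqrt z * CFC.sqrt z = z := CFC.sqrt_mul_sqrt_self z hz
    have h2 : star (CFC.sqrt z) = CFC.sqrt z :=
      (IsSelfAdjoint.of_nonneg (CFC.sqrt_nonneg (a := z))).star_eq
    have := (hpos (CFC.sqrt z)).1
    rwa [h2, h1] at this
  have hle : star y * (star c * c) * y ≤ ‖star c * c‖ • (star y * y) :=
    CStarAlgebra.star_left_conjugate_le_norm_smul (IsSelfAdjoint.star_mul_self c)
  have h := tau_re_nonneg _ (sub_nonneg.mpr hle)
  rw [map_sub, Complex.sub_re, LinearMap.map_smul_of_tower, Complex.smul_re,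
    CStarRing.norm_star_mul_self] at h
  rw [smul_eq_mul] at h; nlinarith [norm_nonneg c]

private lemma q_left
    (hpos : ∀ x : A, 0 ≤ (τ (star x * x)).re ∧ (τ (star x * x)).im = 0)
    (c x : A) :
    (τ (star (c * x) * (c * x))).re ≤ ‖c‖ ^ 2 * (τ (star x * x)).re := by
  have h : star (c * x) * (c * x) = star x * (star c * c) * x := by
    simp [star_mul, mul_assoc]
  rw [h]; exact tau_conj_le τ hpos c x

private lemma q_right
    (hpos : ∀ x : A, 0 ≤ (τ (star x * x)).re ∧ (τ (star x * x)).im = 0)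
    (htr : ∀ x y : A, τ (x * y) = τ (y * x))
    (d x : A) :
    (τ (star (x * d) * (x * d))).re ≤ ‖d‖ ^ 2 * (τ (star x * x)).re := by
  have h1 : τ (star (x * d) * (x * d)) = τ (star (star x) * (star (star d) * star d) * star x) := by
    rw [star_mul]
    rw [htr (star d * star x) (x * d)]
    simp [mul_assoc, star_star]
  have h2 := tau_conj_le τ hpos (star d) (star x)
  rw [h1]
  calc (τ (star (star x) * (star (star d) * star d) * star x)).re
      ≤ ‖star d‖ ^ 2 * (τ (star (star x) * star x)).re := h2
    _ = ‖d‖ ^ 2 * (τ (star x * x)).re := by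
        rw [norm_star, star_star, htr x (star x)]

private lemma q_split
    (hpos : ∀ x : A, 0 ≤ (τ (star x * x)).re ∧ (τ (star x * x)).im = 0)
    {t : ℝ} (ht : 0 < t) (u v : A) :
    (τ (star (u + v) * (u + v))).re
      ≤ (1 + t) * (τ (star u * u)).re + (1 + 1/t) * (τ (star v * v)).re := by
  set r := Real.sqrt t with hrdef
  have hr : 0 < r := Real.sqrt_pos.mpr ht
  have hr2 : r * r = t := Real.mul_self_sqrt ht.le
  have hinv : r⁻¹ * r⁻¹ = 1 / t := by
    rw [← mul_inv, hr2]; exact (one_div t).symm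
  have e1 : τ (star (u + v) * (u + v))
      = τ (star u * u) + τ (star v * v) + (τ (star u * v) + τ (star v * u)) := by
    rw [star_add, add_mul, mul_add, mul_add, map_add, map_add, map_add]; ring
  have e2 : τ (star (((r : ℂ)) • u - ((r⁻¹ : ℝ) : ℂ) • v) * (((r : ℂ)) • u - ((r⁻¹ : ℝ) : ℂ) • v))
      = ((r * r : ℝ) : ℂ) * τ (star u * u) + ((r⁻¹ * r⁻¹ : ℝ) : ℂ) * τ (star v * v)
        - ((r * r⁻¹ : ℝ) : ℂ) * (τ (star u * v) + τ (star v * u)) := by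
    rw [star_sub, star_smul, star_smul]
    simp only [Complex.star_def, Complex.conj_ofReal, sub_mul, mul_sub, smul_mul_assoc,
      mul_smul_comm, smul_smul, map_sub, map_add, map_smul, smul_eq_mul]
    push_cast
    ring
  have h0 := (hpos (((r : ℂ)) • u - ((r⁻¹ : ℝ) : ℂ) • v)).1
  rw [e2, mul_inv_cancel₀ hr.ne'] at h0
  simp only [Complex.sub_re, Complex.add_re, Complex.re_ofReal_mul, Complex.ofReal_one,
    one_mul] at h0
  rw [hr2, hinv] at h0
  rw [e1]
  simp only [Complex.add_re]
  linarith
private lemma key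
    (hpos : ∀ x : A, 0 ≤ (τ (star x * x)).re ∧ (τ (star x * x)).im = 0)
    (htr : ∀ x y : A, τ (x * y) = τ (y * x)) (b : A) :
    ∀ n (a : Fin n → A),
      (τ (star ((List.ofFn a).prod * b - b * (List.ofFn a).prod)
            * ((List.ofFn a).prod * b - b * (List.ofFn a).prod))).re
        ≤ 2 * n * ∑ i, (∏ j, if j = i then (1:ℝ) else ‖a j‖ ^ 2)
            * (τ (star (a i * b - b * a i) * (a i * b - b * a i))).re := by
  intro n
  induction n with
  | zero => intro a; simp
  | succ n IH =>
    intro a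
    set x := a 0 with hx
    set ta := Fin.tail a with hta
    set p := (List.ofFn ta).prod with hp
    have hof : (List.ofFn a).prod = x * p := by
      rw [List.ofFn_succ, List.prod_cons]; rfl
    have hcomm : (List.ofFn a).prod * b - b * (List.ofFn a).prod
        = x * (p * b - b * p) + (x * b - b * x) * p := by
      rw [hof]; noncomm_ring
    have htail : ∀ i : Fin n, ta i = a i.succ := fun i => rfl
    -- coefficient identities
    have hcoef0 : (∏ j, if j = (0 : Fin (n+1)) then (1:ℝ) else ‖a j‖ ^ 2)
        = ∏ j : Fin n, ‖ta j‖ ^ 2 := by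
      rw [Fin.prod_univ_succ]
      simp [Fin.succ_ne_zero, htail]
    have hcoefs : ∀ i : Fin n, (∏ j, if j = i.succ then (1:ℝ) else ‖a j‖ ^ 2)
        = ‖x‖ ^ 2 * ∏ j : Fin n, (if j = i then (1:ℝ) else ‖ta j‖ ^ 2) := by
      intro i
      rw [Fin.prod_univ_succ]
      simp [hx, (Fin.succ_ne_zero i).symm, Fin.succ_inj, htail]
    have hQnn : ∀ z : A, 0 ≤ (τ (star z * z)).re := fun z => (hpos z).1
    -- notation
    set Qc := (τ (star (p * b - b * p) * (p * b - b * p))).re with hQc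
    set Q0 := (τ (star (x * b - b * x) * (x * b - b * x))).re with hQ0
    rcases Nat.eq_zero_or_pos n with hn0 | hn
    · -- n = 0 : single element
      subst hn0
      have hp1 : p = 1 := by simp [hp, hta]
      rw [hcomm, hp1]
      rw [show x * (1 * b - b * 1) + (x * b - b * x) * 1 = x * b - b * x by noncomm_ring]
      rw [Fin.sum_univ_succ]
      simp only [Finset.univ_eq_empty, Finset.sum_empty, add_zero]
      have : (∏ j : Fin 1, if j = (0:Fin 1) then (1:ℝ) else ‖a j‖ ^ 2) = 1 := by simp
      rw [this, one_mul]
      have := hQnn (x * b - b * x)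
      push_cast
      linarith
    · -- n ≥ 1
      have hnR : (0:ℝ) < n := by exact_mod_cast hn
      have hpnorm : ‖p‖ ^ 2 ≤ ∏ j : Fin n, ‖ta j‖ ^ 2 := by
        have hne : List.ofFn ta ≠ [] := by
          intro h
          have := congrArg List.length h
          simp at this
          omega
        have h1 : ‖p‖ ≤ ∏ j : Fin n, ‖ta j‖ := by
          have := List.norm_prod_le' hne
          rw [List.map_ofFn] at this
          rw [hp]
          refine this.trans_eq ?_
          rw [List.prod_ofFn]
          rfl
        calc ‖p‖ ^ 2 ≤ (∏ j : Fin n, ‖ta j‖) ^ 2 := by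
              have : (0:ℝ) ≤ ∏ j : Fin n, ‖ta j‖ := Finset.prod_nonneg fun j _ => norm_nonneg _
              nlinarith [norm_nonneg p]
          _ = ∏ j : Fin n, ‖ta j‖ ^ 2 := by rw [← Finset.prod_pow]
      have step1 : (τ (star ((List.ofFn a).prod * b - b * (List.ofFn a).prod)
            * ((List.ofFn a).prod * b - b * (List.ofFn a).prod))).re
          ≤ (1 + 1/(n:ℝ)) * (τ (star (x * (p*b - b*p)) * (x * (p*b - b*p)))).re
            + (1 + (n:ℝ)) * (τ (star ((x*b - b*x) * p) * ((x*b - b*x) * p))).re := by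
        rw [hcomm]
        have := q_split τ hpos (t := 1/(n:ℝ)) (by positivity)
          (x * (p*b - b*p)) ((x*b - b*x) * p)
        rw [one_div_one_div] at this
        exact this
      have step2 : (τ (star (x * (p*b - b*p)) * (x * (p*b - b*p)))).re ≤ ‖x‖^2 * Qc :=
        q_left τ hpos x _
      have step3 : (τ (star ((x*b - b*x) * p) * ((x*b - b*x) * p))).re ≤ ‖p‖^2 * Q0 :=
        q_right τ hpos htr p _
      have hIH := IH ta
      rw [← hp] at hIH
      -- assemble
      rw [Fin.sum_univ_succ, hcoef0]
      simp only [hcoefs]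
      -- target: LHS ≤ 2(n+1) * ( (∏‖ta‖²)*Q0 + Σᵢ ‖x‖²*P'ᵢ*Q'ᵢ )
      set S := ∑ i : Fin n, (∏ j : Fin n, if j = i then (1:ℝ) else ‖ta j‖ ^ 2)
          * (τ (star (ta i * b - b * ta i) * (ta i * b - b * ta i))).re with hS
      have hSnn : 0 ≤ S := by
        apply Finset.sum_nonneg
        intro i _
        apply mul_nonneg _ (hQnn _)
        apply Finset.prod_nonneg
        intro j _
        split <;> positivity
      have hsum : ∑ i : Fin n, ‖x‖ ^ 2 * (∏ j : Fin n, if j = i then (1:ℝ) else ‖ta j‖ ^ 2)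
          * (τ (star (a i.succ * b - b * a i.succ) * (a i.succ * b - b * a i.succ))).re
          = ‖x‖^2 * S := by
        rw [hS, Finset.mul_sum]
        refine Finset.sum_congr rfl fun i _ => ?_
        rw [htail i]; ring
      rw [hsum]
      have hQcS : Qc ≤ 2 * n * S := hIH
      have hxnn : (0:ℝ) ≤ ‖x‖^2 := by positivity
      have hprodnn : (0:ℝ) ≤ ∏ j : Fin n, ‖ta j‖ ^ 2 := by positivity
      have hQ0nn : 0 ≤ Q0 := hQnn _
      have hfinal1 : (1 + 1/(n:ℝ)) * (‖x‖^2 * Qc) ≤ 2 * ((n:ℝ)+1) * (‖x‖^2 * S) := by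
        have h1 : (1 + 1/(n:ℝ)) * (2 * n) = 2 * ((n:ℝ)+1) := by field_simp
        calc (1 + 1/(n:ℝ)) * (‖x‖^2 * Qc) ≤ (1 + 1/(n:ℝ)) * (‖x‖^2 * (2*n*S)) := by
              have : (0:ℝ) ≤ 1 + 1/(n:ℝ) := by positivity
              nlinarith [mul_le_mul_of_nonneg_left hQcS hxnn]
          _ = 2 * ((n:ℝ)+1) * (‖x‖^2 * S) := by
              rw [← h1]; ring
      have hfinal2 : (1 + (n:ℝ)) * (‖p‖^2 * Q0)
          ≤ 2 * ((n:ℝ)+1) * ((∏ j : Fin n, ‖ta j‖ ^ 2) * Q0) := by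
        have h2 : ‖p‖^2 * Q0 ≤ (∏ j : Fin n, ‖ta j‖ ^ 2) * Q0 :=
          mul_le_mul_of_nonneg_right hpnorm hQ0nn
        have h3 : (0:ℝ) ≤ (∏ j : Fin n, ‖ta j‖ ^ 2) * Q0 := mul_nonneg hprodnn hQ0nn
        nlinarith
      push_cast
      calc (τ (star ((List.ofFn a).prod * b - b * (List.ofFn a).prod)
            * ((List.ofFn a).prod * b - b * (List.ofFn a).prod))).re
          ≤ (1 + 1/(n:ℝ)) * (τ (star (x * (p*b - b*p)) * (x * (p*b - b*p)))).re
            + (1 + (n:ℝ)) * (τ (star ((x*b - b*x) * p) * ((x*b - b*x) * p))).re := step1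
        _ ≤ (1 + 1/(n:ℝ)) * (‖x‖^2 * Qc) + (1 + (n:ℝ)) * (‖p‖^2 * Q0) := by
            have hc1 : (0:ℝ) ≤ 1 + 1/(n:ℝ) := by positivity
            have hc2 : (0:ℝ) ≤ 1 + (n:ℝ) := by positivity
            have := mul_le_mul_of_nonneg_left step2 hc1
            have := mul_le_mul_of_nonneg_left step3 hc2
            linarith
        _ ≤ 2 * ((n:ℝ)+1) * ((∏ j : Fin n, ‖ta j‖ ^ 2) * Q0) + 2 * ((n:ℝ)+1) * (‖x‖^2 * S) := by
            linarith
        _ = 2 * ((n:ℝ)+1) * ((∏ j : Fin n, ‖ta j‖ ^ 2) * Q0 + ‖x‖^2 * S) := by ring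

end aux

/-- **Commutator estimate (product form).** Let `A` be a unital C*-algebra and `τ` a
tracial state on `A`. Then for all `N ≥ 1`, all `a₁, …, a_N ∈ A` and `b ∈ A`:
`‖[a₁⋯a_N, b]‖_τ² ≤ 2N · Σᵢ (Πⱼ≠ᵢ ‖aⱼ‖²) ‖[aᵢ, b]‖_τ²`,
where `‖x‖_τ² = τ(x*x)` (its real part) and `[x,y] = xy − yx`. -/
theorem stmt12 {A : Type*} [CStarAlgebra A]
    (τ : A →ₗ[ℂ] ℂ) (hτ1 : τ 1 = 1)
    (hpos : ∀ x : A, 0 ≤ (τ (star x * x)).re ∧ (τ (star x * x)).im = 0)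
    (htr : ∀ x y : A, τ (x * y) = τ (y * x))
    (N : ℕ) (hN : 1 ≤ N) (a : Fin N → A) (b : A) :
    (τ (star ((List.ofFn a).prod * b - b * (List.ofFn a).prod)
          * ((List.ofFn a).prod * b - b * (List.ofFn a).prod))).re
      ≤ 2 * N * ∑ i, (∏ j ∈ Finset.univ.erase i, ‖a j‖ ^ 2)
          * (τ (star (a i * b - b * a i) * (a i * b - b * a i))).re := by
  have herase : ∀ i : Fin N, (∏ j ∈ Finset.univ.erase i, ‖a j‖ ^ 2)
      = ∏ j, if j = i then (1:ℝ) else ‖a j‖ ^ 2 := by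
    intro i
    have h1 : (if i = i then (1:ℝ) else ‖a i‖ ^ 2)
        * ∏ j ∈ Finset.univ.erase i, (if j = i then (1:ℝ) else ‖a j‖ ^ 2)
        = ∏ j, if j = i then (1:ℝ) else ‖a j‖ ^ 2 :=
      Finset.mul_prod_erase Finset.univ (fun j => if j = i then (1:ℝ) else ‖a j‖ ^ 2) (Finset.mem_univ i)
    rw [if_pos rfl, one_mul] at h1
    rw [← h1]
    refine Finset.prod_congr rfl fun j hj => ?_
    exact (if_neg (Finset.ne_of_mem_erase hj)).symm
  simp only [herase]
  exact key τ hpos htr b N a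
end

section
/- Let (A, μ) be a weighted unital complex *-algebra that is archimedean with respect to the sum-of-squares cone, and let X be a finite subset of A. Suppose that for all x, y ∈ X and every ε > 0, the element ε·1 − [x, y]*·[x, y] lies in Σ²A + I(supp μ), where I(supp μ) is the two-sided ideal of A generated by supp μ and its adjoints. Then (A, μ) is stably commutative with respect to X. (The hypothesis is the algebraic form of the statement that the universal C*-algebra of A/⟨supp μ⟩ is commutative.) -/
/-- `a` is a finite sum of hermitian squares `Σᵢ xᵢ* xᵢ`. -/
def IsSOS {A : Type*} [Ring A] [StarRing A] (a : A) : Prop :=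
  ∃ L : List A, a = (L.map fun x => star x * x).sum

/-- The unital complex *-algebra `A` is archimedean with respect to the
sum-of-squares cone: for every `a` there is `R > 0` with `R·1 − a*a ∈ Σ²A`. -/
def IsArch (A : Type*) [Ring A] [Algebra ℂ A] [StarRing A] : Prop :=
  ∀ a : A, ∃ R : ℝ, 0 < R ∧ IsSOS ((R : ℂ) • (1 : A) - star a * a)

/-- A tracial state on a unital complex *-algebra: a linear functional with
`τ 1 = 1`, `τ(x*x)` real and nonnegative, and `τ(xy) = τ(yx)`. -/
structure IsTracialState {A : Type*} [Ring A] [Algebra ℂ A] [StarRing A]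
    (τ : A → ℂ) : Prop where
  map_add : ∀ x y : A, τ (x + y) = τ x + τ y
  map_smul : ∀ (c : ℂ) (x : A), τ (c • x) = c * τ x
  map_one : τ 1 = 1
  pos_re : ∀ x : A, 0 ≤ (τ (star x * x)).re
  pos_im : ∀ x : A, (τ (star x * x)).im = 0
  tracial : ∀ x y : A, τ (x * y) = τ (y * x)

/-- `(A, μ)` (with weight function `μ` supported on the finite set `s`) is stably
commutative with respect to the finite set `X`. -/
def StablyCommutative {A : Type*} [Ring A] [Algebra ℂ A] [StarRing A]
    (s : Finset A) (μ : A → ℝ) (X : Finset A) : Prop :=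
  ∀ ε : ℝ, 0 < ε → ∃ δ : ℝ, 0 < δ ∧
    ∀ τ : A → ℂ, IsTracialState τ →
      (∑ a ∈ s, μ a * (τ (star a * a)).re) < δ →
      ∀ x ∈ X, ∀ y ∈ X,
        (τ (star (x * y - y * x) * (x * y - y * x))).re < ε

/-- `z` lies in the two-sided ideal of `A` generated by the elements of `s` and
their adjoints: `z` is a finite sum of terms `a · r · b` with `r ∈ s` or `r*` ∈ `s`. -/
def InWeightIdeal {A : Type*} [Ring A] [StarRing A] (s : Finset A) (z : A) : Prop :=
  ∃ L : List (A × A × A),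
    (∀ t ∈ L, t.2.1 ∈ s ∨ ∃ r ∈ s, t.2.1 = star r) ∧
    z = (L.map fun t => t.1 * t.2.1 * t.2.2).sum

namespace Stmt14Aux
variable {A : Type*} [Ring A] [Algebra ℂ A] [StarRing A] [StarModule ℂ A]
variable {τ : A → ℂ}

theorem tau_zero (hτ : IsTracialState τ) : τ 0 = 0 := by
  have := hτ.map_smul 0 0
  simpa using this

theorem tau_neg (hτ : IsTracialState τ) (x : A) : τ (-x) = - τ x := by
  have := hτ.map_smul (-1) x
  simpa using this

theorem tau_sub (hτ : IsTracialState τ) (x y : A) : τ (x - y) = τ x - τ y := by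
  rw [sub_eq_add_neg, hτ.map_add, tau_neg hτ, sub_eq_add_neg]

theorem tau_list_sum (hτ : IsTracialState τ) : ∀ L : List A, τ L.sum = (L.map τ).sum
  | [] => by simpa using tau_zero hτ
  | a :: L => by
    simp [List.sum_cons, hτ.map_add, tau_list_sum hτ L]

theorem tau_sos (hτ : IsTracialState τ) {q : A} (hq : IsSOS q) :
    0 ≤ (τ q).re ∧ (τ q).im = 0 := by
  obtain ⟨L, rfl⟩ := hq
  induction L with
  | nil => simp [tau_zero hτ]
  | cons a L ih =>
    simp only [List.map_cons, List.sum_cons, hτ.map_add, Complex.add_re, Complex.add_im]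
    exact ⟨add_nonneg (hτ.pos_re a) ih.1, by rw [hτ.pos_im a, ih.2, add_zero]⟩

theorem expand (c : ℂ) (u v : A) :
    star (u + c • v) * (u + c • v)
      = star u * u + c • (star u * v) + (starRingEnd ℂ c) • (star v * u)
        + ((starRingEnd ℂ c) * c) • (star v * v) := by
  rw [star_add, star_smul]
  simp only [Complex.star_def, add_mul, mul_add, smul_mul_assoc, mul_smul_comm, smul_smul, smul_add, mul_comm]
  abel

theorem tau_expand (hτ : IsTracialState τ) (c : ℂ) (u v : A) :
    τ (star (u + c • v) * (u + c • v))
      = τ (star u * u) + c * τ (star u * v) + (starRingEnd ℂ c) * τ (star v * u)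
        + ((starRingEnd ℂ c) * c) * τ (star v * v) := by
  rw [expand, hτ.map_add, hτ.map_add, hτ.map_add, hτ.map_smul, hτ.map_smul, hτ.map_smul]

theorem tau_herm (hτ : IsTracialState τ) (u v : A) :
    τ (star v * u) = (starRingEnd ℂ) (τ (star u * v)) := by
  set p := τ (star u * v)
  set q := τ (star v * u)
  have h1 : p.im + q.im = 0 := by
    have h := hτ.pos_im (u + (1:ℂ) • v)
    rw [tau_expand hτ 1 u v] at h
    simp only [map_one, one_mul, Complex.add_im, hτ.pos_im u, hτ.pos_im v] at h
    linarith
  have h2 : p.re - q.re = 0 := by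
    have h := hτ.pos_im (u + Complex.I • v)
    rw [tau_expand hτ Complex.I u v] at h
    simp only [Complex.conj_I, Complex.add_im, hτ.pos_im u, hτ.pos_im v,
      Complex.mul_im, Complex.I_re, Complex.I_im, Complex.neg_re, Complex.neg_im,
      neg_mul, mul_neg] at h
    nlinarith [h]
  apply Complex.ext
  · simp only [Complex.conj_re]; linarith
  · simp only [Complex.conj_im]; linarith

theorem tau_cs (hτ : IsTracialState τ) (u v : A) :
    Complex.normSq (τ (star u * v)) ≤ (τ (star u * u)).re * (τ (star v * v)).re := by
  set α := τ (star u * v) with hα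
  set a := (τ (star u * u)).re with ha'
  set b := (τ (star v * v)).re with hb'
  have ha : 0 ≤ a := hτ.pos_re u
  have hb : 0 ≤ b := hτ.pos_re v
  set n := Complex.normSq α with hn
  have hn0 : 0 ≤ n := Complex.normSq_nonneg α
  have key : ∀ s : ℝ, 0 ≤ (n * b) * (s * s) + (-2 * n) * s + a := by
    intro s
    set t : ℂ := (-s : ℂ) * (starRingEnd ℂ) α with ht
    have h0 := hτ.pos_re (u + t • v)
    rw [tau_expand hτ t u v, tau_herm hτ u v] at h0
    have e1 : t * α = ((-s * n : ℝ) : ℂ) := by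
      rw [ht, hn, mul_assoc, ← Complex.normSq_eq_conj_mul_self]
      push_cast; ring
    have e2 : (starRingEnd ℂ) t * (starRingEnd ℂ) α = ((-s * n : ℝ) : ℂ) := by
      rw [← map_mul, e1]
      simp [Complex.conj_ofReal]
    have e3 : (starRingEnd ℂ) t * t = ((s * s * n : ℝ) : ℂ) := by
      rw [← Complex.normSq_eq_conj_mul_self, ht]
      simp [Complex.normSq_mul, Complex.normSq_conj, ← hn, Complex.normSq_neg]
    rw [e1, e2, e3] at h0
    simp only [Complex.add_re, Complex.mul_re, Complex.ofReal_re, Complex.ofReal_im,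
      zero_mul, sub_zero, hτ.pos_im v, mul_zero] at h0
    have hbim : (τ (star v * v)).im = 0 := hτ.pos_im v
    nlinarith [h0]
  have hd := discrim_le_zero key
  rw [discrim] at hd
  rcases eq_or_lt_of_le hn0 with h0 | h0
  · rw [← h0]; exact mul_nonneg ha hb
  · nlinarith [hd]

theorem tau_bound (hτ : IsTracialState τ) {R : ℝ} {w : A}
    (h : IsSOS ((R:ℂ) • (1:A) - star w * w)) : (τ (star w * w)).re ≤ R := by
  have h1 := (tau_sos hτ h).1
  rw [tau_sub hτ, hτ.map_smul, hτ.map_one, mul_one] at h1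
  simp only [Complex.sub_re, Complex.ofReal_re] at h1
  linarith

theorem term_bound (hτ : IsTracialState τ) (a r b' : A) {R δm : ℝ}
    (hR : IsSOS ((R:ℂ) • (1:A) - star (b' * a) * (b' * a))) (hR0 : 0 ≤ R)
    (hr : (τ (star r * r)).re ≤ δm) (hδm : 0 ≤ δm) :
    ‖τ (a * r * b')‖ ≤ Real.sqrt R * Real.sqrt δm := by
  have htr : τ (a * r * b') = τ ((b' * a) * r) := by
    rw [hτ.tracial (a * r) b', ← mul_assoc]
  have cs := tau_cs hτ (star (b' * a)) r
  rw [star_star] at cs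
  have h1 : (τ ((b' * a) * star (b' * a))).re ≤ R := by
    rw [hτ.tracial]; exact tau_bound hτ hR
  have h2 : Complex.normSq (τ ((b' * a) * r)) ≤ R * δm :=
    le_trans cs (mul_le_mul h1 hr (hτ.pos_re r) hR0)
  rw [htr, Complex.norm_def, ← Real.sqrt_mul hR0]
  exact Real.sqrt_le_sqrt h2

theorem list_bound (hτ : IsTracialState τ) (g : (A × A × A) → ℝ) {c : ℝ}
    (L : List (A × A × A))
    (h : ∀ t ∈ L, ‖τ (t.1 * t.2.1 * t.2.2)‖ ≤ g t * c) :
    ‖τ ((L.map fun t => t.1 * t.2.1 * t.2.2).sum)‖ ≤ (L.map g).sum * c := by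
  induction L with
  | nil => simp [tau_zero hτ]
  | cons t L ih =>
    simp only [List.map_cons, List.sum_cons, hτ.map_add, add_mul]
    refine le_trans (norm_add_le _ _) ?_
    exact add_le_add (h t (by simp)) (ih (fun t' ht' => h t' (List.mem_cons_of_mem _ ht')))

end Stmt14Aux

/-- **Lemma (quotient commutativity).** Let `(A, μ)` be a weighted unital complex
*-algebra, archimedean for the sum-of-squares cone, and `X ⊆ A` finite. If for all
`x, y ∈ X` and every `ε > 0` the element `ε·1 − [x,y]*[x,y]` lies in
`Σ²A + I(supp μ)` (where `I(supp μ)` is the two-sided ideal generated by `supp μ` and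
its adjoints), then `(A, μ)` is stably commutative with respect to `X`. -/
theorem stmt14 {A : Type*} [Ring A] [Algebra ℂ A] [StarRing A] [StarModule ℂ A]
    (harch : IsArch A)
    (s : Finset A) (μ : A → ℝ) (hμ0 : ∀ a, 0 ≤ μ a)
    (hsupp : ∀ a : A, a ∈ s ↔ μ a ≠ 0)
    (X : Finset A)
    (hcomm : ∀ x ∈ X, ∀ y ∈ X, ∀ ε : ℝ, 0 < ε →
      ∃ q z : A, IsSOS q ∧ InWeightIdeal s z ∧
        (ε : ℂ) • (1 : A) - star (x * y - y * x) * (x * y - y * x) = q + z) :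
    StablyCommutative s μ X := by
  classical
  open Stmt14Aux in
  intro ε hε
  -- the minimal weight
  set m : ℝ := if h : s.Nonempty then s.inf' h μ else 1 with hm_def
  have hm : 0 < m := by
    rw [hm_def]
    split
    · next h =>
      rw [Finset.lt_inf'_iff]
      intro b hb
      exact lt_of_le_of_ne (hμ0 b) (Ne.symm ((hsupp b).1 hb))
    · norm_num
  have hmle : ∀ r ∈ s, m ≤ μ r := by
    intro r hr
    rw [hm_def, dif_pos ⟨r, hr⟩]
    exact Finset.inf'_le μ hr
  -- smallness of the ideal generators under small defect
  have small : ∀ (τ : A → ℂ), IsTracialState τ → ∀ δ : ℝ,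
      (∑ a ∈ s, μ a * (τ (star a * a)).re) < δ →
      ∀ r : A, (r ∈ s ∨ ∃ r' ∈ s, r = star r') → (τ (star r * r)).re ≤ δ / m := by
    intro τ hτ δ hD r hr
    have base : ∀ r' ∈ s, (τ (star r' * r')).re ≤ δ / m := by
      intro r' hr'
      have h1 : μ r' * (τ (star r' * r')).re ≤ ∑ a ∈ s, μ a * (τ (star a * a)).re := by
        refine Finset.single_le_sum (fun a _ => mul_nonneg (hμ0 a) (hτ.pos_re a)) hr'
      have h2 : m * (τ (star r' * r')).re ≤ μ r' * (τ (star r' * r')).re :=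
        mul_le_mul_of_nonneg_right (hmle r' hr') (hτ.pos_re r')
      rw [le_div_iff₀ hm]
      nlinarith
    rcases hr with hr | ⟨r', hr', rfl⟩
    · exact base r hr
    · have : τ (star (star r') * star r') = τ (star r' * r') := by
        rw [star_star, hτ.tracial]
      rw [this]
      exact base r' hr'
  -- pointwise (per pair) statement
  have key : ∀ p : A × A, p ∈ X ×ˢ X → ∃ δ : ℝ, 0 < δ ∧
      ∀ τ : A → ℂ, IsTracialState τ →
        (∑ a ∈ s, μ a * (τ (star a * a)).re) < δ →
        (τ (star (p.1 * p.2 - p.2 * p.1) * (p.1 * p.2 - p.2 * p.1))).re < ε := by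
    rintro ⟨x, y⟩ hp
    rw [Finset.mem_product] at hp
    obtain ⟨q, z, hq, hz, heq⟩ := hcomm x hp.1 y hp.2 (ε / 2) (by positivity)
    obtain ⟨L, hL, rfl⟩ := hz
    set g : (A × A × A) → ℝ := fun t => Real.sqrt (harch (t.2.2 * t.1)).choose with hg
    set C : ℝ := (L.map g).sum with hC_def
    have hC : 0 ≤ C := by
      rw [hC_def]
      apply List.sum_nonneg
      intro r hr
      simp only [List.mem_map] at hr
      obtain ⟨t, _, rfl⟩ := hr
      exact Real.sqrt_nonneg _
    set e : ℝ := ε / (2 * (C + 1)) with he_def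
    have he : 0 < e := by rw [he_def]; positivity
    refine ⟨m * e ^ 2, by positivity, ?_⟩
    intro τ hτ hD
    set δ : ℝ := m * e ^ 2 with hδ_def
    have hδm : δ / m = e ^ 2 := by rw [hδ_def]; field_simp
    have hterm : ∀ t ∈ L, ‖τ (t.1 * t.2.1 * t.2.2)‖ ≤ g t * Real.sqrt (δ / m) := by
      intro t ht
      exact term_bound hτ t.1 t.2.1 t.2.2 (harch (t.2.2 * t.1)).choose_spec.2
        (le_of_lt (harch (t.2.2 * t.1)).choose_spec.1)
        (small τ hτ δ hD t.2.1 (hL t ht)) (by positivity)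
    have hzb : ‖τ ((L.map fun t => t.1 * t.2.1 * t.2.2).sum)‖ ≤ C * e := by
      have := list_bound hτ g L hterm
      rwa [hδm, Real.sqrt_sq he.le] at this
    have hz2 : ‖τ ((L.map fun t => t.1 * t.2.1 * t.2.2).sum)‖ < ε / 2 := by
      have h1 : C * e < (C + 1) * e := by nlinarith
      have h2 : (C + 1) * e = ε / 2 := by
        rw [he_def]; field_simp
      linarith
    set c := x * y - y * x
    set zz := (L.map fun t => t.1 * t.2.1 * t.2.2).sum with hzz
    have hB : star c * c = ((ε / 2 : ℝ) : ℂ) • (1 : A) - (q + zz) := by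
      rw [← heq]; abel
    have hτB : τ (star c * c) = ((ε / 2 : ℝ) : ℂ) - (τ q + τ zz) := by
      rw [hB, tau_sub hτ, hτ.map_smul, hτ.map_one, mul_one, hτ.map_add]
    have hqre := (tau_sos hτ hq).1
    have hzre : -(‖τ zz‖) ≤ (τ zz).re := by
      have := Complex.abs_re_le_norm (τ zz)
      rcases abs_le.mp (by simpa using this) with ⟨h, _⟩
      linarith
    have : (τ (star c * c)).re = ε / 2 - ((τ q).re + (τ zz).re) := by
      rw [hτB]
      simp [Complex.sub_re, Complex.add_re]
    rw [this]
    have := hz2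
    linarith
  -- combine over the finite set of pairs
  set d : A × A → ℝ := fun p => if h : p ∈ X ×ˢ X then (key p h).choose else 1 with hd
  rcases (X ×ˢ X).eq_empty_or_nonempty with hXe | hXn
  · refine ⟨1, one_pos, ?_⟩
    intro τ hτ _ x hx y hy
    exact absurd (Finset.mk_mem_product hx hy) (by simp [hXe])
  · refine ⟨(X ×ˢ X).inf' hXn d, ?_, ?_⟩
    · rw [Finset.lt_inf'_iff]
      intro p hp
      rw [hd]
      simp only [dif_pos hp]
      exact (key p hp).choose_spec.1
    · intro τ hτ hD x hx y hy
      have hp : (x, y) ∈ X ×ˢ X := Finset.mk_mem_product hx hy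
      have hdp : d (x, y) = (key (x, y) hp).choose := dif_pos hp
      have hD' : (∑ a ∈ s, μ a * (τ (star a * a)).re) < (key (x, y) hp).choose := by
        calc (∑ a ∈ s, μ a * (τ (star a * a)).re) < (X ×ˢ X).inf' hXn d := hD
          _ ≤ d (x, y) := Finset.inf'_le d hp
          _ = _ := hdp
      exact (key (x, y) hp).choose_spec.2 τ hτ hD'
end

section
/- Let (A, μ) be a weighted unital complex *-algebra that is archimedean with respect to the sum-of-squares cone, and let X be a finite subset of A. Suppose that every tracial state τ on A with def(τ) = 0 satisfies τ([x, y]*·[x, y]) = 0 for all x, y ∈ X. Then (A, μ) is stably commutative with respect to X. (This is the tracial-state form of the paper's qc-ungapping lemma: if every quantum-commuting representation of the quotient A/⟨supp μ⟩ is commutative, then A is qc-stably commutative; the proof is a compactness argument via ultralimits of tracial states.) -/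
open Filter Topology

section Aux
variable {A : Type*} [Ring A] [Algebra ℂ A] [StarRing A]

noncomputable def IsTracialState.lin {τ : A → ℂ} (h : IsTracialState τ) : A →ₗ[ℂ] ℂ where
  toFun := τ
  map_add' := h.map_add
  map_smul' := fun c x => by simpa using h.map_smul c x

lemma IsTracialState.lin_apply {τ : A → ℂ} (h : IsTracialState τ) (a : A) :
    h.lin a = τ a := rfl

lemma sos_pos {τ : A → ℂ} (hτ : IsTracialState τ) {a : A} (ha : IsSOS a) :
    0 ≤ (τ a).re ∧ (τ a).im = 0 := by
  obtain ⟨L, rfl⟩ := ha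
  induction L with
  | nil =>
      have h0 : τ 0 = 0 := by simpa using hτ.map_smul 0 0
      simp [h0]
  | cons x L ih =>
      simp only [List.map_cons, List.sum_cons]
      rw [hτ.map_add]
      constructor
      · rw [Complex.add_re]; exact add_nonneg (hτ.pos_re x) ih.1
      · rw [Complex.add_im, hτ.pos_im x, ih.2, add_zero]

lemma herm_im {τ : A → ℂ} (hτ : IsTracialState τ) {h : A} (hh : star h = h) :
    (τ h).im = 0 := by
  have key : star (1 + h) * (1 + h) - star h * h - 1 = h + h := by
    rw [star_add, star_one, hh]; noncomm_ring
  have e : τ (h + h) = τ (star (1 + h) * (1 + h)) - τ (star h * h) - τ 1 := by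
    rw [← key, ← hτ.lin_apply, ← hτ.lin_apply (star (1+h) * (1+h)),
      ← hτ.lin_apply (star h * h), ← hτ.lin_apply 1, map_sub, map_sub]
  have him : (τ (h + h)).im = 0 := by
    rw [e, Complex.sub_im, Complex.sub_im, hτ.pos_im (1 + h), hτ.pos_im h, hτ.map_one]
    norm_num
  rw [hτ.map_add] at him
  rw [Complex.add_im] at him
  linarith

lemma herm_sq [StarModule ℂ A] {τ : A → ℂ} (hτ : IsTracialState τ) {h : A} (hh : star h = h) :
    ((τ h).re) ^ 2 ≤ (τ (h * h)).re := by
  set c : ℝ := (τ h).re with hc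
  set x : A := (((-c : ℝ) : ℂ)) • 1 + h with hxdef
  have hstar : star x = x := by
    rw [hxdef, star_add, star_smul, star_one, hh, Complex.star_def, Complex.conj_ofReal]
  have hxx : x * x = ((((-c : ℝ) : ℂ)) * (((-c : ℝ) : ℂ))) • 1
      + (((-c : ℝ) : ℂ)) • (h + h) + h * h := by
    rw [hxdef]
    simp only [add_mul, mul_add, smul_mul_assoc, mul_smul_comm, smul_smul, one_mul, mul_one,
      smul_add]
    abel
  have hτx : τ (star x * x) = ((((-c:ℝ):ℂ)) * (((-c:ℝ):ℂ))) * τ 1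
      + (((-c:ℝ):ℂ)) * τ (h + h) + τ (h * h) := by
    rw [hstar, hxx, ← hτ.lin_apply, map_add, map_add, map_smul, map_smul,
      hτ.lin_apply, hτ.lin_apply, hτ.lin_apply, smul_eq_mul, smul_eq_mul]
  have hpos := hτ.pos_re x
  rw [hτx] at hpos
  have hre : (((((-c:ℝ):ℂ)) * (((-c:ℝ):ℂ))) * τ 1 + (((-c:ℝ):ℂ)) * τ (h + h)
      + τ (h * h)).re = (-c) * (-c) * 1 + (-c) * (c + c) + (τ (h * h)).re := by
    rw [Complex.add_re, Complex.add_re, ← Complex.ofReal_mul, Complex.re_ofReal_mul,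
      Complex.re_ofReal_mul, hτ.map_one, hτ.map_add, Complex.add_re]
    norm_num
    exact Or.inl rfl
  rw [hre] at hpos
  nlinarith

lemma arch_re_le {τ : A → ℂ} (hτ : IsTracialState τ) {g : A} {R : ℝ}
    (hs : IsSOS ((R : ℂ) • (1 : A) - star g * g)) : (τ (star g * g)).re ≤ R := by
  have h1 := (sos_pos hτ hs).1
  have : τ ((R : ℂ) • (1 : A) - star g * g) = (R : ℂ) * τ 1 - τ (star g * g) := by
    rw [← hτ.lin_apply, map_sub, map_smul, hτ.lin_apply, hτ.lin_apply, smul_eq_mul]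
  rw [this, hτ.map_one, mul_one, Complex.sub_re, Complex.ofReal_re] at h1
  linarith

lemma ts_bound [StarModule ℂ A] (harch : IsArch A) (a : A) :
    ∃ C : ℝ, ∀ τ : A → ℂ, IsTracialState τ → ‖τ a‖ ≤ C := by
  set h : A := (2 : ℂ)⁻¹ • (a + star a) with hhdef
  set k : A := (2 * Complex.I)⁻¹ • (a - star a) with hkdef
  have hh : star h = h := by
    rw [hhdef, star_smul, star_add, star_star, Complex.star_def]
    rw [show (starRingEnd ℂ) (2:ℂ)⁻¹ = (2:ℂ)⁻¹ by simp [Complex.ext_iff], add_comm]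
  have hI2 : (starRingEnd ℂ) (2 * Complex.I)⁻¹ = -(2 * Complex.I)⁻¹ := by
    rw [map_inv₀, map_mul, Complex.conj_I, show (starRingEnd ℂ) (2:ℂ) = 2 by simp [Complex.ext_iff],
      mul_neg, ← neg_inv]
  have hk : star k = k := by
    rw [hkdef, star_smul, star_sub, star_star, Complex.star_def, hI2, neg_smul, ← smul_neg,
      neg_sub]
  have hIc : Complex.I * (2 * Complex.I)⁻¹ = (2 : ℂ)⁻¹ := by
    rw [mul_inv, ← mul_assoc, mul_comm Complex.I, mul_assoc,
      mul_inv_cancel₀ Complex.I_ne_zero, mul_one]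
  have hdecomp : a = h + Complex.I • k := by
    rw [hhdef, hkdef, smul_smul, hIc]
    module
  obtain ⟨Rh, hRh, hsh⟩ := harch h
  obtain ⟨Rk, hRk, hsk⟩ := harch k
  refine ⟨Real.sqrt Rh + Real.sqrt Rk, fun τ hτ => ?_⟩
  have hbnd : ∀ (g : A), star g = g → ∀ R : ℝ,
      IsSOS ((R : ℂ) • (1 : A) - star g * g) → ‖τ g‖ ≤ Real.sqrt R := by
    intro g hg R hs
    have him := herm_im hτ hg
    have hsq := herm_sq hτ hg
    have hle : (τ (g * g)).re ≤ R := by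
      have := arch_re_le hτ hs
      rwa [hg] at this
    have habs : |(τ g).re| ≤ Real.sqrt R := by
      rw [← Real.sqrt_sq_eq_abs]
      exact Real.sqrt_le_sqrt (by linarith)
    have : τ g = (((τ g).re : ℝ) : ℂ) := Complex.ext rfl (by simp [him])
    rw [this, Complex.norm_real]
    simpa using habs
  have ha : τ a = τ h + Complex.I * τ k := by
    conv_lhs => rw [hdecomp]
    rw [hτ.map_add, hτ.map_smul, hτ.map_smul]
  calc ‖τ a‖ ≤ ‖τ h‖ + ‖Complex.I * τ k‖ := ha ▸ norm_add_le _ _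
    _ = ‖τ h‖ + ‖τ k‖ := by rw [norm_mul, Complex.norm_I, one_mul]
    _ ≤ Real.sqrt Rh + Real.sqrt Rk := add_le_add (hbnd h hh Rh hsh) (hbnd k hk Rk hsk)

end Aux

/-- **Lemma (qc-ungapping, tracial form).** Let `(A, μ)` be a weighted unital complex
*-algebra, archimedean for the sum-of-squares cone, and `X ⊆ A` finite. If every
tracial state `τ` with zero defect satisfies `τ([x,y]*[x,y]) = 0` for all `x, y ∈ X`,
then `(A, μ)` is stably commutative with respect to `X`. -/
theorem stmt15 {A : Type*} [Ring A] [Algebra ℂ A] [StarRing A] [StarModule ℂ A]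
    (harch : IsArch A)
    (s : Finset A) (μ : A → ℝ) (hμ0 : ∀ a, 0 ≤ μ a)
    (hsupp : ∀ a : A, a ∈ s ↔ μ a ≠ 0)
    (X : Finset A)
    (hcomm : ∀ τ : A → ℂ, IsTracialState τ →
      (∑ a ∈ s, μ a * (τ (star a * a)).re) = 0 →
      ∀ x ∈ X, ∀ y ∈ X, τ (star (x * y - y * x) * (x * y - y * x)) = 0) :
    StablyCommutative s μ X := by
  classical
  unfold StablyCommutative
  intro ε hε
  by_contra hnc
  push_neg at hnc
  choose τf hτf hdef hxy using fun n : ℕ => hnc (1 / ((n : ℝ) + 1)) (by positivity)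
  choose xf hxfX yf hyfX hbig using hxy
  set U : Ultrafilter ℕ := Ultrafilter.of atTop with hU
  have hUle : (U : Filter ℕ) ≤ atTop := Ultrafilter.of_le _
  -- pigeonhole: fix the pair (x, y)
  have hcover : (⋃ p ∈ (↑(X ×ˢ X) : Set (A × A)), {n : ℕ | xf n = p.1 ∧ yf n = p.2}) ∈ U := by
    have huniv : (⋃ p ∈ (↑(X ×ˢ X) : Set (A × A)), {n : ℕ | xf n = p.1 ∧ yf n = p.2})
        = Set.univ := by
      ext n
      simp only [Set.mem_iUnion, Set.mem_setOf_eq, Set.mem_univ, iff_true,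
        Finset.coe_product, Set.mem_prod, Finset.mem_coe]
      exact ⟨(xf n, yf n), ⟨hxfX n, hyfX n⟩, rfl, rfl⟩
    rw [huniv]
    exact Filter.univ_mem
  obtain ⟨p, hpX, hpU⟩ :=
    (Ultrafilter.finite_biUnion_mem_iff (X ×ˢ X).finite_toSet).mp hcover
  have hx : p.1 ∈ X := (Finset.mem_product.mp hpX).1
  have hy : p.2 ∈ X := (Finset.mem_product.mp hpX).2
  -- ultralimit of the tracial states
  have hlim : ∀ a : A, ∃ z : ℂ, Tendsto (fun n => τf n a) ↑U (𝓝 z) := by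
    intro a
    obtain ⟨C, hC⟩ := ts_bound harch a
    have hmem : ↑(U.map fun n => τf n a) ≤ 𝓟 (Metric.closedBall (0 : ℂ) C) := by
      rw [Ultrafilter.coe_map, Filter.le_principal_iff, Filter.mem_map]
      exact Filter.univ_mem' fun n => by
        simpa [Metric.mem_closedBall, dist_zero_right] using hC _ (hτf n)
    obtain ⟨z, _, hz⟩ := (isCompact_closedBall (0 : ℂ) C).ultrafilter_le_nhds _ hmem
    rw [Ultrafilter.coe_map] at hz
    exact ⟨z, hz⟩
  choose T hT using hlim
  have hTts : IsTracialState T := by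
    constructor
    · intro x y
      have h1 := (hT x).add (hT y)
      have heq : (fun n => τf n x + τf n y) = fun n => τf n (x + y) :=
        funext fun n => ((hτf n).map_add x y).symm
      rw [heq] at h1
      exact tendsto_nhds_unique (hT (x + y)) h1
    · intro c x
      have h1 := (hT x).const_mul c
      have heq : (fun n => c * τf n x) = fun n => τf n (c • x) :=
        funext fun n => ((hτf n).map_smul c x).symm
      rw [heq] at h1
      exact tendsto_nhds_unique (hT (c • x)) h1
    · have h1 : (fun n => τf n 1) = fun _ => (1 : ℂ) := funext fun n => (hτf n).map_one
      have h2 := hT 1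
      rw [h1] at h2
      exact tendsto_nhds_unique h2 tendsto_const_nhds
    · intro x
      have h1 := (Complex.continuous_re.tendsto _).comp (hT (star x * x))
      exact ge_of_tendsto' h1 fun n => (hτf n).pos_re x
    · intro x
      have h1 := (Complex.continuous_im.tendsto _).comp (hT (star x * x))
      have h2 : ((fun z : ℂ => z.im) ∘ fun n => τf n (star x * x)) = fun _ => (0 : ℝ) :=
        funext fun n => (hτf n).pos_im x
      rw [h2] at h1
      exact tendsto_nhds_unique h1 tendsto_const_nhds
    · intro x y
      have h1 := hT (x * y)
      have heq : (fun n => τf n (x * y)) = fun n => τf n (y * x) :=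
        funext fun n => (hτf n).tracial x y
      rw [heq] at h1
      exact tendsto_nhds_unique (hT (x * y)) (heq ▸ hT (y * x))
  -- the limit state has zero defect
  have hdef0 : (∑ a ∈ s, μ a * (T (star a * a)).re) = 0 := by
    have htd : Tendsto (fun n => ∑ a ∈ s, μ a * (τf n (star a * a)).re) ↑U
        (𝓝 (∑ a ∈ s, μ a * (T (star a * a)).re)) :=
      tendsto_finset_sum _ fun a _ =>
        ((Complex.continuous_re.tendsto _).comp (hT (star a * a))).const_mul (μ a)
    have hub : Tendsto (fun n : ℕ => 1 / ((n : ℝ) + 1)) ↑U (𝓝 0) :=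
      tendsto_one_div_add_atTop_nhds_zero_nat.mono_left hUle
    have hle : (∑ a ∈ s, μ a * (T (star a * a)).re) ≤ 0 :=
      le_of_tendsto_of_tendsto' htd hub fun n => (hdef n).le
    have hge : 0 ≤ ∑ a ∈ s, μ a * (T (star a * a)).re :=
      Finset.sum_nonneg fun a _ => mul_nonneg (hμ0 a) (hTts.pos_re a)
    linarith
  have hc := hcomm T hTts hdef0 p.1 hx p.2 hy
  have hεle : ε ≤ (T (star (p.1 * p.2 - p.2 * p.1) * (p.1 * p.2 - p.2 * p.1))).re := by
    have htd := (Complex.continuous_re.tendsto _).comp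
      (hT (star (p.1 * p.2 - p.2 * p.1) * (p.1 * p.2 - p.2 * p.1)))
    refine ge_of_tendsto htd ?_
    filter_upwards [hpU] with n hn
    obtain ⟨hn1, hn2⟩ := hn
    have hb := hbig n
    rw [hn1, hn2] at hb
    exact hb
  rw [hc] at hεle
  simp only [Complex.zero_re] at hεle
  linarith
end

section
/- Let G be a perfect group (its commutator subgroup equals G), let N be a central subgroup of G with exactly 3 elements such that the quotient G/N is a simple group, and let c ∈ G with c ≠ 1 and c² = 1. Then the normal closure of {c} in G is all of G. -/
/-- **Normal closure of an involution in a perfect central extension.** Let `G` be a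
perfect group, `N` a central subgroup with exactly 3 elements such that `G ⧸ N` is
simple, and `c ∈ G` with `c ≠ 1` and `c² = 1`. Then the normal closure of `{c}` in `G`
is all of `G`. -/
theorem stmt17 {G : Type*} [Group G]
    (hperf : commutator G = ⊤)
    (N : Subgroup G) [N.Normal] (hN : N ≤ Subgroup.center G)
    (hcard : Nat.card N = 3)
    (hsimple : IsSimpleGroup (G ⧸ N))
    (c : G) (hc : c ≠ 1) (hc2 : c ^ 2 = 1) :
    Subgroup.normalClosure {c} = ⊤ := by
  set H := Subgroup.normalClosure ({c} : Set G) with hH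
  have hHnorm : H.Normal := Subgroup.normalClosure_normal
  have hcH : c ∈ H := Subgroup.subset_normalClosure rfl
  -- c is not in N
  have hcN : c ∉ N := by
    intro hmem
    have h1 : orderOf (⟨c, hmem⟩ : N) = 2 := by
      apply orderOf_eq_prime
      · ext; simpa using hc2
      · intro h; apply hc; simpa using congrArg Subtype.val h
    have h2 : orderOf (⟨c, hmem⟩ : N) ∣ 3 := hcard ▸ orderOf_dvd_natCard _
    rw [h1] at h2
    omega
  -- the image of H in G ⧸ N is everything
  have himg : H.map (QuotientGroup.mk' N) = ⊤ := by
    have hn : (H.map (QuotientGroup.mk' N)).Normal :=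
      Subgroup.Normal.map hHnorm _ (QuotientGroup.mk'_surjective N)
    rcases hsimple.eq_bot_or_eq_top_of_normal _ hn with h | h
    · exfalso
      have hmem : (QuotientGroup.mk' N) c ∈ H.map (QuotientGroup.mk' N) :=
        ⟨c, hcH, rfl⟩
      rw [h, Subgroup.mem_bot] at hmem
      exact hcN ((QuotientGroup.eq_one_iff c).mp hmem)
    · exact h
  -- every element of G is a product of an element of H and an element of N
  have hdecomp : ∀ g : G, ∃ h ∈ H, ∃ n ∈ N, g = h * n := by
    intro g
    have : (QuotientGroup.mk' N) g ∈ H.map (QuotientGroup.mk' N) := by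
      rw [himg]; trivial
    obtain ⟨h, hh, heq⟩ := this
    refine ⟨h, hh, h⁻¹ * g, ?_, by group⟩
    have : (QuotientGroup.mk' N) (h⁻¹ * g) = 1 := by
      rw [map_mul, map_inv, heq]
      group
    exact (QuotientGroup.eq_one_iff _).mp this
  -- hence the commutator subgroup is contained in H
  have hcomm : commutator G ≤ H := by
    rw [commutator_def, Subgroup.commutator_le]
    intro a _ b _
    obtain ⟨h, hh, n, hn, rfl⟩ := hdecomp a
    obtain ⟨k, hk, m, hm, rfl⟩ := hdecomp b
    have cn := Subgroup.mem_center_iff.mp (hN hn)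
    have cm := Subgroup.mem_center_iff.mp (hN hm)
    haveI := hHnorm
    open scoped commutatorElement in
    have key : (QuotientGroup.mk' H) ⁅h * n, k * m⁆ = 1 := by
      rw [map_commutatorElement]
      have e1 : (QuotientGroup.mk' H) (h * n) = (QuotientGroup.mk' H) n := by
        have h1 : (QuotientGroup.mk' H) h = 1 := (QuotientGroup.eq_one_iff h).mpr hh
        rw [map_mul, h1, one_mul]
      have e2 : (QuotientGroup.mk' H) (k * m) = (QuotientGroup.mk' H) m := by
        have k1 : (QuotientGroup.mk' H) k = 1 := (QuotientGroup.eq_one_iff k).mpr hk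
        rw [map_mul, k1, one_mul]
      rw [e1, e2, ← map_commutatorElement]
      have hnm : ⁅n, m⁆ = 1 := commutatorElement_eq_one_iff_commute.mpr (cm n)
      rw [hnm, map_one]
    exact (QuotientGroup.eq_one_iff _).mp key
  rw [hperf] at hcomm
  exact top_le_iff.mp hcomm
end
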